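/- arXiv:1605.08603 — 7 statements merged into one kernel-verified Lean document; each statement's English description precedes it below -/
import Mathlib

section
/- Fix m ∈ ℕ, dimensions n, n₁, …, n_m with n_j ≤ n, and exponents p = (p₁, …, p_m) with each p_j ∈ [0,1]. Then the map L ↦ BL(L, p), from the set of m-tuples of surjective linear maps L_j : ℝⁿ → ℝ^{n_j} to [0,∞], is lower semicontinuous. -/
open MeasureTheory ENNReal

/-- The Brascamp–Lieb constant `BL(L, p)` associated to an `m`-tuple of linear maps
`L j : ℝⁿ → ℝ^{n_j}` and exponents `p j`: the supremum, over all measurable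
`f j : ℝ^{n_j} → [0,∞]` with positive finite Lebesgue integral, of the ratio
`(∫ ∏ (f j ∘ L j)^(p j)) / ∏ (∫ f j)^(p j)`. -/
noncomputable def brascampLieb {m n : ℕ} {ni : Fin m → ℕ}
    (L : ∀ j, (Fin n → ℝ) →L[ℝ] (Fin (ni j) → ℝ)) (p : Fin m → ℝ) : ℝ≥0∞ :=
  ⨆ (f : ∀ j, (Fin (ni j) → ℝ) → ℝ≥0∞) (_ : ∀ j, Measurable (f j))
    (_ : ∀ j, 0 < ∫⁻ y, f j y) (_ : ∀ j, ∫⁻ y, f j y < ⊤),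
    (∫⁻ x : Fin n → ℝ, ∏ j, (f j (L j x)) ^ (p j)) / ∏ j, (∫⁻ y, f j y) ^ (p j)

open Filter Topology NNReal

namespace BLaux

/-- product of liminfs is at most liminf of products, in `ℝ≥0∞`. -/
lemma prod_liminf_le {ι κ : Type*} {F : Filter ι} [F.NeBot] (s : Finset κ)
    (a : κ → ι → ℝ≥0∞) :
    ∏ j ∈ s, Filter.liminf (a j) F ≤ Filter.liminf (fun k => ∏ j ∈ s, a j k) F := by
  classical
  induction s using Finset.induction_on with
  | empty => simpa using le_of_eq (Filter.liminf_const (1 : ℝ≥0∞)).symm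
  | @insert j s hj ih =>
    rw [Finset.prod_insert hj]
    have h1 : Filter.liminf (a j) F * ∏ i ∈ s, Filter.liminf (a i) F ≤
        Filter.liminf (a j) F * Filter.liminf (fun k => ∏ i ∈ s, a i k) F :=
      mul_le_mul_right ih _
    refine h1.trans ?_
    have h2 := ENNReal.le_liminf_mul (f := F) (u := a j) (v := fun k => ∏ i ∈ s, a i k)
    refine h2.trans (le_of_eq ?_)
    have : (a j * fun k => ∏ i ∈ s, a i k) = fun k => ∏ i ∈ insert j s, a i k := by
      funext k; simp [Finset.prod_insert hj]
    rw [this]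

lemma mono_rpow {p : ℝ} (hp : 0 ≤ p) : Monotone (fun x : ℝ≥0∞ => x ^ p) :=
  fun _ _ h => ENNReal.rpow_le_rpow h hp

variable {m n : ℕ} {ni : Fin m → ℕ}

/-- Pointwise (in `x`) lower semicontinuity of the integrand, as a function of `L`. -/
lemma lsc_prod_pointwise (p : Fin m → ℝ) (hp : ∀ j, 0 ≤ p j)
    {g : ∀ j, (Fin (ni j) → ℝ) → ℝ≥0∞} (hg : ∀ j, LowerSemicontinuous (g j))
    (x : Fin n → ℝ) :
    LowerSemicontinuous fun L : ∀ j, (Fin n → ℝ) →L[ℝ] (Fin (ni j) → ℝ) =>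
      ∏ j, (g j (L j x)) ^ (p j) := by
  rw [lowerSemicontinuous_iff_le_liminf]
  intro L₀
  have hfac : ∀ j, (g j (L₀ j x)) ^ (p j) ≤
      Filter.liminf (fun L : ∀ j, (Fin n → ℝ) →L[ℝ] (Fin (ni j) → ℝ) =>
        (g j (L j x)) ^ (p j)) (𝓝 L₀) := by
    intro j
    have hc : Continuous fun L : ∀ j, (Fin n → ℝ) →L[ℝ] (Fin (ni j) → ℝ) => (L j) x :=
      (continuous_apply j).clm_apply continuous_const
    have h1 : LowerSemicontinuous fun L : ∀ j, (Fin n → ℝ) →L[ℝ] (Fin (ni j) → ℝ) =>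
        g j (L j x) := fun L y hy => hc.continuousAt.eventually (hg j (L j x) y hy)
    have h2 : LowerSemicontinuous fun L : ∀ j, (Fin n → ℝ) →L[ℝ] (Fin (ni j) → ℝ) =>
        (g j (L j x)) ^ (p j) :=
      ENNReal.continuous_rpow_const.comp_lowerSemicontinuous h1 (mono_rpow (hp j))
    exact LowerSemicontinuousAt.le_liminf (h2 L₀)
  calc ∏ j, (g j (L₀ j x)) ^ (p j)
      ≤ ∏ j, Filter.liminf (fun L : ∀ j, (Fin n → ℝ) →L[ℝ] (Fin (ni j) → ℝ) =>
          (g j (L j x)) ^ (p j)) (𝓝 L₀) := Finset.prod_le_prod' fun j _ => hfac j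
    _ ≤ _ := prod_liminf_le _ _

set_option synthInstance.maxHeartbeats 1000000 in
/-- Lower semicontinuity in `L` of the numerator, for lower semicontinuous inputs. -/
lemma lsc_num (p : Fin m → ℝ) (hp : ∀ j, 0 ≤ p j)
    {g : ∀ j, (Fin (ni j) → ℝ) → ℝ≥0∞} (hg : ∀ j, LowerSemicontinuous (g j)) :
    LowerSemicontinuous fun L : ∀ j, (Fin n → ℝ) →L[ℝ] (Fin (ni j) → ℝ) =>
      ∫⁻ x : Fin n → ℝ, ∏ j, (g j (L j x)) ^ (p j) := by
  set F : (∀ j, (Fin n → ℝ) →L[ℝ] (Fin (ni j) → ℝ)) → ℝ≥0∞ :=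
    fun L => ∫⁻ x : Fin n → ℝ, ∏ j, (g j (L j x)) ^ (p j) with hF
  rw [lowerSemicontinuous_iff_le_liminf]
  intro L₀
  by_contra hlt
  push_neg at hlt
  obtain ⟨c, hc1, hc2⟩ := exists_between hlt
  have hfreq : ∃ᶠ L in 𝓝 L₀, F L < c := frequently_lt_of_liminf_lt (by isBoundedDefault) hc1
  obtain ⟨u, hu, hufa⟩ := frequently_iff_seq_forall.mp hfreq
  have hmeas : ∀ k, Measurable fun x : Fin n → ℝ => ∏ j, (g j (u k j x)) ^ (p j) := by
    intro k
    refine Finset.measurable_prod _ fun j _ => ?_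
    exact (ENNReal.continuous_rpow_const.measurable).comp
      (((hg j).measurable).comp (u k j).continuous.measurable)
  have key : F L₀ ≤ Filter.liminf (fun k => F (u k)) atTop := by
    calc F L₀ ≤ ∫⁻ x : Fin n → ℝ,
          Filter.liminf (fun k => ∏ j, (g j (u k j x)) ^ (p j)) atTop := by
          refine lintegral_mono fun x => ?_
          have h1 := LowerSemicontinuousAt.le_liminf ((lsc_prod_pointwise p hp hg x) L₀)
          refine h1.trans ?_
          calc Filter.liminf (fun L : ∀ j, (Fin n → ℝ) →L[ℝ] (Fin (ni j) → ℝ) =>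
                ∏ j, (g j (L j x)) ^ (p j)) (𝓝 L₀)
              ≤ Filter.liminf (fun L : ∀ j, (Fin n → ℝ) →L[ℝ] (Fin (ni j) → ℝ) =>
                ∏ j, (g j (L j x)) ^ (p j)) (Filter.map u atTop) :=
              Filter.liminf_le_liminf_of_le hu
            _ = Filter.liminf (fun k => ∏ j, (g j (u k j x)) ^ (p j)) atTop :=
              (Filter.liminf_comp _ _ _).symm
      _ ≤ Filter.liminf (fun k => F (u k)) atTop := lintegral_liminf_le hmeas
  have hle : Filter.liminf (fun k => F (u k)) atTop ≤ c :=
    Filter.liminf_le_of_frequently_le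
      (Filter.Frequently.of_forall fun k => (hufa k).le)
  exact absurd hc2 (not_lt.mpr (key.trans hle))

/-- The Brascamp–Lieb-type supremum restricted to lower semicontinuous inputs. -/
noncomputable def blLSC (L : ∀ j, (Fin n → ℝ) →L[ℝ] (Fin (ni j) → ℝ)) (p : Fin m → ℝ) :
    ℝ≥0∞ :=
  ⨆ (f : ∀ j, (Fin (ni j) → ℝ) → ℝ≥0∞) (_ : ∀ j, LowerSemicontinuous (f j))
    (_ : ∀ j, 0 < ∫⁻ y, f j y) (_ : ∀ j, ∫⁻ y, f j y < ⊤),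
    (∫⁻ x : Fin n → ℝ, ∏ j, (f j (L j x)) ^ (p j)) / ∏ j, (∫⁻ y, f j y) ^ (p j)

lemma lsc_blLSC (p : Fin m → ℝ) (hp : ∀ j, 0 ≤ p j) :
    LowerSemicontinuous fun L : ∀ j, (Fin n → ℝ) →L[ℝ] (Fin (ni j) → ℝ) => blLSC L p := by
  apply lowerSemicontinuous_iSup; intro f
  apply lowerSemicontinuous_iSup; intro hlsc
  apply lowerSemicontinuous_iSup; intro hpos
  apply lowerSemicontinuous_iSup; intro hfin
  have hD0 : (∏ j, (∫⁻ y, f j y) ^ (p j)) ≠ 0 := by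
    rw [Finset.prod_ne_zero_iff]
    exact fun j _ => (ENNReal.rpow_pos (hpos j) (hfin j).ne).ne'
  have hDt : (∏ j, (∫⁻ y, f j y) ^ (p j)) ≠ ⊤ :=
    (ENNReal.prod_lt_top fun j _ => ENNReal.rpow_lt_top_of_nonneg (hp j) (hfin j).ne).ne
  have hcont : Continuous fun z : ℝ≥0∞ => z / (∏ j, (∫⁻ y, f j y) ^ (p j)) := by
    simp only [div_eq_mul_inv]
    exact ENNReal.continuous_mul_const (ENNReal.inv_ne_top.2 hD0)
  have hmono : Monotone fun z : ℝ≥0∞ => z / (∏ j, (∫⁻ y, f j y) ^ (p j)) :=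
    fun _ _ h => ENNReal.div_le_div h le_rfl
  exact hcont.comp_lowerSemicontinuous (lsc_num p hp hlsc) hmono

lemma blLSC_le (L : ∀ j, (Fin n → ℝ) →L[ℝ] (Fin (ni j) → ℝ)) (p : Fin m → ℝ) :
    blLSC L p ≤ brascampLieb L p := by
  refine iSup_le fun f => iSup_le fun hlsc => iSup_le fun hpos => iSup_le fun hfin => ?_
  have hm : ∀ j, Measurable (f j) := fun j => (hlsc j).measurable
  exact le_iSup_of_le f (le_iSup_of_le hm (le_iSup_of_le hpos (le_iSup_of_le hfin le_rfl)))

lemma iSup_min_succ (a : ℝ≥0∞) : ⨆ K : ℕ, min a ((K : ℝ≥0∞) + 1) = a := by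
  refine le_antisymm (iSup_le fun K => min_le_left _ _) ?_
  rcases eq_or_ne a ⊤ with rfl | ha
  · have h1 : (⨆ K : ℕ, min (⊤ : ℝ≥0∞) ((K : ℝ≥0∞) + 1)) = ⨆ K : ℕ, ((K : ℝ≥0∞) + 1) := by
      simp
    rw [h1]
    refine le_trans (le_of_eq ENNReal.iSup_natCast.symm) (iSup_mono fun K => le_self_add)
  · obtain ⟨K, hK⟩ := ENNReal.exists_nat_gt ha
    refine le_iSup_of_le K (le_of_eq ?_)
    rw [min_eq_left (hK.le.trans le_self_add)]

/-- sup of products of monotone families is at least the product of sups. -/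
lemma prod_iSup_le {κ : Type*} (s : Finset κ) (u : κ → ℕ → ℝ≥0∞)
    (hu : ∀ j, Monotone (u j)) :
    ∏ j ∈ s, (⨆ K, u j K) ≤ ⨆ K, ∏ j ∈ s, u j K := by
  classical
  induction s using Finset.induction_on with
  | empty => simpa using le_iSup (fun _ : ℕ => (1 : ℝ≥0∞)) 0
  | @insert j s hj ih =>
    rw [Finset.prod_insert hj]
    calc (⨆ K, u j K) * ∏ i ∈ s, ⨆ K, u i K
        ≤ (⨆ K, u j K) * ⨆ K, ∏ i ∈ s, u i K := mul_le_mul_right ih _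
      _ = ⨆ K, ⨆ K', u j K * ∏ i ∈ s, u i K' := by
          rw [ENNReal.iSup_mul]; exact iSup_congr fun K => ENNReal.mul_iSup _ _
      _ ≤ ⨆ K, ∏ i ∈ insert j s, u i K := by
          refine iSup_le fun K => iSup_le fun K' => le_iSup_of_le (max K K') ?_
          rw [Finset.prod_insert hj]
          exact mul_le_mul' (hu j (le_max_left _ _))
            (Finset.prod_le_prod' fun i _ => hu i (le_max_right _ _))

lemma le_blLSC (L : ∀ j, (Fin n → ℝ) →L[ℝ] (Fin (ni j) → ℝ)) (p : Fin m → ℝ)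
    (hp0 : ∀ j, 0 ≤ p j) :
    brascampLieb L p ≤ blLSC L p := by
  refine iSup_le fun f => iSup_le fun hmeas => iSup_le fun hpos => iSup_le fun hfin => ?_
  set D := ∏ j, (∫⁻ y, f j y) ^ (p j) with hD
  have hD0 : D ≠ 0 := by
    rw [hD, Finset.prod_ne_zero_iff]
    exact fun j _ => (ENNReal.rpow_pos (hpos j) (hfin j).ne).ne'
  have hDt : D ≠ ⊤ :=
    (ENNReal.prod_lt_top fun j _ => ENNReal.rpow_lt_top_of_nonneg (hp0 j) (hfin j).ne).ne
  set fK : ℕ → ∀ j, (Fin (ni j) → ℝ) → ℝ≥0∞ :=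
    fun K j y => min (f j y) ((K : ℝ≥0∞) + 1) with hfK
  have hfKmeas : ∀ K j, Measurable (fK K j) := fun K j => (hmeas j).min measurable_const
  have hfKle : ∀ K j y, fK K j y ≤ f j y := fun K j y => min_le_left _ _
  have hfKmono : ∀ j y, Monotone fun K => fK K j y := fun j y K K' h =>
    min_le_min le_rfl (add_le_add (Nat.cast_le.2 h) le_rfl)
  have hfKlt : ∀ K j y, fK K j y < ⊤ := fun K j y =>
    (min_le_right _ _).trans_lt (by simp [lt_top_iff_ne_top])
  have hfKpos : ∀ K j, 0 < ∫⁻ y, fK K j y := by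
    intro K j
    rw [pos_iff_ne_zero]
    intro h0
    have hz := (lintegral_eq_zero_iff (hfKmeas K j)).mp h0
    have hz' : f j =ᵐ[volume] 0 := by
      refine hz.mono fun y hy => ?_
      simp only [Pi.zero_apply] at hy ⊢
      rcases min_eq_iff.mp hy with h | h
      · exact h.1
      · exact absurd h.1 (by simp)
    have : (∫⁻ y, f j y) = 0 := by
      rw [lintegral_congr_ae hz']; simp
    exact (hpos j).ne' this
  -- monotone convergence for the numerator
  have hnum : (∫⁻ x : Fin n → ℝ, ∏ j, (f j (L j x)) ^ (p j)) ≤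
      ⨆ K, ∫⁻ x : Fin n → ℝ, ∏ j, (fK K j (L j x)) ^ (p j) := by
    have pw : ∀ x : Fin n → ℝ, ∏ j, (f j (L j x)) ^ (p j) ≤
        ⨆ K, ∏ j, (fK K j (L j x)) ^ (p j) := by
      intro x
      have h1 : ∀ j, (f j (L j x)) ^ (p j) = ⨆ K, (fK K j (L j x)) ^ (p j) := by
        intro j
        have hsup : (⨆ K : ℕ, fK K j (L j x)) = f j (L j x) := iSup_min_succ _
        rw [← hsup]
        exact Monotone.map_ciSup_of_continuousAt
          (ENNReal.continuous_rpow_const.continuousAt) (mono_rpow (hp0 j))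
      calc ∏ j, (f j (L j x)) ^ (p j)
          = ∏ j, ⨆ K, (fK K j (L j x)) ^ (p j) := Finset.prod_congr rfl fun j _ => h1 j
        _ ≤ ⨆ K, ∏ j, (fK K j (L j x)) ^ (p j) :=
          prod_iSup_le _ _ fun j K K' h =>
            ENNReal.rpow_le_rpow (hfKmono j (L j x) h) (hp0 j)
    have hmeasK : ∀ K, Measurable fun x : Fin n → ℝ => ∏ j, (fK K j (L j x)) ^ (p j) := by
      intro K
      refine Finset.measurable_prod _ fun j _ => ?_
      exact (ENNReal.continuous_rpow_const.measurable).comp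
        ((hfKmeas K j).comp (L j).continuous.measurable)
    have hmonoK : Monotone fun K => fun x : Fin n → ℝ => ∏ j, (fK K j (L j x)) ^ (p j) := by
      intro K K' h x
      exact Finset.prod_le_prod' fun j _ =>
        ENNReal.rpow_le_rpow (hfKmono j (L j x) h) (hp0 j)
    calc (∫⁻ x : Fin n → ℝ, ∏ j, (f j (L j x)) ^ (p j))
        ≤ ∫⁻ x : Fin n → ℝ, ⨆ K, ∏ j, (fK K j (L j x)) ^ (p j) := lintegral_mono pw
      _ = ⨆ K, ∫⁻ x : Fin n → ℝ, ∏ j, (fK K j (L j x)) ^ (p j) :=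
        lintegral_iSup hmeasK hmonoK
  -- reduce to showing every c below the ratio is ≤ blLSC
  refine le_of_forall_lt fun c₀ hc₀ => ?_
  obtain ⟨c, hc₀c, hc⟩ := exists_between hc₀
  refine hc₀c.trans_le ?_
  have h1 : c < ⨆ K, (∫⁻ x : Fin n → ℝ, ∏ j, (fK K j (L j x)) ^ (p j)) / D := by
    refine hc.trans_le ?_
    calc (∫⁻ x : Fin n → ℝ, ∏ j, (f j (L j x)) ^ (p j)) / D
        ≤ (⨆ K, ∫⁻ x : Fin n → ℝ, ∏ j, (fK K j (L j x)) ^ (p j)) / D :=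
        ENNReal.div_le_div hnum le_rfl
      _ = ⨆ K, (∫⁻ x : Fin n → ℝ, ∏ j, (fK K j (L j x)) ^ (p j)) / D := by
        simp only [div_eq_mul_inv, ENNReal.iSup_mul]
  obtain ⟨K, hK⟩ := lt_iSup_iff.mp h1
  set NK := ∫⁻ x : Fin n → ℝ, ∏ j, (fK K j (L j x)) ^ (p j) with hNK
  have hcne : c ≠ ⊤ := hK.ne_top
  have hcD : c * D < NK := (ENNReal.lt_div_iff_mul_lt (Or.inl hD0) (Or.inl hDt)).mp hK
  -- the perturbed denominator
  set a : Fin m → ℝ≥0 := fun j => (∫⁻ y, f j y).toNNReal with ha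
  have hacoe : ∀ j, ((a j : ℝ≥0∞)) = ∫⁻ y, f j y := fun j => ENNReal.coe_toNNReal (hfin j).ne
  set φ : ℝ≥0 → ℝ≥0 := fun ε => ∏ j, (a j + ε) ^ (p j) with hφ
  have hφcoe : ∀ ε, ((φ ε : ℝ≥0∞)) = ∏ j, ((a j : ℝ≥0∞) + (ε : ℝ≥0∞)) ^ (p j) := by
    intro ε
    rw [hφ]
    push_cast
    exact Finset.prod_congr rfl fun j _ => by
      rw [ENNReal.coe_rpow_of_nonneg _ (hp0 j), ENNReal.coe_add]
  have hφcont : Continuous φ := by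
    refine continuous_finset_prod _ fun j _ => ?_
    exact (NNReal.continuous_rpow_const (hp0 j)).comp (continuous_const.add continuous_id)
  have hφ0 : ((φ 0 : ℝ≥0∞)) = D := by
    rw [hφcoe]
    simp only [ENNReal.coe_zero, add_zero, hD]
    exact Finset.prod_congr rfl fun j _ => by rw [hacoe]
  -- find a good ε
  obtain ⟨ε, hε0, hεlt⟩ : ∃ ε : ℝ≥0, 0 < ε ∧ c * (φ ε : ℝ≥0∞) < NK := by
    rcases eq_or_ne NK ⊤ with htop | hfinN
    · exact ⟨1, one_pos, by rw [htop]; exact ENNReal.mul_lt_top hcne.lt_top coe_lt_top⟩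
    · have hc' : c * (φ 0 : ℝ≥0∞) < NK := by rwa [hφ0]
      have hcont2 : ContinuousAt (fun ε : ℝ≥0 => c * (φ ε : ℝ≥0∞)) 0 :=
        ((ENNReal.continuous_const_mul hcne).comp
          (ENNReal.continuous_coe.comp hφcont)).continuousAt
      have hev : ∀ᶠ ε in 𝓝 (0 : ℝ≥0), c * (φ ε : ℝ≥0∞) < NK :=
        hcont2.eventually_lt_const hc'
      have hev' : ∀ᶠ ε in 𝓝[>] (0 : ℝ≥0), c * (φ ε : ℝ≥0∞) < NK :=
        hev.filter_mono nhdsWithin_le_nhds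
      obtain ⟨ε, hlt, hmem⟩ := (hev'.and self_mem_nhdsWithin).exists
      exact ⟨ε, hmem, hlt⟩
  -- Vitali–Carathéodory
  set F : ∀ j, (Fin (ni j) → ℝ) → ℝ≥0 := fun j y => (fK K j y).toNNReal with hFdef
  have hFmeas : ∀ j, Measurable (F j) := fun j => (hfKmeas K j).ennreal_toNNReal
  have hFcoe : ∀ j y, ((F j y : ℝ≥0∞)) = fK K j y := fun j y =>
    ENNReal.coe_toNNReal (hfKlt K j y).ne
  have hVC := fun j => exists_lt_lowerSemicontinuous_lintegral_ge
    (volume : Measure (Fin (ni j) → ℝ)) (F j) (hFmeas j)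
    (ε := (ε : ℝ≥0∞)) (by exact_mod_cast hε0.ne')
  choose g hglt hglsc hgint using hVC
  have hgK : ∀ j y, fK K j y ≤ g j y := fun j y => by
    rw [← hFcoe j y]; exact (hglt j y).le
  have hintF : ∀ j, (∫⁻ y, (F j y : ℝ≥0∞)) = ∫⁻ y, fK K j y := fun j =>
    lintegral_congr fun y => hFcoe j y
  have hgpos : ∀ j, 0 < ∫⁻ y, g j y := fun j =>
    (hfKpos K j).trans_le (lintegral_mono (hgK j))
  have hgle : ∀ j, (∫⁻ y, g j y) ≤ (∫⁻ y, f j y) + ε := fun j =>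
    (hgint j).trans (by
      rw [hintF]
      exact add_le_add_left (lintegral_mono (hfKle K j)) _)
  have hgfin : ∀ j, (∫⁻ y, g j y) < ⊤ := fun j =>
    (hgle j).trans_lt (ENNReal.add_lt_top.mpr ⟨hfin j, coe_lt_top⟩)
  have hnum_le : NK ≤ ∫⁻ x : Fin n → ℝ, ∏ j, (g j (L j x)) ^ (p j) := by
    refine lintegral_mono fun x => Finset.prod_le_prod' fun j _ => ?_
    exact ENNReal.rpow_le_rpow (hgK j _) (hp0 j)
  have hden_le : (∏ j, (∫⁻ y, g j y) ^ (p j)) ≤ (φ ε : ℝ≥0∞) := by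
    rw [hφcoe]
    refine Finset.prod_le_prod' fun j _ => ?_
    refine ENNReal.rpow_le_rpow ?_ (hp0 j)
    rw [hacoe]
    exact hgle j
  have hφne : (φ ε : ℝ≥0∞) ≠ 0 := by
    rw [ENNReal.coe_ne_zero, hφ, Finset.prod_ne_zero_iff]
    intro j _
    exact (NNReal.rpow_pos (lt_of_lt_of_le hε0 (le_add_self))).ne'
  have hfinal : c ≤ (∫⁻ x : Fin n → ℝ, ∏ j, (g j (L j x)) ^ (p j)) /
      ∏ j, (∫⁻ y, g j y) ^ (p j) := by
    calc c ≤ NK / (φ ε : ℝ≥0∞) :=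
        (ENNReal.le_div_iff_mul_le (Or.inl hφne) (Or.inl coe_ne_top)).mpr hεlt.le
      _ ≤ _ := ENNReal.div_le_div hnum_le hden_le
  refine hfinal.trans ?_
  exact le_iSup_of_le g (le_iSup_of_le hglsc (le_iSup_of_le hgpos (le_iSup_of_le hgfin le_rfl)))

end BLaux

/-- **Lower semicontinuity of the Brascamp–Lieb constant.** For fixed exponents `p` with
`p j ∈ Set.Icc 0 1` and dimensions `n_j ≤ n`, the map `L ↦ BL(L, p)` is lower semicontinuous
on the set of tuples of surjective linear maps. -/
theorem brascampLieb_lowerSemicontinuousOn {m n : ℕ} {ni : Fin m → ℕ}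
    (hni : ∀ j, ni j ≤ n) (p : Fin m → ℝ) (hp : ∀ j, p j ∈ Set.Icc (0:ℝ) 1) :
    LowerSemicontinuousOn
      (fun L : ∀ j, (Fin n → ℝ) →L[ℝ] (Fin (ni j) → ℝ) => brascampLieb L p)
      {L | ∀ j, Function.Surjective (L j)} := by
  have hp0 : ∀ j, 0 ≤ p j := fun j => (hp j).1
  have heq : (fun L : ∀ j, (Fin n → ℝ) →L[ℝ] (Fin (ni j) → ℝ) => brascampLieb L p) =
      fun L => BLaux.blLSC L p := by
    funext L
    exact le_antisymm (BLaux.le_blLSC L p hp0) (BLaux.blLSC_le L p)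
  rw [heq]
  exact (BLaux.lsc_blLSC p hp0).lowerSemicontinuousOn _
end

section
/- Fix K, n ∈ ℕ with n ≤ K and weights q₁, …, q_K ∈ [0,1]. Let 𝓘 denote the collection of subsets I ⊆ {1, …, K} with |I| = n, and for I ∈ 𝓘 set q_I = ∏_{k∈I} q_k and λ_I = ∏_{k∈I} λ_k. Define F : [0,∞)^𝓘 → [0,∞] by F(d) = sup_{λ ∈ (0,∞)^K} (∏_{k=1}^K λ_k^{q_k}) / (∑_{I∈𝓘} d_I q_I λ_I), with the convention that a positive quantity divided by 0 is ∞. Then F is continuous, where [0,∞] carries the order topology. -/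
open ENNReal NNReal

/-- The function `F(d) = sup_{λ ∈ (0,∞)^K} (∏ₖ λₖ^{qₖ}) / (∑_{I} d_I q_I λ_I)`, the
supremum being over positive `K`-tuples `λ`, where `I` ranges over the `n`-element
subsets of `{1, …, K}`, `q_I = ∏_{k∈I} q k` and `λ_I = ∏_{k∈I} λ k`.  Values lie in
`[0,∞]`, with the convention that a positive quantity divided by `0` is `∞`. -/
noncomputable def bartheF (K n : ℕ) (q : Fin K → ℝ)
    (d : {I : Finset (Fin K) // I.card = n} → ℝ≥0) : ℝ≥0∞ :=
  ⨆ (lam : Fin K → ℝ) (_ : ∀ k, 0 < lam k),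
    ENNReal.ofReal (∏ k, lam k ^ q k) /
      ∑ I : {I : Finset (Fin K) // I.card = n},
        (d I : ℝ≥0∞) * ENNReal.ofReal ((∏ k ∈ I.1, q k) * ∏ k ∈ I.1, lam k)

variable {K n : ℕ} {q : Fin K → ℝ}

lemma bartheF_antitone : Antitone (bartheF K n q) := by
  intro d e h
  refine iSup_mono fun lam => iSup_mono fun _ => ?_
  refine ENNReal.div_le_div_left ?_ _
  exact Finset.sum_le_sum fun I _ => mul_le_mul_left (by exact_mod_cast h I) _

lemma bartheF_smul_le (c : ℝ≥0) (hc : c ≠ 0) (d : {I : Finset (Fin K) // I.card = n} → ℝ≥0) :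
    bartheF K n q (fun I => c * d I) ≤ (c : ℝ≥0∞)⁻¹ * bartheF K n q d := by
  rw [bartheF]
  refine iSup₂_le fun lam hlam => ?_
  have key : ∑ I : {I : Finset (Fin K) // I.card = n},
      ((c * d I : ℝ≥0) : ℝ≥0∞) * ENNReal.ofReal ((∏ k ∈ I.1, q k) * ∏ k ∈ I.1, lam k)
      = (c : ℝ≥0∞) * ∑ I : {I : Finset (Fin K) // I.card = n},
        (d I : ℝ≥0∞) * ENNReal.ofReal ((∏ k ∈ I.1, q k) * ∏ k ∈ I.1, lam k) := by
    rw [Finset.mul_sum]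
    refine Finset.sum_congr rfl fun I _ => ?_
    push_cast
    ring
  rw [key]
  have h1 : ENNReal.ofReal (∏ k, lam k ^ q k) /
      ((c : ℝ≥0∞) * ∑ I : {I : Finset (Fin K) // I.card = n},
        (d I : ℝ≥0∞) * ENNReal.ofReal ((∏ k ∈ I.1, q k) * ∏ k ∈ I.1, lam k))
      = (c : ℝ≥0∞)⁻¹ * (ENNReal.ofReal (∏ k, lam k ^ q k) /
        ∑ I : {I : Finset (Fin K) // I.card = n},
          (d I : ℝ≥0∞) * ENNReal.ofReal ((∏ k ∈ I.1, q k) * ∏ k ∈ I.1, lam k)) := by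
    rw [div_eq_mul_inv, div_eq_mul_inv, ENNReal.mul_inv (Or.inl (by exact_mod_cast hc))
      (Or.inl coe_ne_top)]
    ring
  rw [h1]
  refine mul_le_mul_right ?_ _
  exact le_iSup₂ (f := fun lam (_ : ∀ k, 0 < lam k) => ENNReal.ofReal (∏ k, lam k ^ q k) /
    ∑ I : {I : Finset (Fin K) // I.card = n},
      (d I : ℝ≥0∞) * ENNReal.ofReal ((∏ k ∈ I.1, q k) * ∏ k ∈ I.1, lam k)) lam hlam

lemma bartheF_lsc : LowerSemicontinuous (bartheF K n q) := by
  refine lowerSemicontinuous_iSup fun lam => lowerSemicontinuous_iSup fun _ => ?_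
  refine Continuous.lowerSemicontinuous ?_
  have hsum : Continuous fun d : {I : Finset (Fin K) // I.card = n} → ℝ≥0 =>
      ∑ I : {I : Finset (Fin K) // I.card = n},
        (d I : ℝ≥0∞) * ENNReal.ofReal ((∏ k ∈ I.1, q k) * ∏ k ∈ I.1, lam k) := by
    refine continuous_finset_sum _ fun I _ => ?_
    exact (ENNReal.continuous_mul_const ofReal_ne_top).comp
      (ENNReal.continuous_coe.comp (continuous_apply I))
  have : Continuous fun x : ℝ≥0∞ => ENNReal.ofReal (∏ k, lam k ^ q k) / x := by
    simp only [div_eq_mul_inv]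
    exact (ENNReal.continuous_const_mul ofReal_ne_top).comp continuous_inv
  exact this.comp hsum

/-- **Continuity of the Barthe supremum functional.** For `n ≤ K` and weights
`q k ∈ [0,1]`, the function `F : [0,∞)^𝓘 → [0,∞]` is continuous. -/
theorem bartheF_continuous (K n : ℕ) (hn : n ≤ K)
    (q : Fin K → ℝ) (hq : ∀ k, q k ∈ Set.Icc (0:ℝ) 1) :
    Continuous (bartheF K n q) := by
  rw [continuous_iff_lower_upperSemicontinuous]
  refine ⟨bartheF_lsc, ?_⟩
  intro d y hy
  have hne : bartheF K n q d ≠ ⊤ := hy.ne_top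
  -- find c ∈ (0,1) with c⁻¹ * F d < y
  obtain ⟨c, hc0, hc1, hcy⟩ : ∃ c : ℝ≥0, 0 < c ∧ c < 1 ∧
      (c : ℝ≥0∞)⁻¹ * bartheF K n q d < y := by
    rcases eq_or_ne (bartheF K n q d) 0 with h0 | h0
    · refine ⟨1/2, by norm_num, ?_, by simp [h0]; exact pos_of_gt hy⟩
      rw [← NNReal.coe_lt_coe]; norm_num
    rcases eq_or_ne y ⊤ with hytop | hytop
    · refine ⟨1/2, by norm_num, by rw [← NNReal.coe_lt_coe]; norm_num, ?_⟩
      rw [hytop]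
      exact lt_top_iff_ne_top.2 (ENNReal.mul_ne_top (by simp) hne)
    · set r := (bartheF K n q d).toNNReal with hr
      set s := y.toNNReal with hs
      have hrs : r < s := by
        rwa [hr, hs, ENNReal.toNNReal_lt_toNNReal hne hytop]
      have hs0 : 0 < s := lt_of_le_of_lt (zero_le : 0 ≤ r) hrs
      refine ⟨(r / s + 1) / 2, by positivity, ?_, ?_⟩
      · have : r / s < 1 := by
          rw [div_lt_one hs0]; exact hrs
        calc (r / s + 1) / 2 < (1 + 1) / 2 := by
              gcongr
          _ = 1 := by norm_num
      · have hFd : bartheF K n q d = (r : ℝ≥0∞) := (ENNReal.coe_toNNReal hne).symm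
        have hyy : y = (s : ℝ≥0∞) := (ENNReal.coe_toNNReal hytop).symm
        rw [hFd, hyy]
        have hc0' : (0:ℝ≥0) < (r / s + 1) / 2 := by positivity
        rw [← ENNReal.coe_inv hc0'.ne', ← ENNReal.coe_mul, ENNReal.coe_lt_coe,
          inv_mul_lt_iff₀ hc0']
        -- r < ((r/s+1)/2) * s
        have hrlt : r < ((r / s + 1) / 2) * s := by
          have : r / s < (r / s + 1) / 2 := by
            have h1 : r / s < 1 := by rw [div_lt_one hs0]; exact hrs
            rw [lt_div_iff₀ (by norm_num : (0:ℝ≥0) < 2)]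
            calc r / s * 2 = r / s + r / s := by ring
              _ < r / s + 1 := by gcongr
          calc r = r / s * s := by rw [div_mul_cancel₀]; exact hs0.ne'
            _ < ((r / s + 1) / 2) * s := by gcongr
        exact hrlt
  -- the neighborhood
  have hev : ∀ᶠ e in nhds d, ∀ I, c * d I ≤ e I := by
    rw [Filter.eventually_all]
    intro I
    rcases eq_or_ne (d I) 0 with h | h
    · exact Filter.Eventually.of_forall fun e => by simp [h]
    · have hlt : c * d I < d I := mul_lt_of_lt_one_left ((zero_le : 0 ≤ d I).lt_of_ne (Ne.symm h)) hc1
      exact (((continuous_apply I).tendsto d).eventually (eventually_gt_nhds hlt)).mono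
        fun x hx => hx.le
  refine hev.mono fun e he => ?_
  have h1 : bartheF K n q e ≤ bartheF K n q (fun I => c * d I) :=
    bartheF_antitone fun I => he I
  calc bartheF K n q e ≤ bartheF K n q (fun I => c * d I) := h1
    _ ≤ (c : ℝ≥0∞)⁻¹ * bartheF K n q d := bartheF_smul_le c hc0.ne' d
    _ < y := hcy
end

section
/- Fix K, n ∈ ℕ with n ≤ K and weights q₁, …, q_K ∈ [0,1]; let 𝓘 be the collection of n-element subsets of {1, …, K} and define F : [0,∞)^𝓘 → [0,∞] by F(d) = sup_{λ ∈ (0,∞)^K} (∏_{k=1}^K λ_k^{q_k}) / (∑_{I∈𝓘} d_I q_I λ_I) (with x/0 = ∞ for x > 0). Let d̃ ∈ [0,∞)^𝓘 be such that d̃_I ≠ 0 for at least one I, and set D = min{d̃_I : I ∈ 𝓘, d̃_I ≠ 0} > 0. Then for every δ ∈ (0, D) and every d ∈ [0,∞)^𝓘 satisfying |d_I − d̃_I| ≤ δ for all I ∈ 𝓘, one has F(d) ≤ (1 − δ/D)⁻¹ · F(d̃). -/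
open ENNReal NNReal

/-- **Quantitative upper semicontinuity of the Barthe supremum functional.** Suppose
`d̃ ∈ [0,∞)^𝓘` has at least one nonzero entry, and let `D` be the minimum of its
nonzero entries. Then for every `δ ∈ (0, D)` and every `d ∈ [0,∞)^𝓘` with
`|d_I − d̃_I| ≤ δ` for all `I`, one has `F(d) ≤ (1 − δ/D)⁻¹ · F(d̃)`. -/
theorem bartheF_quantitative_bound (K n : ℕ) (hn : n ≤ K)
    (q : Fin K → ℝ) (hq : ∀ k, q k ∈ Set.Icc (0:ℝ) 1)
    (dt : {I : Finset (Fin K) // I.card = n} → ℝ≥0)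
    (hdt : ∃ I, dt I ≠ 0) (D : ℝ≥0)
    (hD : IsLeast {x : ℝ≥0 | ∃ I, dt I ≠ 0 ∧ dt I = x} D)
    (δ : ℝ) (hδ0 : 0 < δ) (hδD : δ < D)
    (d : {I : Finset (Fin K) // I.card = n} → ℝ≥0)
    (hd : ∀ I, |(d I : ℝ) - (dt I : ℝ)| ≤ δ) :
    bartheF K n q d ≤ ENNReal.ofReal ((1 - δ / (D : ℝ))⁻¹) * bartheF K n q dt := by
  have hDpos : (0:ℝ) < D := lt_trans hδ0 hδD
  set c : ℝ := 1 - δ / D with hc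
  have hc0 : 0 < c := by
    have : δ / (D:ℝ) < 1 := (div_lt_one hDpos).mpr hδD
    simp only [hc]; linarith
  have key : ∀ I, ENNReal.ofReal c * (dt I : ℝ≥0∞) ≤ (d I : ℝ≥0∞) := by
    intro I
    rw [← ENNReal.ofReal_coe_nnreal, ← ENNReal.ofReal_coe_nnreal,
      ← ENNReal.ofReal_mul hc0.le]
    apply ENNReal.ofReal_le_ofReal
    by_cases h : dt I = 0
    · simp [h]
    · have hDle : (D:ℝ) ≤ dt I := by exact_mod_cast hD.2 ⟨I, h, rfl⟩
      have hδle : δ ≤ (δ / D) * dt I := by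
        rw [div_mul_eq_mul_div, le_div_iff₀ hDpos]
        nlinarith
      have h2 : (dt I : ℝ) - δ ≤ d I := by
        have := abs_le.mp (hd I); linarith [this.1]
      rw [hc]; nlinarith [hδle, h2]
  have hcne : ENNReal.ofReal c ≠ 0 := (ENNReal.ofReal_pos.mpr hc0).ne'
  have hctop : ENNReal.ofReal c ≠ ∞ := ENNReal.ofReal_ne_top
  rw [bartheF, bartheF]
  refine iSup_le fun lam => iSup_le fun hlam => ?_
  set A : ℝ≥0∞ := ENNReal.ofReal (∏ k, lam k ^ q k) with hA
  set Sdt : ℝ≥0∞ := ∑ I : {I : Finset (Fin K) // I.card = n},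
      (dt I : ℝ≥0∞) * ENNReal.ofReal ((∏ k ∈ I.1, q k) * ∏ k ∈ I.1, lam k) with hSdt
  have hsum : ENNReal.ofReal c * Sdt ≤ ∑ I : {I : Finset (Fin K) // I.card = n},
      (d I : ℝ≥0∞) * ENNReal.ofReal ((∏ k ∈ I.1, q k) * ∏ k ∈ I.1, lam k) := by
    rw [hSdt, Finset.mul_sum]
    refine Finset.sum_le_sum fun I _ => ?_
    rw [← mul_assoc]
    exact mul_le_mul_left (key I) _
  calc A / ∑ I : {I : Finset (Fin K) // I.card = n},
        (d I : ℝ≥0∞) * ENNReal.ofReal ((∏ k ∈ I.1, q k) * ∏ k ∈ I.1, lam k)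
      ≤ A / (ENNReal.ofReal c * Sdt) := ENNReal.div_le_div_left hsum A
    _ = ENNReal.ofReal c⁻¹ * (A / Sdt) := by
        rw [div_eq_mul_inv, ENNReal.mul_inv (Or.inl hcne) (Or.inl hctop),
          ENNReal.ofReal_inv_of_pos hc0, ← mul_assoc,
          mul_comm A (ENNReal.ofReal c)⁻¹, mul_assoc, ← div_eq_mul_inv]
    _ ≤ ENNReal.ofReal c⁻¹ * ⨆ (lam : Fin K → ℝ) (_ : ∀ k, 0 < lam k),
          ENNReal.ofReal (∏ k, lam k ^ q k) /
            ∑ I : {I : Finset (Fin K) // I.card = n},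
              (dt I : ℝ≥0∞) * ENNReal.ofReal ((∏ k ∈ I.1, q k) * ∏ k ∈ I.1, lam k) := by
        refine mul_le_mul_right ?_ _
        exact le_iSup_of_le lam (le_iSup_of_le hlam le_rfl)
end

section
/- Let v₁, v₂, v₃, v₄ be nonzero vectors in ℝ², let L_i : ℝ² → ℝ be the rank-one maps L_i(x) = ⟨v_i, x⟩, and let p = (1/2, 1/2, 1/2, 1/2). Then, in [0,∞] (with 2/0 = ∞), BL(v, p)² = 2 / ( |det(v₁ v₂) · det(v₃ v₄)| + |det(v₁ v₃) · det(v₂ v₄)| + |det(v₁ v₄) · det(v₂ v₃)| ), where det(v_i v_j) denotes the determinant of the 2 × 2 matrix with columns v_i and v_j. -/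
open MeasureTheory ENNReal

/-- The Brascamp–Lieb constant for rank-one data: to an `m`-tuple of vectors
`v j ∈ ℝⁿ` we associate the linear maps `L j x = ⟨v j, x⟩ = ∑ i, v j i * x i` and take
the supremum, over measurable `f j : ℝ → [0,∞]` with positive finite Lebesgue integral,
of `(∫ ∏ (f j ∘ L j)^(p j)) / ∏ (∫ f j)^(p j)`. -/
noncomputable def brascampLiebRankOne {m n : ℕ}
    (v : Fin m → (Fin n → ℝ)) (p : Fin m → ℝ) : ℝ≥0∞ :=
  ⨆ (f : Fin m → ℝ → ℝ≥0∞) (_ : ∀ j, Measurable (f j))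
    (_ : ∀ j, 0 < ∫⁻ y, f j y) (_ : ∀ j, ∫⁻ y, f j y < ⊤),
    (∫⁻ x : Fin n → ℝ, ∏ j, (f j (∑ i, v j i * x i)) ^ (p j)) /
      ∏ j, (∫⁻ y, f j y) ^ (p j)

section BLAux

noncomputable section

def detv (w1 w2 : Fin 2 → ℝ) : ℝ := w1 0 * w2 1 - w1 1 * w2 0

lemma lintegral_split (g1 g2 : ℝ → ℝ≥0∞) (h1 : Measurable g1) (h2 : Measurable g2) :
    ∫⁻ y : Fin 2 → ℝ, g1 (y 0) * g2 (y 1) = (∫⁻ y, g1 y) * (∫⁻ y, g2 y) := by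
  have hmp := (volume_preserving_finTwoArrow ℝ).symm
  have key := MeasurePreserving.lintegral_comp hmp
      (f := fun y : Fin 2 → ℝ => g1 (y 0) * g2 (y 1))
      ((h1.comp (measurable_pi_apply 0)).mul (h2.comp (measurable_pi_apply 1)))
  rw [← key, ← lintegral_prod_mul h1.aemeasurable h2.aemeasurable]
  congr 1

def pairMap (w1 w2 : Fin 2 → ℝ) : (Fin 2 → ℝ) →ₗ[ℝ] (Fin 2 → ℝ) where
  toFun x := ![∑ i, w1 i * x i, ∑ i, w2 i * x i]
  map_add' x y := by
    funext j
    fin_cases j <;> simp [Fin.sum_univ_two] <;> ring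
  map_smul' c x := by
    funext j
    fin_cases j <;> simp [Fin.sum_univ_two] <;> ring

lemma pairMap_det (w1 w2 : Fin 2 → ℝ) : LinearMap.det (pairMap w1 w2) = detv w1 w2 := by
  rw [← LinearMap.det_toMatrix (Pi.basisFun ℝ (Fin 2))]
  rw [Matrix.det_fin_two]
  simp only [LinearMap.toMatrix_apply, pairMap, Pi.basisFun_apply, LinearMap.coe_mk,
    AddHom.coe_mk, Pi.basisFun_repr, Fin.sum_univ_two]
  simp [detv, Pi.single_apply]

lemma pairMap_measurable (w1 w2 : Fin 2 → ℝ) : Measurable (pairMap w1 w2) :=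
  (pairMap w1 w2).continuous_of_finiteDimensional.measurable

/-- Change of variables: integral of a product of two transversal rank-one compositions. -/
lemma lintegral_pair (w1 w2 : Fin 2 → ℝ) (hd : detv w1 w2 ≠ 0)
    (g1 g2 : ℝ → ℝ≥0∞) (h1 : Measurable g1) (h2 : Measurable g2) :
    ∫⁻ x : Fin 2 → ℝ, g1 (∑ i, w1 i * x i) * g2 (∑ i, w2 i * x i)
      = (∫⁻ y, g1 y) * (∫⁻ y, g2 y) / ENNReal.ofReal |detv w1 w2| := by
  have hdet : LinearMap.det (pairMap w1 w2) ≠ 0 := by rw [pairMap_det]; exact hd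
  have hmap := Measure.map_linearMap_addHaar_eq_smul_addHaar (volume : Measure (Fin 2 → ℝ)) hdet
  have hF : Measurable fun y : Fin 2 → ℝ => g1 (y 0) * g2 (y 1) :=
    (h1.comp (measurable_pi_apply 0)).mul (h2.comp (measurable_pi_apply 1))
  have key := lintegral_map (μ := (volume : Measure (Fin 2 → ℝ))) hF (pairMap_measurable w1 w2)
  rw [hmap] at key
  have hTx : ∀ x, (pairMap w1 w2 x) 0 = ∑ i, w1 i * x i ∧ (pairMap w1 w2 x) 1 = ∑ i, w2 i * x i := by
    intro x; constructor <;> rfl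
  have lhs_eq : ∫⁻ x : Fin 2 → ℝ, g1 (∑ i, w1 i * x i) * g2 (∑ i, w2 i * x i)
      = ∫⁻ x, g1 ((pairMap w1 w2 x) 0) * g2 ((pairMap w1 w2 x) 1) := by
    rfl
  rw [lhs_eq, ← key, lintegral_smul_measure, lintegral_split g1 g2 h1 h2,
    pairMap_det]
  rw [abs_inv, ENNReal.ofReal_inv_of_pos (abs_pos.mpr hd), ENNReal.div_eq_inv_mul, smul_eq_mul]


lemma lintegral_gaussian_shift {α : ℝ} (hα : 0 < α) (s : ℝ) :
    ∫⁻ y : ℝ, ENNReal.ofReal (Real.exp (-(α * (y + s) ^ 2)))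
      = ENNReal.ofReal (Real.sqrt (Real.pi / α)) := by
  rw [lintegral_add_right_eq_self (fun y => ENNReal.ofReal (Real.exp (-(α * y ^ 2)))) s]
  rw [← integral_gaussian α]
  rw [ofReal_integral_eq_lintegral_ofReal (integrable_exp_neg_mul_sq hα)
    (Filter.Eventually.of_forall fun y => (Real.exp_pos _).le)]
  congr 1
  funext y
  ring_nf

lemma lintegral_gaussian_2d {a b c : ℝ} (hc : 0 < c) (hD : 0 < a * c - b ^ 2) :
    ∫⁻ x : Fin 2 → ℝ,
        ENNReal.ofReal (Real.exp (-(a * x 0 ^ 2 + 2 * b * x 0 * x 1 + c * x 1 ^ 2)))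
      = ENNReal.ofReal (Real.pi / Real.sqrt (a * c - b ^ 2)) := by
  have hα : 0 < a - b ^ 2 / c := by
    rw [sub_pos, div_lt_iff₀ hc]
    linarith
  -- transfer to ℝ × ℝ
  have hmp := (volume_preserving_finTwoArrow ℝ).symm
  have hint : Measurable fun x : Fin 2 → ℝ =>
      ENNReal.ofReal (Real.exp (-(a * x 0 ^ 2 + 2 * b * x 0 * x 1 + c * x 1 ^ 2))) := by
    apply Measurable.ennreal_ofReal
    apply Measurable.exp
    apply Measurable.neg
    fun_prop
  have key := MeasurePreserving.lintegral_comp hmp hint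
  rw [← key]
  have : ∀ z : ℝ × ℝ, (fun x : Fin 2 → ℝ =>
      ENNReal.ofReal (Real.exp (-(a * x 0 ^ 2 + 2 * b * x 0 * x 1 + c * x 1 ^ 2))))
        (MeasurableEquiv.finTwoArrow.symm z)
      = ENNReal.ofReal (Real.exp (-(a * z.1 ^ 2 + 2 * b * z.1 * z.2 + c * z.2 ^ 2))) := by
    intro z
    simp [MeasurableEquiv.finTwoArrow]
  simp_rw [this]
  rw [MeasureTheory.Measure.volume_eq_prod ℝ ℝ, lintegral_prod]
  swap
  · apply Measurable.aemeasurable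
    apply Measurable.ennreal_ofReal
    apply Measurable.exp
    apply Measurable.neg
    fun_prop
  -- inner integral over second variable, completing the square
  have inner_eq : ∀ x : ℝ, ∫⁻ y : ℝ, ENNReal.ofReal (Real.exp (-(a * x ^ 2 + 2 * b * x * y + c * y ^ 2)))
      = ENNReal.ofReal (Real.exp (-((a - b ^ 2 / c) * x ^ 2)))
        * ENNReal.ofReal (Real.sqrt (Real.pi / c)) := by
    intro x
    have expand : ∀ y : ℝ, ENNReal.ofReal (Real.exp (-(a * x ^ 2 + 2 * b * x * y + c * y ^ 2)))
        = ENNReal.ofReal (Real.exp (-((a - b ^ 2 / c) * x ^ 2)))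
          * ENNReal.ofReal (Real.exp (-(c * (y + b * x / c) ^ 2))) := by
      intro y
      rw [← ENNReal.ofReal_mul (Real.exp_pos _).le, ← Real.exp_add]
      congr 2
      field_simp
      ring
    simp_rw [expand]
    rw [lintegral_const_mul _ (by apply Measurable.ennreal_ofReal; fun_prop)]
    rw [lintegral_gaussian_shift hc]
  simp_rw [inner_eq]
  rw [lintegral_mul_const _ (by apply Measurable.ennreal_ofReal; fun_prop)]
  have outer : ∫⁻ x : ℝ, ENNReal.ofReal (Real.exp (-((a - b ^ 2 / c) * x ^ 2)))
      = ENNReal.ofReal (Real.sqrt (Real.pi / (a - b ^ 2 / c))) := by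
    have := lintegral_gaussian_shift hα 0
    simpa using this
  rw [outer, ← ENNReal.ofReal_mul (Real.sqrt_nonneg _)]
  congr 1
  rw [← Real.sqrt_mul (by positivity)]
  have h1 : Real.pi / (a - b ^ 2 / c) * (Real.pi / c) = Real.pi ^ 2 / (a * c - b ^ 2) := by
    field_simp
  rw [h1, Real.sqrt_div (by positivity), Real.sqrt_sq Real.pi_pos.le]


lemma abs_sum_eq_two_max {A C : ℝ} :
    |A| + |A + C| + |C| = 2 * max |A| (max |A + C| |C|) := by
  rcases abs_cases A with ⟨hA, hA'⟩ | ⟨hA, hA'⟩ <;>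
    rcases abs_cases C with ⟨hC, hC'⟩ | ⟨hC, hC'⟩ <;>
    rcases abs_cases (A + C) with ⟨hB, hB'⟩ | ⟨hB, hB'⟩ <;>
    rw [hA, hC, hB, max_def, max_def] <;> split_ifs <;> linarith

lemma exp_pair (α β : ℝ) (hα : 0 ≤ α) (hβ : 0 ≤ β) {ε : ℝ} (hε : 0 < ε) :
    ∃ y : ℝ, α * Real.exp y + β * Real.exp (-y) ≤ 2 * Real.sqrt (α * β) + ε := by
  rcases eq_or_lt_of_le hα with hα0 | hαpos
  · -- α = 0
    refine ⟨Real.log ((β + 1) / ε), ?_⟩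
    rw [← hα0]
    have h1 : Real.exp (-Real.log ((β + 1) / ε)) = ε / (β + 1) := by
      rw [Real.exp_neg, Real.exp_log (by positivity), inv_div]
    rw [h1]
    have h2 : β * (ε / (β + 1)) ≤ ε := by
      rw [mul_div_assoc']
      rw [div_le_iff₀ (by positivity)]
      nlinarith
    have h3 : 0 ≤ 2 * Real.sqrt (0 * β) := by positivity
    nlinarith
  · rcases eq_or_lt_of_le hβ with hβ0 | hβpos
    · -- β = 0
      refine ⟨-Real.log ((α + 1) / ε), ?_⟩
      rw [← hβ0]
      have h1 : Real.exp (-Real.log ((α + 1) / ε)) = ε / (α + 1) := by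
        rw [Real.exp_neg, Real.exp_log (by positivity), inv_div]
      rw [h1]
      have h2 : α * (ε / (α + 1)) ≤ ε := by
        rw [mul_div_assoc', div_le_iff₀ (by positivity)]
        nlinarith
      have h3 : 0 ≤ 2 * Real.sqrt (α * 0) := by positivity
      nlinarith
    · -- both positive
      refine ⟨Real.log (Real.sqrt β / Real.sqrt α), ?_⟩
      have hsa : 0 < Real.sqrt α := Real.sqrt_pos.2 hαpos
      have hsb : 0 < Real.sqrt β := Real.sqrt_pos.2 hβpos
      rw [Real.exp_log (by positivity), Real.exp_neg, Real.exp_log (by positivity)]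
      have ha2 : Real.sqrt α * Real.sqrt α = α := Real.mul_self_sqrt hαpos.le
      have hb2 : Real.sqrt β * Real.sqrt β = β := Real.mul_self_sqrt hβpos.le
      have hab : Real.sqrt (α * β) = Real.sqrt α * Real.sqrt β :=
        Real.sqrt_mul hαpos.le β
      rw [hab, inv_div]
      have e1 : α * (Real.sqrt β / Real.sqrt α) = Real.sqrt α * Real.sqrt β := by
        rw [mul_div_assoc', div_eq_iff hsa.ne']
        nlinarith
      have e2 : β * (Real.sqrt α / Real.sqrt β) = Real.sqrt α * Real.sqrt β := by
        rw [mul_div_assoc', div_eq_iff hsb.ne']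
        nlinarith
      rw [e1, e2]
      linarith

lemma D_small (v : Fin 4 → Fin 2 → ℝ) {ε : ℝ} (hε : 0 < ε) :
    ∃ t : Fin 4 → ℝ, (∀ j, 0 < t j) ∧ t 0 * t 1 * t 2 * t 3 = 1 ∧
      (t 0 * t 1 * detv (v 0) (v 1) ^ 2 + t 0 * t 2 * detv (v 0) (v 2) ^ 2
        + t 0 * t 3 * detv (v 0) (v 3) ^ 2 + t 1 * t 2 * detv (v 1) (v 2) ^ 2
        + t 1 * t 3 * detv (v 1) (v 3) ^ 2 + t 2 * t 3 * detv (v 2) (v 3) ^ 2) / 4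
      ≤ (|detv (v 0) (v 1) * detv (v 2) (v 3)| + |detv (v 0) (v 2) * detv (v 1) (v 3)|
          + |detv (v 0) (v 3) * detv (v 1) (v 2)|) / 2 + ε := by
  set d01 := detv (v 0) (v 1); set d02 := detv (v 0) (v 2); set d03 := detv (v 0) (v 3)
  set d12 := detv (v 1) (v 2); set d13 := detv (v 1) (v 3); set d23 := detv (v 2) (v 3)
  have hε' : 0 < 4 * ε / 3 := by linarith
  obtain ⟨y, hy⟩ := exp_pair (d01 ^ 2) (d23 ^ 2) (sq_nonneg _) (sq_nonneg _) hε'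
  obtain ⟨z, hz⟩ := exp_pair (d02 ^ 2) (d13 ^ 2) (sq_nonneg _) (sq_nonneg _) hε'
  obtain ⟨w, hw⟩ := exp_pair (d03 ^ 2) (d12 ^ 2) (sq_nonneg _) (sq_nonneg _) hε'
  have habs : ∀ p q : ℝ, Real.sqrt (p ^ 2 * q ^ 2) = |p * q| := by
    intro p q
    rw [← mul_pow, Real.sqrt_sq_eq_abs]
  rw [habs] at hy hz hw
  refine ⟨![Real.exp ((y + z + w) / 2), Real.exp ((y - z - w) / 2),
    Real.exp ((-y + z - w) / 2), Real.exp ((-y - z + w) / 2)], ?_, ?_, ?_⟩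
  · intro j
    fin_cases j <;> simp [Real.exp_pos]
  · show Real.exp ((y + z + w) / 2) * Real.exp ((y - z - w) / 2) *
      Real.exp ((-y + z - w) / 2) * Real.exp ((-y - z + w) / 2) = 1
    rw [← Real.exp_add, ← Real.exp_add, ← Real.exp_add, ← Real.exp_zero]
    congr 1
    ring
  · have e01 : Real.exp ((y + z + w) / 2) * Real.exp ((y - z - w) / 2) = Real.exp y := by
      rw [← Real.exp_add]; congr 1; ring
    have e02 : Real.exp ((y + z + w) / 2) * Real.exp ((-y + z - w) / 2) = Real.exp z := by
      rw [← Real.exp_add]; congr 1; ring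
    have e03 : Real.exp ((y + z + w) / 2) * Real.exp ((-y - z + w) / 2) = Real.exp w := by
      rw [← Real.exp_add]; congr 1; ring
    have e12 : Real.exp ((y - z - w) / 2) * Real.exp ((-y + z - w) / 2) = Real.exp (-w) := by
      rw [← Real.exp_add]; congr 1; ring
    have e13 : Real.exp ((y - z - w) / 2) * Real.exp ((-y - z + w) / 2) = Real.exp (-z) := by
      rw [← Real.exp_add]; congr 1; ring
    have e23 : Real.exp ((-y + z - w) / 2) * Real.exp ((-y - z + w) / 2) = Real.exp (-y) := by
      rw [← Real.exp_add]; congr 1; ring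
    show (Real.exp ((y + z + w) / 2) * Real.exp ((y - z - w) / 2) * d01 ^ 2
        + Real.exp ((y + z + w) / 2) * Real.exp ((-y + z - w) / 2) * d02 ^ 2
        + Real.exp ((y + z + w) / 2) * Real.exp ((-y - z + w) / 2) * d03 ^ 2
        + Real.exp ((y - z - w) / 2) * Real.exp ((-y + z - w) / 2) * d12 ^ 2
        + Real.exp ((y - z - w) / 2) * Real.exp ((-y - z + w) / 2) * d13 ^ 2
        + Real.exp ((-y + z - w) / 2) * Real.exp ((-y - z + w) / 2) * d23 ^ 2) / 4
      ≤ (|d01 * d23| + |d02 * d13| + |d03 * d12|) / 2 + ε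
    rw [e01, e02, e03, e12, e13, e23]
    linarith


/-- indicator of `[-r, r]` -/
def ind (r : ℝ) : ℝ → ℝ≥0∞ := (Set.Icc (-r) r).indicator 1

lemma ind_meas (r : ℝ) : Measurable (ind r) :=
  measurable_one.indicator measurableSet_Icc

lemma ind_lintegral (r : ℝ) : ∫⁻ y, ind r y = ENNReal.ofReal (2 * r) := by
  rw [ind, lintegral_indicator_one measurableSet_Icc, Real.volume_Icc]
  congr 1
  ring

lemma ind_01 (r u : ℝ) : ind r u = 0 ∨ ind r u = 1 := by
  rw [ind, Set.indicator_apply]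
  split_ifs <;> simp

lemma ind_rpow (r u : ℝ) : (ind r u) ^ ((1:ℝ)/2) = ind r u := by
  rcases ind_01 r u with h | h <;> rw [h]
  · rw [ENNReal.zero_rpow_of_pos (by norm_num)]
  · rw [ENNReal.one_rpow]

lemma ind_scale {l : ℝ} (hl : l ≠ 0) (r s : ℝ) : ind (|l| * r) (l * s) = ind r s := by
  rw [ind, ind, Set.indicator_apply, Set.indicator_apply]
  have : l * s ∈ Set.Icc (-(|l| * r)) (|l| * r) ↔ s ∈ Set.Icc (-r) r := by
    rw [Set.mem_Icc, Set.mem_Icc, ← abs_le, ← abs_le, abs_mul,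
      mul_le_mul_iff_right₀ (abs_pos.2 hl)]
  simp only [this]
  split_ifs <;> rfl

lemma dot_smul {w : Fin 2 → ℝ} {l : ℝ} {w' : Fin 2 → ℝ} (h : w' = l • w) (x : Fin 2 → ℝ) :
    ∑ i, w' i * x i = l * ∑ i, w i * x i := by
  rw [h, Finset.mul_sum]
  congr 1
  funext i
  simp [mul_assoc]

lemma exists_smul_of_detv_eq_zero {w1 w2 : Fin 2 → ℝ} (h1 : w1 ≠ 0) (h2 : w2 ≠ 0)
    (hd : detv w1 w2 = 0) : ∃ l : ℝ, l ≠ 0 ∧ w2 = l • w1 := by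
  have hne : w1 0 ≠ 0 ∨ w1 1 ≠ 0 := by
    by_contra h
    push_neg at h
    exact h1 (funext fun j => by fin_cases j <;> simp [h.1, h.2])
  have key : ∃ l : ℝ, w2 = l • w1 := by
    rcases hne with h | h
    · refine ⟨w2 0 / w1 0, funext fun j => ?_⟩
      have hd' : w1 0 * w2 1 = w1 1 * w2 0 := by rw [detv] at hd; linarith
      fin_cases j <;> simp only [Pi.smul_apply, smul_eq_mul]
      · field_simp
        rfl
      · field_simp
        exact (by linarith [hd'] : w2 1 * w1 0 = w2 0 * w1 1)
    · refine ⟨w2 1 / w1 1, funext fun j => ?_⟩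
      have hd' : w1 0 * w2 1 = w1 1 * w2 0 := by rw [detv] at hd; linarith
      fin_cases j <;> simp only [Pi.smul_apply, smul_eq_mul]
      · field_simp
        exact (by linarith [hd'] : w2 0 * w1 1 = w2 1 * w1 0)
      · field_simp
        rfl
  obtain ⟨l, hl⟩ := key
  refine ⟨l, fun h0 => ?_, hl⟩
  rw [h0, zero_smul] at hl
  exact h2 hl

lemma perp_detv (w : Fin 2 → ℝ) (hw : w ≠ 0) : detv w ![-w 1, w 0] ≠ 0 := by
  have hne : w 0 ≠ 0 ∨ w 1 ≠ 0 := by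
    by_contra h
    push_neg at h
    exact hw (funext fun j => by fin_cases j <;> simp [h.1, h.2])
  show w 0 * w 0 - w 1 * (-w 1) ≠ 0
  intro heq
  rcases hne with h | h
  · nlinarith [mul_self_pos.2 h, mul_self_nonneg (w 1)]
  · nlinarith [mul_self_pos.2 h, mul_self_nonneg (w 0)]

lemma degenerate_top (v : Fin 4 → Fin 2 → ℝ) (hv : ∀ j, v j ≠ 0) (a b c d : Fin 4)
    (hprod : ∀ F : Fin 4 → ℝ≥0∞, ∏ j, F j = F a * F b * (F c * F d))
    (hba : b ≠ a) (hca : c ≠ a) (hcb : c ≠ b)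
    (hda : d ≠ a) (hdb : d ≠ b) (hdc : d ≠ c)
    (h1 : detv (v a) (v b) = 0) (h2 : detv (v a) (v c) = 0) :
    brascampLiebRankOne v (fun _ => (1:ℝ)/2) = ⊤ := by
  classical
  obtain ⟨lb, hlb0, hlb⟩ := exists_smul_of_detv_eq_zero (hv a) (hv b) h1
  obtain ⟨lc, hlc0, hlc⟩ := exists_smul_of_detv_eq_zero (hv a) (hv c) h2
  rw [eq_top_iff]
  by_cases hd0 : detv (v a) (v d) = 0
  · -- all four vectors parallel: a single test function gives an infinite ratio
    obtain ⟨ld, hld0, hld⟩ := exists_smul_of_detv_eq_zero (hv a) (hv d) hd0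
    set w : Fin 4 → ℝ := fun j =>
      if j = a then 1 else if j = b then |lb| else if j = c then |lc| else |ld| with hwdef
    have hwa : w a = 1 := by simp [hwdef]
    have hwb : w b = |lb| * 1 := by simp [hwdef, hba]
    have hwc : w c = |lc| * 1 := by simp [hwdef, hca, hcb]
    have hwd : w d = |ld| * 1 := by simp [hwdef, hda, hdb, hdc]
    have hwpos : ∀ j, 0 < w j := by
      intro j
      rw [hwdef]
      dsimp only
      split_ifs
      · norm_num
      · exact abs_pos.2 hlb0
      · exact abs_pos.2 hlc0
      · exact abs_pos.2 hld0
    set f : Fin 4 → ℝ → ℝ≥0∞ := fun j => ind (w j) with hfdef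
    have hm : ∀ j, Measurable (f j) := fun j => ind_meas _
    have hintf : ∀ j, ∫⁻ y, f j y = ENNReal.ofReal (2 * w j) := fun j => ind_lintegral _
    have hpos : ∀ j, 0 < ∫⁻ y, f j y := fun j => by
      rw [hintf j]; exact ENNReal.ofReal_pos.2 (by linarith [hwpos j])
    have hfin : ∀ j, ∫⁻ y, f j y < ⊤ := fun j => by rw [hintf j]; exact ENNReal.ofReal_lt_top
    -- numerator is infinite
    have hpt : ∀ x : Fin 2 → ℝ, ∏ j, (f j (∑ i, v j i * x i)) ^ ((1:ℝ)/2)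
        = ind 1 (∑ i, v a i * x i) * (fun _ : ℝ => (1:ℝ≥0∞)) (∑ i, (![-v a 1, v a 0]) i * x i) := by
      intro x
      rw [hprod (fun j => (f j (∑ i, v j i * x i)) ^ ((1:ℝ)/2))]
      simp only [hfdef, ind_rpow]
      rw [dot_smul hlb, dot_smul hlc, dot_smul hld, hwa, hwb, hwc, hwd,
        ind_scale hlb0, ind_scale hlc0, ind_scale hld0]
      rcases ind_01 1 (∑ i, v a i * x i) with h | h <;> rw [h] <;> simp
    have hnum : ∫⁻ x : Fin 2 → ℝ, ∏ j, (f j (∑ i, v j i * x i)) ^ ((1:ℝ)/2) = ⊤ := by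
      simp_rw [hpt]
      rw [lintegral_pair (v a) ![-v a 1, v a 0] (perp_detv (v a) (hv a)) (ind 1)
        (fun _ => 1) (ind_meas 1) measurable_const]
      rw [ind_lintegral, lintegral_one]
      rw [Real.volume_univ, ENNReal.mul_top (by simp : ENNReal.ofReal (2*1) ≠ 0)]
      exact ENNReal.top_div_of_ne_top ENNReal.ofReal_ne_top
    have hQfin : ∏ j, (∫⁻ y, f j y) ^ ((1:ℝ)/2) ≠ ⊤ := by
      refine (ENNReal.prod_lt_top fun j _ => ?_).ne
      rw [ENNReal.rpow_lt_top_iff_of_pos (by norm_num)]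
      exact hfin j
    rw [brascampLiebRankOne]
    refine le_iSup_of_le f (le_iSup_of_le hm (le_iSup_of_le hpos (le_iSup_of_le hfin ?_)))
    rw [hnum, ENNReal.top_div_of_ne_top hQfin]
  · -- the fourth direction is transversal: ratios grow like √R
    set Dd : ℝ := |detv (v a) (v d)| with hDd
    have hDdpos : 0 < Dd := abs_pos.2 hd0
    set L : ℝ := Real.sqrt (|lb| * |lc|) with hL
    have hLpos : 0 < L := Real.sqrt_pos.2 (by positivity)
    set cst : ℝ := 1 / (Dd * L) with hcst
    have hcstpos : 0 < cst := by rw [hcst]; positivity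
    have key : ∀ n : ℕ, ENNReal.ofReal (cst * n) ≤ brascampLiebRankOne v (fun _ => (1:ℝ)/2) := by
      intro n
      rcases Nat.eq_zero_or_pos n with hn | hn
      · simp [hn]
      have hu : (0:ℝ) < n := by exact_mod_cast hn
      set u : ℝ := (n : ℝ) with hudef
      set w : Fin 4 → ℝ := fun j =>
        if j = a then u^2 else if j = b then |lb| * u^2 else if j = c then |lc| * u^2
          else u^4 with hwdef
      have hwa : w a = u^2 := by simp [hwdef]
      have hwb : w b = |lb| * u^2 := by simp [hwdef, hba]
      have hwc : w c = |lc| * u^2 := by simp [hwdef, hca, hcb]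
      have hwd : w d = u^4 := by simp [hwdef, hda, hdb, hdc]
      have hwpos : ∀ j, 0 < w j := by
        intro j
        rw [hwdef]
        dsimp only
        split_ifs
        · positivity
        · exact mul_pos (abs_pos.2 hlb0) (by positivity)
        · exact mul_pos (abs_pos.2 hlc0) (by positivity)
        · positivity
      set f : Fin 4 → ℝ → ℝ≥0∞ := fun j => ind (w j) with hfdef
      have hm : ∀ j, Measurable (f j) := fun j => ind_meas _
      have hintf : ∀ j, ∫⁻ y, f j y = ENNReal.ofReal (2 * w j) := fun j => ind_lintegral _
      have hpos : ∀ j, 0 < ∫⁻ y, f j y := fun j => by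
        rw [hintf j]; exact ENNReal.ofReal_pos.2 (by linarith [hwpos j])
      have hfin : ∀ j, ∫⁻ y, f j y < ⊤ := fun j => by rw [hintf j]; exact ENNReal.ofReal_lt_top
      have hpt : ∀ x : Fin 2 → ℝ, ∏ j, (f j (∑ i, v j i * x i)) ^ ((1:ℝ)/2)
          = ind (u^2) (∑ i, v a i * x i) * ind (u^4) (∑ i, v d i * x i) := by
        intro x
        rw [hprod (fun j => (f j (∑ i, v j i * x i)) ^ ((1:ℝ)/2))]
        simp only [hfdef, ind_rpow]
        rw [dot_smul hlb, dot_smul hlc, hwa, hwb, hwc, hwd,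
          ind_scale hlb0, ind_scale hlc0]
        rcases ind_01 (u^2) (∑ i, v a i * x i) with h | h <;> rw [h] <;> simp
      have hnum : ∫⁻ x : Fin 2 → ℝ, ∏ j, (f j (∑ i, v j i * x i)) ^ ((1:ℝ)/2)
          = ENNReal.ofReal (4 * u^6 / Dd) := by
        simp_rw [hpt]
        rw [lintegral_pair (v a) (v d) hd0 _ _ (ind_meas _) (ind_meas _),
          ind_lintegral, ind_lintegral,
          ← ENNReal.ofReal_mul (by positivity), ← hDd,
          ← ENNReal.ofReal_div_of_pos hDdpos]
        congr 1
        ring_nf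
      have hden : ∏ j, (∫⁻ y, f j y) ^ ((1:ℝ)/2) = ENNReal.ofReal (4 * L * u^5) := by
        have hfac : ∀ j, (∫⁻ y, f j y) ^ ((1:ℝ)/2)
            = ENNReal.ofReal (Real.sqrt (2 * w j)) := by
          intro j
          rw [hintf j, ENNReal.ofReal_rpow_of_pos (by linarith [hwpos j]),
            ← Real.sqrt_eq_rpow]
        rw [hprod (fun j => (∫⁻ y, f j y) ^ ((1:ℝ)/2)), hfac, hfac, hfac, hfac,
          hwa, hwb, hwc, hwd]
        rw [← ENNReal.ofReal_mul (Real.sqrt_nonneg _),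
          ← ENNReal.ofReal_mul (by positivity),
          ← ENNReal.ofReal_mul (by positivity)]
        congr 1
        have h2u2 : Real.sqrt (2 * u^2) = Real.sqrt 2 * u := by
          rw [Real.sqrt_mul (by norm_num), Real.sqrt_sq hu.le]
        have h2u4 : Real.sqrt (2 * u^4) = Real.sqrt 2 * u^2 := by
          rw [Real.sqrt_mul (by norm_num)]
          congr 1
          rw [show u^4 = (u^2)^2 by ring, Real.sqrt_sq (by positivity)]
        have hb2 : Real.sqrt (2 * (|lb| * u^2)) = Real.sqrt 2 * Real.sqrt |lb| * u := by
          rw [show 2 * (|lb| * u^2) = 2 * |lb| * u^2 by ring,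
            Real.sqrt_mul (by positivity), Real.sqrt_sq hu.le,
            Real.sqrt_mul (by norm_num)]
        have hc2 : Real.sqrt (2 * (|lc| * u^2)) = Real.sqrt 2 * Real.sqrt |lc| * u := by
          rw [show 2 * (|lc| * u^2) = 2 * |lc| * u^2 by ring,
            Real.sqrt_mul (by positivity), Real.sqrt_sq hu.le,
            Real.sqrt_mul (by norm_num)]
        rw [h2u2, h2u4, hb2, hc2, hL, Real.sqrt_mul (abs_nonneg _)]
        have h22 : Real.sqrt 2 * Real.sqrt 2 = 2 := Real.mul_self_sqrt (by norm_num)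
        linear_combination (Real.sqrt 2 * Real.sqrt 2 + 2) *
          (Real.sqrt |lb| * Real.sqrt |lc| * u ^ 5) * h22
      rw [brascampLiebRankOne]
      refine le_iSup_of_le f (le_iSup_of_le hm (le_iSup_of_le hpos (le_iSup_of_le hfin ?_)))
      rw [hnum, hden, ← ENNReal.ofReal_div_of_pos (by positivity)]
      apply ENNReal.ofReal_le_ofReal
      have heq : 4 * u ^ 6 / Dd / (4 * L * u ^ 5) = cst * u := by
        rw [hcst]
        field_simp
      rw [heq]
    refine le_of_tendsto' (f := fun n : ℕ => ENNReal.ofReal (cst * n)) (x := Filter.atTop) ?_ key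
    have h1 : Filter.Tendsto (fun n : ℕ => cst * n) Filter.atTop Filter.atTop :=
      (tendsto_natCast_atTop_atTop).const_mul_atTop hcstpos
    exact ENNReal.tendsto_ofReal_atTop.comp h1


lemma sum_measurable (w : Fin 2 → ℝ) : Measurable (fun x : Fin 2 → ℝ => ∑ i, w i * x i) := by
  apply Finset.measurable_sum
  intro i _
  exact measurable_const.mul (measurable_pi_apply i)

/-- Cauchy–Schwarz upper bound for a transversal pairing (a,b),(c,d). -/
lemma pairing_upper {v : Fin 4 → Fin 2 → ℝ} {a b c d : Fin 4}
    (hprod : ∀ F : Fin 4 → ℝ≥0∞, ∏ j, F j = F a * F b * (F c * F d))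
    (hd1 : detv (v a) (v b) ≠ 0) (hd2 : detv (v c) (v d) ≠ 0) :
    brascampLiebRankOne v (fun _ => (1:ℝ)/2)
      ≤ (1 / ENNReal.ofReal |detv (v a) (v b) * detv (v c) (v d)|) ^ ((1:ℝ)/2) := by
  rw [brascampLiebRankOne]
  refine iSup_le fun f => iSup_le fun hm => iSup_le fun hpos => iSup_le fun hfin => ?_
  set D1 := ENNReal.ofReal |detv (v a) (v b)| with hD1
  set D2 := ENNReal.ofReal |detv (v c) (v d)| with hD2
  have hD1pos : 0 < D1 := ENNReal.ofReal_pos.2 (abs_pos.2 hd1)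
  have hD2pos : 0 < D2 := ENNReal.ofReal_pos.2 (abs_pos.2 hd2)
  set P : Fin 4 → ℝ≥0∞ := fun j => ∫⁻ y, f j y with hP
  -- the denominator
  set Q : ℝ≥0∞ := ∏ j, P j ^ ((1:ℝ)/2) with hQ
  have hQfactor : Q = P a ^ ((1:ℝ)/2) * P b ^ ((1:ℝ)/2) * (P c ^ ((1:ℝ)/2) * P d ^ ((1:ℝ)/2)) :=
    hprod _
  have hQ0 : Q ≠ 0 := by
    rw [hQ]
    refine Finset.prod_ne_zero_iff.2 fun j _ => ?_
    simp only [ne_eq, ENNReal.rpow_eq_zero_iff, not_or, not_and_or]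
    constructor
    · left; exact (hpos j).ne'
    · left; exact (hfin j).ne
  have hQtop : Q ≠ ⊤ := by
    rw [hQ]
    refine (ENNReal.prod_lt_top fun j _ => ?_).ne
    rw [ENNReal.rpow_lt_top_iff_of_pos (by norm_num)]
    exact hfin j
  rw [ENNReal.div_le_iff hQ0 hQtop]
  -- Cauchy-Schwarz
  have hFmeas : Measurable fun x : Fin 2 → ℝ =>
      (f a (∑ i, v a i * x i)) ^ ((1:ℝ)/2) * (f b (∑ i, v b i * x i)) ^ ((1:ℝ)/2) :=
    (((hm a).comp (sum_measurable (v a))).pow_const _).mul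
      (((hm b).comp (sum_measurable (v b))).pow_const _)
  have hGmeas : Measurable fun x : Fin 2 → ℝ =>
      (f c (∑ i, v c i * x i)) ^ ((1:ℝ)/2) * (f d (∑ i, v d i * x i)) ^ ((1:ℝ)/2) :=
    (((hm c).comp (sum_measurable (v c))).pow_const _).mul
      (((hm d).comp (sum_measurable (v d))).pow_const _)
  have conj : Real.HolderConjugate 2 2 := Real.HolderConjugate.two_two
  have CS := ENNReal.lintegral_mul_le_Lp_mul_Lq (volume : Measure (Fin 2 → ℝ)) conj
      hFmeas.aemeasurable hGmeas.aemeasurable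
  -- identify the squares
  have hsq : ∀ (u : ℝ≥0∞), (u ^ ((1:ℝ)/2)) ^ (2:ℝ) = u := by
    intro u
    rw [← ENNReal.rpow_mul]
    norm_num
  have hF2 : ∫⁻ x : Fin 2 → ℝ,
      ((f a (∑ i, v a i * x i)) ^ ((1:ℝ)/2) * (f b (∑ i, v b i * x i)) ^ ((1:ℝ)/2)) ^ (2:ℝ)
        = P a * P b / D1 := by
    have : ∀ x : Fin 2 → ℝ,
        ((f a (∑ i, v a i * x i)) ^ ((1:ℝ)/2) * (f b (∑ i, v b i * x i)) ^ ((1:ℝ)/2)) ^ (2:ℝ)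
          = f a (∑ i, v a i * x i) * f b (∑ i, v b i * x i) := by
      intro x
      rw [ENNReal.mul_rpow_of_nonneg _ _ (by norm_num : (0:ℝ) ≤ 2), hsq, hsq]
    simp_rw [this]
    exact lintegral_pair (v a) (v b) hd1 (f a) (f b) (hm a) (hm b)
  have hG2 : ∫⁻ x : Fin 2 → ℝ,
      ((f c (∑ i, v c i * x i)) ^ ((1:ℝ)/2) * (f d (∑ i, v d i * x i)) ^ ((1:ℝ)/2)) ^ (2:ℝ)
        = P c * P d / D2 := by
    have : ∀ x : Fin 2 → ℝ,
        ((f c (∑ i, v c i * x i)) ^ ((1:ℝ)/2) * (f d (∑ i, v d i * x i)) ^ ((1:ℝ)/2)) ^ (2:ℝ)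
          = f c (∑ i, v c i * x i) * f d (∑ i, v d i * x i) := by
      intro x
      rw [ENNReal.mul_rpow_of_nonneg _ _ (by norm_num : (0:ℝ) ≤ 2), hsq, hsq]
    simp_rw [this]
    exact lintegral_pair (v c) (v d) hd2 (f c) (f d) (hm c) (hm d)
  calc ∫⁻ x : Fin 2 → ℝ, ∏ j, (f j (∑ i, v j i * x i)) ^ ((1:ℝ)/2)
      = ∫⁻ x : Fin 2 → ℝ,
        ((f a (∑ i, v a i * x i)) ^ ((1:ℝ)/2) * (f b (∑ i, v b i * x i)) ^ ((1:ℝ)/2)) *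
        ((f c (∑ i, v c i * x i)) ^ ((1:ℝ)/2) * (f d (∑ i, v d i * x i)) ^ ((1:ℝ)/2)) := by
        congr 1; funext x
        rw [hprod (fun j => (f j (∑ i, v j i * x i)) ^ ((1:ℝ)/2))]
    _ ≤ (P a * P b / D1) ^ ((1:ℝ)/2) * (P c * P d / D2) ^ ((1:ℝ)/2) := by
        rw [← hF2, ← hG2]
        simpa using CS
    _ = (1 / (D1 * D2)) ^ ((1:ℝ)/2) * Q := by
        rw [hQfactor]
        rw [ENNReal.div_rpow_of_nonneg _ _ (by norm_num : (0:ℝ) ≤ 1/2),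
          ENNReal.div_rpow_of_nonneg _ _ (by norm_num : (0:ℝ) ≤ 1/2),
          ENNReal.div_rpow_of_nonneg _ _ (by norm_num : (0:ℝ) ≤ 1/2),
          ENNReal.mul_rpow_of_nonneg _ _ (by norm_num : (0:ℝ) ≤ 1/2),
          ENNReal.mul_rpow_of_nonneg _ _ (by norm_num : (0:ℝ) ≤ 1/2),
          ENNReal.mul_rpow_of_nonneg _ _ (by norm_num : (0:ℝ) ≤ 1/2),
          ENNReal.one_rpow]
        simp only [div_eq_mul_inv, one_div]
        rw [ENNReal.mul_inv (Or.inl (ENNReal.rpow_pos hD1pos ENNReal.ofReal_ne_top).ne')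
            (Or.inl (ENNReal.rpow_ne_top_of_nonneg (by norm_num) ENNReal.ofReal_ne_top))]
        ring
    _ = (1 / ENNReal.ofReal |detv (v a) (v b) * detv (v c) (v d)|) ^ ((1:ℝ)/2) * Q := by
        rw [hD1, hD2, ← ENNReal.ofReal_mul (abs_nonneg _), ← abs_mul]


lemma gaussian_lower (v : Fin 4 → Fin 2 → ℝ) (t : Fin 4 → ℝ) (ht : ∀ j, 0 < t j)
    (hone : t 0 * t 1 * t 2 * t 3 = 1)
    {D : ℝ}
    (hDval : D = (t 0 * t 1 * detv (v 0) (v 1) ^ 2 + t 0 * t 2 * detv (v 0) (v 2) ^ 2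
      + t 0 * t 3 * detv (v 0) (v 3) ^ 2 + t 1 * t 2 * detv (v 1) (v 2) ^ 2
      + t 1 * t 3 * detv (v 1) (v 3) ^ 2 + t 2 * t 3 * detv (v 2) (v 3) ^ 2) / 4)
    (hD : 0 < D) :
    ENNReal.ofReal (1 / Real.sqrt D) ≤ brascampLiebRankOne v (fun _ => (1:ℝ)/2) := by
  classical
  set f : Fin 4 → ℝ → ℝ≥0∞ := fun j y => ENNReal.ofReal (Real.exp (-(t j * y ^ 2))) with hf
  have hm : ∀ j, Measurable (f j) := by
    intro j
    apply Measurable.ennreal_ofReal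
    fun_prop
  have hint : ∀ j, ∫⁻ y, f j y = ENNReal.ofReal (Real.sqrt (Real.pi / t j)) := by
    intro j
    have := lintegral_gaussian_shift (ht j) 0
    simpa using this
  have hpos : ∀ j, 0 < ∫⁻ y, f j y := by
    intro j
    rw [hint j]
    exact ENNReal.ofReal_pos.2 (Real.sqrt_pos.2 (div_pos Real.pi_pos (ht j)))
  have hfin : ∀ j, ∫⁻ y, f j y < ⊤ := by
    intro j; rw [hint j]; exact ENNReal.ofReal_lt_top
  -- quadratic form coefficients
  set A : ℝ := (t 0 * v 0 0 ^ 2 + t 1 * v 1 0 ^ 2 + t 2 * v 2 0 ^ 2 + t 3 * v 3 0 ^ 2) / 2 with hA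
  set B : ℝ := (t 0 * v 0 0 * v 0 1 + t 1 * v 1 0 * v 1 1 + t 2 * v 2 0 * v 2 1
      + t 3 * v 3 0 * v 3 1) / 2 with hB
  set C : ℝ := (t 0 * v 0 1 ^ 2 + t 1 * v 1 1 ^ 2 + t 2 * v 2 1 ^ 2 + t 3 * v 3 1 ^ 2) / 2 with hC
  have hACB : A * C - B ^ 2 = D := by
    rw [hA, hB, hC, hDval]
    simp only [detv]
    ring
  have hDpos' : 0 < A * C - B ^ 2 := hACB ▸ hD
  have hCpos : 0 < C := by
    rcases lt_or_ge 0 C with h | h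
    · exact h
    · exfalso
      have hC0 : 0 ≤ C := by
        rw [hC]
        have h0 := mul_nonneg (ht 0).le (sq_nonneg (v 0 1))
        have h1 := mul_nonneg (ht 1).le (sq_nonneg (v 1 1))
        have h2 := mul_nonneg (ht 2).le (sq_nonneg (v 2 1))
        have h3 := mul_nonneg (ht 3).le (sq_nonneg (v 3 1))
        linarith
      have : C = 0 := le_antisymm h hC0
      rw [this] at hDpos'
      nlinarith [sq_nonneg B]
  -- pointwise numerator identity
  have hnum_pt : ∀ x : Fin 2 → ℝ,
      ∏ j, (f j (∑ i, v j i * x i)) ^ ((1:ℝ)/2)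
        = ENNReal.ofReal (Real.exp (-(A * x 0 ^ 2 + 2 * B * x 0 * x 1 + C * x 1 ^ 2))) := by
    intro x
    rw [Fin.prod_univ_four]
    have hr : ∀ (u : ℝ) (j : Fin 4),
        (f j u) ^ ((1:ℝ)/2) = ENNReal.ofReal (Real.exp (-(t j * u ^ 2) * (1/2))) := by
      intro u j
      rw [hf]
      rw [ENNReal.ofReal_rpow_of_pos (Real.exp_pos _), ← Real.exp_mul]
    rw [hr, hr, hr, hr]
    rw [← ENNReal.ofReal_mul (Real.exp_pos _).le, ← ENNReal.ofReal_mul (by positivity),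
      ← ENNReal.ofReal_mul (by positivity)]
    rw [← Real.exp_add, ← Real.exp_add, ← Real.exp_add]
    congr 1
    rw [Fin.sum_univ_two, Fin.sum_univ_two, Fin.sum_univ_two, Fin.sum_univ_two, hA, hB, hC]
    ring
  have hnum : ∫⁻ x : Fin 2 → ℝ, ∏ j, (f j (∑ i, v j i * x i)) ^ ((1:ℝ)/2)
      = ENNReal.ofReal (Real.pi / Real.sqrt D) := by
    simp_rw [hnum_pt]
    rw [lintegral_gaussian_2d hCpos hDpos', hACB]
  -- denominator
  have hden : ∏ j, (∫⁻ y, f j y) ^ ((1:ℝ)/2) = ENNReal.ofReal Real.pi := by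
    have hfac : ∀ j, (∫⁻ y, f j y) ^ ((1:ℝ)/2)
        = ENNReal.ofReal ((Real.pi / t j) ^ ((1:ℝ)/4)) := by
      intro j
      have hptj : (0:ℝ) < Real.pi / t j := div_pos Real.pi_pos (ht j)
      rw [hint j, ENNReal.ofReal_rpow_of_pos (Real.sqrt_pos.2 hptj)]
      congr 1
      rw [Real.sqrt_eq_rpow, ← Real.rpow_mul hptj.le]
      norm_num
    have hp : ∀ j, (0:ℝ) < Real.pi / t j := fun j => div_pos Real.pi_pos (ht j)
    have hq : ∀ j, (0:ℝ) ≤ (Real.pi / t j) ^ ((1:ℝ)/4) := fun j => Real.rpow_nonneg (hp j).le _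
    rw [Fin.prod_univ_four, hfac, hfac, hfac, hfac]
    rw [← ENNReal.ofReal_mul (hq 0), ← ENNReal.ofReal_mul (mul_nonneg (hq 0) (hq 1)),
      ← ENNReal.ofReal_mul (mul_nonneg (mul_nonneg (hq 0) (hq 1)) (hq 2))]
    congr 1
    rw [← Real.mul_rpow (hp 0).le (hp 1).le,
      ← Real.mul_rpow (mul_nonneg (hp 0).le (hp 1).le) (hp 2).le,
      ← Real.mul_rpow (mul_nonneg (mul_nonneg (hp 0).le (hp 1).le) (hp 2).le) (hp 3).le]
    have hnum4 : Real.pi / t 0 * (Real.pi / t 1) * (Real.pi / t 2) * (Real.pi / t 3)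
        = Real.pi ^ (4:ℕ) := by
      field_simp
      rw [hone]
      ring
    rw [hnum4, ← Real.rpow_natCast Real.pi 4, ← Real.rpow_mul Real.pi_pos.le]
    norm_num
  -- conclude
  rw [brascampLiebRankOne]
  refine le_iSup_of_le f (le_iSup_of_le hm (le_iSup_of_le hpos (le_iSup_of_le hfin ?_)))
  rw [hnum, hden]
  rw [← ENNReal.ofReal_div_of_pos Real.pi_pos]
  apply ENNReal.ofReal_le_ofReal
  rw [div_right_comm, div_self Real.pi_pos.ne']

end

end BLAux

/-- The 4-linear rank-one Brascamp–Lieb constant in the plane with all exponents `1/2`: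
`BL(v, p)² = 2 / (|det(v₁v₂)det(v₃v₄)| + |det(v₁v₃)det(v₂v₄)| + |det(v₁v₄)det(v₂v₃)|)`,
in `[0,∞]` (with `2/0 = ∞`). -/

theorem brascampLieb_four_rank_one_sq (v : Fin 4 → (Fin 2 → ℝ)) (hv : ∀ j, v j ≠ 0) :
    (brascampLiebRankOne v (fun _ => (1:ℝ)/2)) ^ 2 =
      2 / ENNReal.ofReal
        (|Matrix.det !![v 0 0, v 1 0; v 0 1, v 1 1] *
            Matrix.det !![v 2 0, v 3 0; v 2 1, v 3 1]| +
         |Matrix.det !![v 0 0, v 2 0; v 0 1, v 2 1] *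
            Matrix.det !![v 1 0, v 3 0; v 1 1, v 3 1]| +
         |Matrix.det !![v 0 0, v 3 0; v 0 1, v 3 1] *
            Matrix.det !![v 1 0, v 2 0; v 1 1, v 2 1]|) := by
  classical
  set A : ℝ := detv (v 0) (v 1) * detv (v 2) (v 3) with hAdef
  set B : ℝ := detv (v 0) (v 2) * detv (v 1) (v 3) with hBdef
  set C : ℝ := detv (v 0) (v 3) * detv (v 1) (v 2) with hCdef
  have hRHS : (|Matrix.det !![v 0 0, v 1 0; v 0 1, v 1 1] *
            Matrix.det !![v 2 0, v 3 0; v 2 1, v 3 1]| +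
         |Matrix.det !![v 0 0, v 2 0; v 0 1, v 2 1] *
            Matrix.det !![v 1 0, v 3 0; v 1 1, v 3 1]| +
         |Matrix.det !![v 0 0, v 3 0; v 0 1, v 3 1] *
            Matrix.det !![v 1 0, v 2 0; v 1 1, v 2 1]|) = |A| + |B| + |C| := by
    rw [hAdef, hBdef, hCdef]
    simp only [Matrix.det_fin_two_of, detv]
    ring_nf
  rw [hRHS]
  have hPl : B = A + C := by
    rw [hAdef, hBdef, hCdef]
    simp only [detv]
    ring
  set M : ℝ := max |A| (max |B| |C|) with hMdef
  have hsum : |A| + |B| + |C| = 2 * M := by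
    rw [hMdef, hPl]
    exact abs_sum_eq_two_max
  have hM0 : 0 ≤ M := le_trans (abs_nonneg A) (le_max_left _ _)
  have hRHS2 : 2 / ENNReal.ofReal (|A| + |B| + |C|) = 1 / ENNReal.ofReal M := by
    rw [hsum, ENNReal.ofReal_mul (by norm_num : (0:ℝ) ≤ 2)]
    have h2 : ENNReal.ofReal (2:ℝ) = 2 := by norm_num
    rw [h2]
    rw [show (2 : ℝ≥0∞) = 2 * 1 by norm_num]
    rw [show (2 * 1 : ℝ≥0∞) * ENNReal.ofReal M = 2 * ENNReal.ofReal M by ring]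
    exact ENNReal.mul_div_mul_left 1 (ENNReal.ofReal M) (by norm_num) (by norm_num)
  rw [hRHS2]
  rcases eq_or_lt_of_le hM0 with hM | hM
  · -- degenerate case: M = 0, RHS = ⊤
    have hA0 : A = 0 := by
      have : |A| ≤ M := le_max_left _ _
      rw [← hM] at this
      exact abs_eq_zero.1 (le_antisymm this (abs_nonneg _))
    have hB0 : B = 0 := by
      have : |B| ≤ M := le_trans (le_max_left _ _) (le_max_right _ _)
      rw [← hM] at this
      exact abs_eq_zero.1 (le_antisymm this (abs_nonneg _))
    have htop : brascampLiebRankOne v (fun _ => (1:ℝ)/2) = ⊤ := by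
      have hA0' : detv (v 0) (v 1) * detv (v 2) (v 3) = 0 := by rw [← hAdef]; exact hA0
      have hB0' : detv (v 0) (v 2) * detv (v 1) (v 3) = 0 := by rw [← hBdef]; exact hB0
      rcases mul_eq_zero.1 hA0' with h01 | h23
      · rcases mul_eq_zero.1 hB0' with h02 | h13
        · exact degenerate_top v hv 0 1 2 3
            (fun F => by rw [Fin.prod_univ_four]; ring)
            (by decide) (by decide) (by decide) (by decide) (by decide) (by decide)
            h01 h02
        · exact degenerate_top v hv 1 0 3 2
            (fun F => by rw [Fin.prod_univ_four]; ring)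
            (by decide) (by decide) (by decide) (by decide) (by decide) (by decide)
            (by simp only [detv] at h01 ⊢; linarith)
            h13
      · rcases mul_eq_zero.1 hB0' with h02 | h13
        · exact degenerate_top v hv 2 3 0 1
            (fun F => by rw [Fin.prod_univ_four]; ring)
            (by decide) (by decide) (by decide) (by decide) (by decide) (by decide)
            h23
            (by simp only [detv] at h02 ⊢; linarith)
        · exact degenerate_top v hv 3 2 1 0
            (fun F => by rw [Fin.prod_univ_four]; ring)
            (by decide) (by decide) (by decide) (by decide) (by decide) (by decide)
            (by simp only [detv] at h23 ⊢; linarith)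
            (by simp only [detv] at h13 ⊢; linarith)
    rw [htop, ← hM]
    simp
  · -- main case: M > 0
    have hMne : ENNReal.ofReal M ≠ 0 := (ENNReal.ofReal_pos.2 hM).ne'
    apply le_antisymm
    · -- upper bound
      have key : brascampLiebRankOne v (fun _ => (1:ℝ)/2)
          ≤ (1 / ENNReal.ofReal M) ^ ((1:ℝ)/2) := by
        rcases max_choice |A| (max |B| |C|) with hM1 | hM1
        · have hAM : |A| = M := (hMdef.trans hM1).symm
          have hAne : A ≠ 0 := fun h => by rw [h, abs_zero] at hAM; exact hM.ne hAM
          have := pairing_upper (v := v) (a := 0) (b := 1) (c := 2) (d := 3)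
            (fun F => by rw [Fin.prod_univ_four]; ring)
            (left_ne_zero_of_mul hAne) (right_ne_zero_of_mul hAne)
          rwa [← hAdef, hAM] at this
        · rcases max_choice |B| |C| with hM2 | hM2
          · have hBM : |B| = M := by rw [hMdef, hM1, hM2]
            have hBne : B ≠ 0 := fun h => by rw [h, abs_zero] at hBM; exact hM.ne hBM
            have := pairing_upper (v := v) (a := 0) (b := 2) (c := 1) (d := 3)
              (fun F => by rw [Fin.prod_univ_four]; ring)
              (left_ne_zero_of_mul hBne) (right_ne_zero_of_mul hBne)
            rwa [← hBdef, hBM] at this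
          · have hCM : |C| = M := by rw [hMdef, hM1, hM2]
            have hCne : C ≠ 0 := fun h => by rw [h, abs_zero] at hCM; exact hM.ne hCM
            have := pairing_upper (v := v) (a := 0) (b := 3) (c := 1) (d := 2)
              (fun F => by rw [Fin.prod_univ_four]; ring)
              (left_ne_zero_of_mul hCne) (right_ne_zero_of_mul hCne)
            rwa [← hCdef, hCM] at this
      calc (brascampLiebRankOne v (fun _ => (1:ℝ)/2)) ^ 2
          ≤ (((1 : ℝ≥0∞) / ENNReal.ofReal M) ^ ((1:ℝ)/2)) ^ 2 := by
            rw [pow_two, pow_two]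
            exact mul_le_mul' key key
        _ = 1 / ENNReal.ofReal M := by
            rw [← ENNReal.rpow_natCast (((1 : ℝ≥0∞) / ENNReal.ofReal M) ^ ((1:ℝ)/2)) 2,
              ← ENNReal.rpow_mul]
            norm_num
    · -- lower bound
      have key : ∀ n : ℕ, ENNReal.ofReal (1 / (M + 1 / (n + 1)))
          ≤ (brascampLiebRankOne v (fun _ => (1:ℝ)/2)) ^ 2 := by
        intro n
        have hεpos : (0:ℝ) < 1 / (n + 1) := by positivity
        obtain ⟨t, ht, hone, hDle⟩ := D_small v hεpos
        set Dex : ℝ := (t 0 * t 1 * detv (v 0) (v 1) ^ 2 + t 0 * t 2 * detv (v 0) (v 2) ^ 2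
          + t 0 * t 3 * detv (v 0) (v 3) ^ 2 + t 1 * t 2 * detv (v 1) (v 2) ^ 2
          + t 1 * t 3 * detv (v 1) (v 3) ^ 2 + t 2 * t 3 * detv (v 2) (v 3) ^ 2) / 4 with hDex
        have hterm : ∀ i j : Fin 4, 0 ≤ t i * t j * detv (v i) (v j) ^ 2 :=
          fun i j => mul_nonneg (mul_pos (ht i) (ht j)).le (sq_nonneg _)
        have hDpos : 0 < Dex := by
          have hABC : A ≠ 0 ∨ B ≠ 0 ∨ C ≠ 0 := by
            by_contra h
            push_neg at h
            obtain ⟨h1, h2, h3⟩ := h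
            rw [hMdef, h1, h2, h3] at hM
            simp at hM
          have sq_pos : ∀ i j : Fin 4, detv (v i) (v j) ≠ 0 →
              0 < t i * t j * detv (v i) (v j) ^ 2 :=
            fun i j h => by
              rw [← sq_abs (detv (v i) (v j))]
              exact mul_pos (mul_pos (ht i) (ht j)) (pow_pos (abs_pos.2 h) 2)
          rcases hABC with h | h | h
          · have := sq_pos 0 1 (left_ne_zero_of_mul h)
            have h01 := hterm 0 2; have h02 := hterm 0 3; have h03 := hterm 1 2
            have h04 := hterm 1 3; have h05 := hterm 2 3
            rw [hDex]; linarith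
          · have := sq_pos 0 2 (left_ne_zero_of_mul h)
            have h01 := hterm 0 1; have h02 := hterm 0 3; have h03 := hterm 1 2
            have h04 := hterm 1 3; have h05 := hterm 2 3
            rw [hDex]; linarith
          · have := sq_pos 0 3 (left_ne_zero_of_mul h)
            have h01 := hterm 0 1; have h02 := hterm 0 2; have h03 := hterm 1 2
            have h04 := hterm 1 3; have h05 := hterm 2 3
            rw [hDex]; linarith
        have hDle' : Dex ≤ M + 1 / (n + 1) := by
          rw [hDex]
          calc _ ≤ (|A| + |B| + |C|) / 2 + 1 / (n + 1) := hDle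
            _ = M + 1 / (n + 1) := by rw [hsum]; ring
        have hBL := gaussian_lower v t ht hone hDex hDpos
        calc ENNReal.ofReal (1 / (M + 1 / (n + 1)))
            ≤ ENNReal.ofReal (1 / Dex) := by
              apply ENNReal.ofReal_le_ofReal
              exact one_div_le_one_div_of_le hDpos hDle'
          _ = (ENNReal.ofReal (1 / Real.sqrt Dex)) ^ 2 := by
              rw [← ENNReal.ofReal_pow (by positivity)]
              congr 1
              rw [div_pow, one_pow, Real.sq_sqrt hDpos.le]
          _ ≤ (brascampLiebRankOne v (fun _ => (1:ℝ)/2)) ^ 2 := by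
              rw [pow_two, pow_two]
              exact mul_le_mul' hBL hBL
      have htend : Filter.Tendsto (fun n : ℕ => ENNReal.ofReal (1 / (M + 1 / (n + 1))))
          Filter.atTop (nhds (ENNReal.ofReal (1 / M))) := by
        apply ENNReal.tendsto_ofReal
        have h1 : Filter.Tendsto (fun n : ℕ => M + 1 / ((n:ℝ) + 1)) Filter.atTop
            (nhds (M + 0)) :=
          Filter.Tendsto.add tendsto_const_nhds tendsto_one_div_add_atTop_nhds_zero_nat
        rw [add_zero] at h1
        have h2 := h1.inv₀ hM.ne'
        simpa [one_div] using h2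
      have h3 : ENNReal.ofReal (1 / M) = 1 / ENNReal.ofReal M := by
        rw [one_div, one_div, ENNReal.ofReal_inv_of_pos hM]
      have := le_of_tendsto' htend key
      rwa [h3] at this
end

section
/- Let a ∈ ℝ with a ≠ −1, and let f₁, f₂, f₃, f₄ : ℝ → [0,∞] be measurable. Then ∫_{ℝ²} f₁(x)^{1/2} f₂(y)^{1/2} f₃(x − y)^{1/2} f₄(x + a·y)^{1/2} dx dy ≤ |a + 1|^{−1/2} ∏_{i=1}^4 (∫_ℝ f_i)^{1/2}, where all integrals are with respect to Lebesgue measure and both sides are elements of [0,∞]. -/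
open MeasureTheory ENNReal

lemma aux_scale (a : ℝ) (ha : a + 1 ≠ 0) (f₄ : ℝ → ℝ≥0∞) (h₄ : Measurable f₄) (u : ℝ) :
    ∫⁻ y, f₄ (u + (a + 1) * y) = ENNReal.ofReal |a + 1|⁻¹ * ∫⁻ z, f₄ z := by
  have hg : Measurable fun z : ℝ => f₄ (u + z) := h₄.comp (measurable_const.add measurable_id)
  calc ∫⁻ y, f₄ (u + (a + 1) * y)
      = ∫⁻ z, f₄ (u + z) ∂(Measure.map (fun y : ℝ => (a + 1) * y) volume) :=
        (lintegral_map hg (measurable_id.const_mul (a + 1))).symm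
    _ = ENNReal.ofReal |(a + 1)⁻¹| * ∫⁻ z, f₄ (u + z) := by
        rw [Real.map_volume_mul_left ha, lintegral_smul_measure, smul_eq_mul]
    _ = ENNReal.ofReal |a + 1|⁻¹ * ∫⁻ z, f₄ z := by
        rw [abs_inv]
        congr 1
        calc ∫⁻ z, f₄ (u + z) = ∫⁻ z, f₄ (z + u) := by
              refine lintegral_congr fun z => by rw [add_comm]
          _ = ∫⁻ z, f₄ z := lintegral_add_right_eq_self f₄ u

lemma aux34 (a : ℝ) (ha : a + 1 ≠ 0) (f₃ f₄ : ℝ → ℝ≥0∞)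
    (h₃ : Measurable f₃) (h₄ : Measurable f₄) :
    ∫⁻ z : ℝ × ℝ, f₃ (z.1 - z.2) * f₄ (z.1 + a * z.2) =
      ENNReal.ofReal |a + 1|⁻¹ * ((∫⁻ y, f₃ y) * ∫⁻ y, f₄ y) := by
  have hm : Measurable fun z : ℝ × ℝ => f₃ (z.1 - z.2) * f₄ (z.1 + a * z.2) :=
    (h₃.comp (measurable_fst.sub measurable_snd)).mul
      (h₄.comp (measurable_fst.add (measurable_snd.const_mul a)))
  have h0 : (volume : Measure (ℝ × ℝ)) = (volume : Measure ℝ).prod volume := rfl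
  rw [h0, lintegral_prod_symm _ hm.aemeasurable]
  have step1 : ∀ y : ℝ, (∫⁻ x, f₃ (x - y) * f₄ (x + a * y)) =
      ∫⁻ u, f₃ u * f₄ (u + (a + 1) * y) := by
    intro y
    rw [← lintegral_add_right_eq_self (fun x => f₃ (x - y) * f₄ (x + a * y)) y]
    refine lintegral_congr fun u => ?_
    have e1 : u + y - y = u := by ring
    have e2 : u + y + a * y = u + (a + 1) * y := by ring
    simp only [e1, e2]
  simp only [step1]
  have hswap : (∫⁻ y, ∫⁻ u, f₃ u * f₄ (u + (a + 1) * y)) =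
      ∫⁻ u, ∫⁻ y, f₃ u * f₄ (u + (a + 1) * y) := by
    refine (lintegral_lintegral_swap ?_).symm
    exact ((h₃.comp measurable_fst).mul
      (h₄.comp (measurable_fst.add (measurable_snd.const_mul (a + 1))))).aemeasurable
  rw [hswap]
  have : ∀ u : ℝ, (∫⁻ y, f₃ u * f₄ (u + (a + 1) * y)) =
      f₃ u * (ENNReal.ofReal |a + 1|⁻¹ * ∫⁻ z, f₄ z) := by
    intro u
    have hm4 : Measurable fun y : ℝ => f₄ (u + (a + 1) * y) := by fun_prop
    rw [lintegral_const_mul _ hm4, aux_scale a ha f₄ h₄ u]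
  simp only [this]
  rw [lintegral_mul_const _ h₃]
  ring

/-- For `a ≠ −1` and measurable `f₁, f₂, f₃, f₄ : ℝ → [0,∞]`,
`∫_{ℝ²} f₁(x)^{1/2} f₂(y)^{1/2} f₃(x−y)^{1/2} f₄(x+ay)^{1/2} dx dy
  ≤ |a+1|^{−1/2} ∏ᵢ (∫ fᵢ)^{1/2}`. -/
theorem lintegral_four_half_powers_le (a : ℝ) (ha : a ≠ -1)
    (f₁ f₂ f₃ f₄ : ℝ → ℝ≥0∞) (h₁ : Measurable f₁) (h₂ : Measurable f₂)
    (h₃ : Measurable f₃) (h₄ : Measurable f₄) :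
    ∫⁻ z : ℝ × ℝ, (f₁ z.1) ^ ((1:ℝ)/2) * (f₂ z.2) ^ ((1:ℝ)/2) *
        (f₃ (z.1 - z.2)) ^ ((1:ℝ)/2) * (f₄ (z.1 + a * z.2)) ^ ((1:ℝ)/2) ≤
      ENNReal.ofReal (|a + 1| ^ (-(1:ℝ)/2)) *
        ((∫⁻ y, f₁ y) ^ ((1:ℝ)/2) * (∫⁻ y, f₂ y) ^ ((1:ℝ)/2) *
          (∫⁻ y, f₃ y) ^ ((1:ℝ)/2) * (∫⁻ y, f₄ y) ^ ((1:ℝ)/2)) := by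
  have ha0 : a + 1 ≠ 0 := fun h => ha (by linarith)
  set G : ℝ × ℝ → ℝ≥0∞ := fun z => (f₁ z.1) ^ ((1:ℝ)/2) * (f₂ z.2) ^ ((1:ℝ)/2) with hG
  set H : ℝ × ℝ → ℝ≥0∞ := fun z =>
    (f₃ (z.1 - z.2)) ^ ((1:ℝ)/2) * (f₄ (z.1 + a * z.2)) ^ ((1:ℝ)/2) with hH
  have hGm : Measurable G := ((h₁.comp measurable_fst).pow_const _).mul
    ((h₂.comp measurable_snd).pow_const _)
  have hHm : Measurable H := ((h₃.comp (measurable_fst.sub measurable_snd)).pow_const _).mul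
    ((h₄.comp (measurable_fst.add (measurable_snd.const_mul a))).pow_const _)
  have hpq : Real.HolderConjugate 2 2 := Real.HolderConjugate.two_two
  have hCS := ENNReal.lintegral_mul_le_Lp_mul_Lq (volume : Measure (ℝ × ℝ)) hpq
    hGm.aemeasurable hHm.aemeasurable
  have hsq : ∀ x : ℝ≥0∞, (x ^ ((1:ℝ)/2)) ^ (2:ℝ) = x := by
    intro x
    rw [← ENNReal.rpow_mul]
    norm_num
  have hGsq : ∀ z : ℝ × ℝ, G z ^ (2:ℝ) = f₁ z.1 * f₂ z.2 := by
    intro z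
    rw [hG, ENNReal.mul_rpow_of_nonneg _ _ (by norm_num : (0:ℝ) ≤ 2), hsq, hsq]
  have hHsq : ∀ z : ℝ × ℝ, H z ^ (2:ℝ) = f₃ (z.1 - z.2) * f₄ (z.1 + a * z.2) := by
    intro z
    rw [hH, ENNReal.mul_rpow_of_nonneg _ _ (by norm_num : (0:ℝ) ≤ 2), hsq, hsq]
  have hGint : (∫⁻ z : ℝ × ℝ, G z ^ (2:ℝ)) = (∫⁻ y, f₁ y) * ∫⁻ y, f₂ y := by
    simp only [hGsq]
    exact lintegral_prod_mul h₁.aemeasurable h₂.aemeasurable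
  have hHint : (∫⁻ z : ℝ × ℝ, H z ^ (2:ℝ)) =
      ENNReal.ofReal |a + 1|⁻¹ * ((∫⁻ y, f₃ y) * ∫⁻ y, f₄ y) := by
    simp only [hHsq]
    exact aux34 a ha0 f₃ f₄ h₃ h₄
  have hLHS : (∫⁻ z : ℝ × ℝ, (f₁ z.1) ^ ((1:ℝ)/2) * (f₂ z.2) ^ ((1:ℝ)/2) *
      (f₃ (z.1 - z.2)) ^ ((1:ℝ)/2) * (f₄ (z.1 + a * z.2)) ^ ((1:ℝ)/2)) =
      ∫⁻ z : ℝ × ℝ, (G * H) z := by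
    refine lintegral_congr fun z => ?_
    simp only [Pi.mul_apply, hG, hH]
    ring
  rw [hLHS]
  refine hCS.trans (le_of_eq ?_)
  rw [hGint, hHint]
  have hc : ENNReal.ofReal (|a + 1| ^ (-(1:ℝ)/2)) = (ENNReal.ofReal |a + 1|⁻¹) ^ ((1:ℝ)/2) := by
    rw [ENNReal.ofReal_rpow_of_pos (inv_pos.mpr (abs_pos.mpr ha0))]
    congr 1
    rw [Real.inv_rpow (abs_nonneg _), ← Real.rpow_neg (abs_nonneg _)]
    norm_num
  rw [hc]
  rw [ENNReal.mul_rpow_of_nonneg _ _ (by norm_num : (0:ℝ) ≤ 1/2),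
    ENNReal.mul_rpow_of_nonneg _ _ (by norm_num : (0:ℝ) ≤ 1/2),
    ENNReal.mul_rpow_of_nonneg _ _ (by norm_num : (0:ℝ) ≤ 1/2)]
  ring
end

section
/- For a ∈ ℝ with a ∉ {0, −1}, consider the four linear maps from ℝ² to ℝ given by L₁(x,y) = x, L₂(x,y) = y, L₃(x,y) = x − y, L₄(x,y) = x + a·y, and exponents p = (1/2, 1/2, 1/2, 1/2). Then BL(L(a), p) = min{ 1, |a|^{−1/2}, |a + 1|^{−1/2} }. -/
open MeasureTheory ENNReal

section Helpers
open Real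

lemma lint_affine (g : ℝ → ℝ≥0∞) (hg : Measurable g) {c : ℝ} (hc : c ≠ 0) (b : ℝ) :
    ∫⁻ y, g (b + c * y) = ENNReal.ofReal |c|⁻¹ * ∫⁻ y, g y := by
  have h1 : ∫⁻ y, g (b + c * y) = ∫⁻ z, g (b + z) ∂(Measure.map (c * ·) volume) := by
    rw [lintegral_map (f := fun z => g (b + z))
      (hg.comp (measurable_const.add measurable_id)) (measurable_const_mul c)]
  rw [h1, Real.map_volume_mul_left hc, lintegral_smul_measure, abs_inv,
    lintegral_add_left_eq_self (fun z => g z) b, smul_eq_mul]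

lemma lint_transl (g : ℝ → ℝ≥0∞) (hg : Measurable g) (b : ℝ) :
    ∫⁻ y, g (b + y) = ∫⁻ y, g y := by
  simpa using lint_affine g hg (one_ne_zero) b

lemma lint_refl (g : ℝ → ℝ≥0∞) (hg : Measurable g) (b : ℝ) :
    ∫⁻ y, g (b - y) = ∫⁻ y, g y := by
  have := lint_affine g hg (c := -1) (by norm_num) b
  simpa [sub_eq_add_neg] using this

lemma pair_E5 (g h : ℝ → ℝ≥0∞) (hg : Measurable g) (hh : Measurable h) {c : ℝ} (hc : c ≠ 0) :
    ∫⁻ p : ℝ × ℝ, g p.1 * h (p.1 + c * p.2)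
      = ENNReal.ofReal |c|⁻¹ * ((∫⁻ y, g y) * ∫⁻ y, h y) := by
  have hm : Measurable fun p : ℝ × ℝ => g p.1 * h (p.1 + c * p.2) :=
    (hg.comp measurable_fst).mul
      (hh.comp (measurable_fst.add (measurable_snd.const_mul c)))
  rw [Measure.volume_eq_prod, lintegral_prod _ hm.aemeasurable]
  calc ∫⁻ x, ∫⁻ y, g x * h (x + c * y)
      = ∫⁻ x, g x * ∫⁻ y, h (x + c * y) := by
        refine lintegral_congr fun x => ?_
        exact lintegral_const_mul (g x) (hh.comp (measurable_const.add (measurable_id.const_mul c)))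
    _ = ∫⁻ x, g x * (ENNReal.ofReal |c|⁻¹ * ∫⁻ y, h y) := by
        refine lintegral_congr fun x => ?_
        rw [lint_affine h hh hc x]
    _ = ENNReal.ofReal |c|⁻¹ * ((∫⁻ y, g y) * ∫⁻ y, h y) := by
        rw [lintegral_mul_const _ hg]; ring

lemma pair_E1 (g h : ℝ → ℝ≥0∞) (hg : Measurable g) (hh : Measurable h) :
    ∫⁻ p : ℝ × ℝ, g p.1 * h (p.1 - p.2) = (∫⁻ y, g y) * ∫⁻ y, h y := by
  have hm : Measurable fun p : ℝ × ℝ => g p.1 * h (p.1 - p.2) :=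
    (hg.comp measurable_fst).mul (hh.comp (measurable_fst.sub measurable_snd))
  rw [Measure.volume_eq_prod, lintegral_prod _ hm.aemeasurable]
  calc ∫⁻ x, ∫⁻ y, g x * h (x - y)
      = ∫⁻ x, g x * ∫⁻ y, h (x - y) := lintegral_congr fun x =>
        lintegral_const_mul (g x) (hh.comp (measurable_const.sub measurable_id))
    _ = ∫⁻ x, g x * ∫⁻ y, h y := lintegral_congr fun x => by rw [lint_refl h hh x]
    _ = _ := lintegral_mul_const _ hg

lemma pair_E6 (g h : ℝ → ℝ≥0∞) (hg : Measurable g) (hh : Measurable h) :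
    ∫⁻ p : ℝ × ℝ, g p.2 * h (p.1 - p.2) = (∫⁻ y, g y) * ∫⁻ y, h y := by
  have hm : Measurable fun p : ℝ × ℝ => g p.2 * h (p.1 - p.2) :=
    (hg.comp measurable_snd).mul (hh.comp (measurable_fst.sub measurable_snd))
  rw [Measure.volume_eq_prod, lintegral_prod_symm _ hm.aemeasurable]
  calc ∫⁻ y, ∫⁻ x, g y * h (x - y)
      = ∫⁻ y, g y * ∫⁻ x, h (x - y) := lintegral_congr fun y =>
        lintegral_const_mul (g y) (hh.comp (measurable_id.sub measurable_const))
    _ = ∫⁻ y, g y * ∫⁻ x, h x := lintegral_congr fun y => by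
        have : ∀ x : ℝ, h (x - y) = h (-y + x) := fun x => by ring_nf
        simp_rw [this, lint_transl h hh (-y)]
    _ = _ := lintegral_mul_const _ hg

lemma pair_E2 (g h : ℝ → ℝ≥0∞) (hg : Measurable g) (hh : Measurable h) (c : ℝ) :
    ∫⁻ p : ℝ × ℝ, g p.2 * h (p.1 + c * p.2) = (∫⁻ y, g y) * ∫⁻ y, h y := by
  have hm : Measurable fun p : ℝ × ℝ => g p.2 * h (p.1 + c * p.2) :=
    (hg.comp measurable_snd).mul
      (hh.comp (measurable_fst.add (measurable_snd.const_mul c)))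
  rw [Measure.volume_eq_prod, lintegral_prod_symm _ hm.aemeasurable]
  calc ∫⁻ y, ∫⁻ x, g y * h (x + c * y)
      = ∫⁻ y, g y * ∫⁻ x, h (x + c * y) := lintegral_congr fun y =>
        lintegral_const_mul (g y) (hh.comp (measurable_id.add measurable_const))
    _ = ∫⁻ y, g y * ∫⁻ x, h x := lintegral_congr fun y => by
        have : ∀ x : ℝ, h (x + c * y) = h (c * y + x) := fun x => by ring_nf
        simp_rw [this, lint_transl h hh (c * y)]
    _ = _ := lintegral_mul_const _ hg

lemma pair_E3 (g h : ℝ → ℝ≥0∞) (hg : Measurable g) (hh : Measurable h) :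
    ∫⁻ p : ℝ × ℝ, g p.1 * h p.2 = (∫⁻ y, g y) * ∫⁻ y, h y := by
  rw [Measure.volume_eq_prod]
  exact lintegral_prod_mul hg.aemeasurable hh.aemeasurable

lemma pair_E4 (g h : ℝ → ℝ≥0∞) (hg : Measurable g) (hh : Measurable h) {c : ℝ}
    (hc : c ≠ -1) :
    ∫⁻ p : ℝ × ℝ, g (p.1 - p.2) * h (p.1 + c * p.2)
      = ENNReal.ofReal |1 + c|⁻¹ * ((∫⁻ y, g y) * ∫⁻ y, h y) := by
  have h1c : (1 : ℝ) + c ≠ 0 := by intro h; apply hc; linarith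
  have hm : Measurable fun p : ℝ × ℝ => g (p.1 - p.2) * h (p.1 + c * p.2) :=
    (hg.comp (measurable_fst.sub measurable_snd)).mul
      (hh.comp (measurable_fst.add (measurable_snd.const_mul c)))
  have hm2 : Measurable fun p : ℝ × ℝ => g p.1 * h (p.1 + (1 + c) * p.2) :=
    (hg.comp measurable_fst).mul
      (hh.comp (measurable_fst.add (measurable_snd.const_mul (1 + c))))
  rw [Measure.volume_eq_prod, lintegral_prod_symm _ hm.aemeasurable]
  calc ∫⁻ y, ∫⁻ x, g (x - y) * h (x + c * y)
      = ∫⁻ y, ∫⁻ x, g x * h (x + (1 + c) * y) := by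
        refine lintegral_congr fun y => ?_
        have key : ∀ x : ℝ, g (x - y) * h (x + c * y)
            = (fun x => g x * h (x + (1 + c) * y)) (-y + x) := fun x => by
          simp only; ring_nf
        simp_rw [key]
        exact lint_transl _ ((hg.mul (hh.comp (measurable_id.add measurable_const)))) (-y)
    _ = ∫⁻ p : ℝ × ℝ, g p.1 * h (p.1 + (1 + c) * p.2) ∂(volume.prod volume) := by
        rw [lintegral_prod_symm _ hm2.aemeasurable]
    _ = _ := by rw [← Measure.volume_eq_prod]; exact pair_E5 g h hg hh h1c

lemma my_CS {α : Type*} [MeasurableSpace α] {μ : Measure α} (F G : α → ℝ≥0∞)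
    (hF : Measurable F) (hG : Measurable G) :
    ∫⁻ p, (F p) ^ ((1:ℝ)/2) * (G p) ^ ((1:ℝ)/2) ∂μ
      ≤ (∫⁻ p, F p ∂μ) ^ ((1:ℝ)/2) * (∫⁻ p, G p ∂μ) ^ ((1:ℝ)/2) := by
  have hpq : (2:ℝ).HolderConjugate 2 := by constructor <;> norm_num
  have h := ENNReal.lintegral_mul_le_Lp_mul_Lq μ hpq
    (hF.pow_const ((1:ℝ)/2)).aemeasurable (hG.pow_const ((1:ℝ)/2)).aemeasurable
  simp only [Pi.mul_apply] at h
  have e : ∀ x : ℝ≥0∞, (x ^ ((1:ℝ)/2)) ^ (2:ℝ) = x := fun x => by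
    rw [← ENNReal.rpow_mul]; norm_num
  simp only [e] at h
  convert h using 2 <;> norm_num

lemma gauss_meas (c : ℝ) : Measurable fun y : ℝ => ENNReal.ofReal (rexp (-(c * y ^ 2))) := by
  fun_prop

lemma lint_gauss {c : ℝ} (hc : 0 < c) :
    ∫⁻ y, ENNReal.ofReal (rexp (-(c * y ^ 2))) = ENNReal.ofReal (Real.sqrt (π / c)) := by
  rw [← ofReal_integral_eq_lintegral_ofReal]
  · congr 1
    simpa [neg_mul] using integral_gaussian c
  · simpa [neg_mul] using integrable_exp_neg_mul_sq hc
  · exact Filter.Eventually.of_forall fun x => (Real.exp_pos _).le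

lemma lint_gauss2 {al be ga : ℝ} (hal : 0 < al) (hD : 0 < al * ga - be ^ 2) :
    ∫⁻ p : ℝ × ℝ, ENNReal.ofReal (rexp (-(al * p.1 ^ 2 + 2 * be * p.1 * p.2 + ga * p.2 ^ 2)))
      = ENNReal.ofReal (π / Real.sqrt (al * ga - be ^ 2)) := by
  set D : ℝ := al * ga - be ^ 2 with hDdef
  have hm : Measurable fun p : ℝ × ℝ =>
      ENNReal.ofReal (rexp (-(al * p.1 ^ 2 + 2 * be * p.1 * p.2 + ga * p.2 ^ 2))) := by
    fun_prop
  rw [Measure.volume_eq_prod, lintegral_prod_symm _ hm.aemeasurable]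
  have key : ∀ y : ℝ, ∫⁻ x, ENNReal.ofReal (rexp (-(al * x ^ 2 + 2 * be * x * y + ga * y ^ 2)))
      = ENNReal.ofReal (rexp (-((D / al) * y ^ 2))) * ENNReal.ofReal (Real.sqrt (π / al)) := by
    intro y
    have expand : ∀ x : ℝ, al * x ^ 2 + 2 * be * x * y + ga * y ^ 2
        = (D / al) * y ^ 2 + al * ((be / al) * y + x) ^ 2 := fun x => by
      field_simp [hDdef]; ring
    have : ∀ x : ℝ, ENNReal.ofReal (rexp (-(al * x ^ 2 + 2 * be * x * y + ga * y ^ 2)))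
        = ENNReal.ofReal (rexp (-((D / al) * y ^ 2)))
          * (fun z => ENNReal.ofReal (rexp (-(al * z ^ 2)))) ((be / al) * y + 1 * x) := by
      intro x
      rw [← ENNReal.ofReal_mul (Real.exp_pos _).le, ← Real.exp_add]
      simp only [one_mul]
      rw [expand x]; ring_nf
    simp_rw [this]
    rw [lintegral_const_mul _ (show Measurable fun x : ℝ =>
      ENNReal.ofReal (rexp (-(al * ((be / al) * y + 1 * x) ^ 2))) by fun_prop)]
    congr 1
    have h2 := lint_affine (fun z => ENNReal.ofReal (rexp (-(al * z ^ 2)))) (gauss_meas al)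
      (c := 1) one_ne_zero ((be / al) * y)
    simpa [lint_gauss hal] using h2
  simp_rw [key]
  rw [lintegral_mul_const _ (gauss_meas (D / al)),
    lint_gauss (div_pos hD hal), ← ENNReal.ofReal_mul (Real.sqrt_nonneg _)]
  congr 1
  rw [← Real.sqrt_mul (by positivity),
    show π / (D / al) * (π / al) = π ^ 2 / D by field_simp,
    Real.sqrt_div (by positivity) D, Real.sqrt_sq Real.pi_pos.le]

lemma numer_eq (a : ℝ) (f : Fin 4 → ℝ → ℝ≥0∞) :
    (∫⁻ x : Fin 2 → ℝ, ∏ j, (f j (∑ i, (![![1, 0], ![0, 1], ![1, -1], ![1, a]] j) i * x i))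
        ^ ((1:ℝ)/2))
      = ∫⁻ p : ℝ × ℝ, (f 0 p.1) ^ ((1:ℝ)/2) * (f 1 p.2) ^ ((1:ℝ)/2)
          * (f 2 (p.1 - p.2)) ^ ((1:ℝ)/2) * (f 3 (p.1 + a * p.2)) ^ ((1:ℝ)/2) := by
  have hmp : MeasurePreserving (MeasurableEquiv.finTwoArrow.symm : ℝ × ℝ ≃ᵐ (Fin 2 → ℝ))
      volume volume :=
    (volume_preserving_finTwoArrow ℝ).symm MeasurableEquiv.finTwoArrow
  rw [← hmp.lintegral_comp_emb (MeasurableEquiv.measurableEmbedding _)]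
  refine lintegral_congr fun p => ?_
  simp [Fin.prod_univ_four, Fin.sum_univ_two, MeasurableEquiv.finTwoArrow, Matrix.vecHead,
    Matrix.vecTail, Function.comp, sub_eq_add_neg]

lemma min_ofReal (s t : ℝ) :
    min (ENNReal.ofReal s) (ENNReal.ofReal t) = ENNReal.ofReal (min s t) := by
  rcases le_total s t with h | h
  · rw [min_eq_left (ENNReal.ofReal_le_ofReal h), min_eq_left h]
  · rw [min_eq_right (ENNReal.ofReal_le_ofReal h), min_eq_right h]

lemma inv_sqrt_min {x y : ℝ} (hx : 0 < x) (_hy : 0 < y) :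
    min (Real.sqrt x)⁻¹ (Real.sqrt y)⁻¹ = (Real.sqrt (max x y))⁻¹ := by
  rcases le_total x y with h | h
  · rw [max_eq_right h, min_eq_right
      (inv_anti₀ (Real.sqrt_pos.2 hx) (Real.sqrt_le_sqrt h))]
  · rw [max_eq_left h, min_eq_left
      (inv_anti₀ (Real.sqrt_pos.2 _hy) (Real.sqrt_le_sqrt h))]

lemma min_inv_sqrt_max {u v : ℝ} (hu : 0 < u) (hv : 0 < v) :
    min 1 (min (u ^ (-(1:ℝ)/2)) (v ^ (-(1:ℝ)/2))) = (Real.sqrt (max 1 (max u v)))⁻¹ := by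
  have key : ∀ x : ℝ, 0 < x → x ^ (-(1:ℝ)/2) = (Real.sqrt x)⁻¹ := fun x hx => by
    rw [show (-(1:ℝ)/2) = -(1/2) by norm_num, Real.rpow_neg hx.le, Real.sqrt_eq_rpow]
  rw [key u hu, key v hv, inv_sqrt_min hu hv,
    show (1:ℝ) = (Real.sqrt 1)⁻¹ by simp,
    inv_sqrt_min one_pos (lt_max_iff.2 (Or.inl hu))]
  simp

lemma ofReal_inv_half_pow {t : ℝ} (ht : 0 < t) :
    (ENNReal.ofReal t⁻¹) ^ ((1:ℝ)/2) = ENNReal.ofReal (t ^ (-(1:ℝ)/2)) := by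
  rw [ENNReal.ofReal_rpow_of_pos (inv_pos.2 ht)]
  congr 1
  rw [← Real.rpow_neg_one t, ← Real.rpow_mul ht.le]
  norm_num

end Helpers

/-- For `a ∉ {0, −1}` and the data `L₁(x,y) = x`, `L₂(x,y) = y`, `L₃(x,y) = x − y`,
`L₄(x,y) = x + a·y` with all exponents `1/2`, the Brascamp–Lieb constant equals
`min { 1, |a|^{-1/2}, |a+1|^{-1/2} }`. -/
theorem brascampLieb_four_min_formula (a : ℝ) (ha0 : a ≠ 0) (ha1 : a ≠ -1) :
    brascampLiebRankOne ![![1, 0], ![0, 1], ![1, -1], ![1, a]] (fun _ : Fin 4 => (1:ℝ)/2)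
      = ENNReal.ofReal (min 1 (min (|a| ^ (-(1:ℝ)/2)) (|a + 1| ^ (-(1:ℝ)/2)))) := by
  have ha1' : a + 1 ≠ 0 := by intro h; exact ha1 (by linarith)
  have hu0 : (0:ℝ) < |a| := abs_pos.2 ha0
  have hv0 : (0:ℝ) < |a + 1| := abs_pos.2 ha1'
  unfold brascampLiebRankOne
  apply le_antisymm
  · -- Upper bound
    refine iSup_le fun f => iSup_le fun hm => iSup_le fun hpos => iSup_le fun hfin => ?_
    simp only [Nat.succ_eq_add_one, Nat.reduceAdd]
    rw [numer_eq a f]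
    simp only [Fin.prod_univ_four]
    set e : ℝ := (1:ℝ)/2 with he
    have he0 : (0:ℝ) ≤ e := by norm_num
    set I : Fin 4 → ℝ≥0∞ := fun j => ∫⁻ y, f j y with hI
    have hIe0 : ∀ j, I j ^ e ≠ 0 := fun j => (ENNReal.rpow_pos (hpos j) (hfin j).ne).ne'
    have hIet : ∀ j, I j ^ e ≠ ⊤ := fun j =>
      ENNReal.rpow_ne_top_of_nonneg he0 (hfin j).ne
    set Dden : ℝ≥0∞ := I 0 ^ e * I 1 ^ e * I 2 ^ e * I 3 ^ e with hDden
    have hD0 : Dden ≠ 0 := by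
      simp only [hDden]
      exact mul_ne_zero (mul_ne_zero (mul_ne_zero (hIe0 0) (hIe0 1)) (hIe0 2)) (hIe0 3)
    have hDt : Dden ≠ ⊤ := by
      simp only [hDden]
      exact ENNReal.mul_ne_top (ENNReal.mul_ne_top (ENNReal.mul_ne_top (hIet 0) (hIet 1))
        (hIet 2)) (hIet 3)
    set N : ℝ≥0∞ := ∫⁻ p : ℝ × ℝ, (f 0 p.1) ^ e * (f 1 p.2) ^ e
          * (f 2 (p.1 - p.2)) ^ e * (f 3 (p.1 + a * p.2)) ^ e with hN
    have r1 : N / Dden ≤ 1 := by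
      rw [ENNReal.div_le_iff hD0 hDt, one_mul]
      calc N = ∫⁻ p : ℝ × ℝ, (f 0 p.1 * f 2 (p.1 - p.2)) ^ e
            * (f 1 p.2 * f 3 (p.1 + a * p.2)) ^ e := by
            refine lintegral_congr fun p => ?_
            rw [ENNReal.mul_rpow_of_nonneg _ _ he0, ENNReal.mul_rpow_of_nonneg _ _ he0]
            ring
        _ ≤ (∫⁻ p : ℝ × ℝ, f 0 p.1 * f 2 (p.1 - p.2)) ^ e
            * (∫⁻ p : ℝ × ℝ, f 1 p.2 * f 3 (p.1 + a * p.2)) ^ e := by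
            apply my_CS
            · exact ((hm 0).comp measurable_fst).mul
                ((hm 2).comp (measurable_fst.sub measurable_snd))
            · exact ((hm 1).comp measurable_snd).mul
                ((hm 3).comp (measurable_fst.add (measurable_snd.const_mul a)))
        _ = (I 0 * I 2) ^ e * (I 1 * I 3) ^ e := by
            rw [pair_E1 _ _ (hm 0) (hm 2), pair_E2 _ _ (hm 1) (hm 3) a]
        _ = Dden := by
            rw [ENNReal.mul_rpow_of_nonneg _ _ he0, ENNReal.mul_rpow_of_nonneg _ _ he0, hDden]
            ring
    have r2 : N / Dden ≤ ENNReal.ofReal (|a| ^ (-(1:ℝ)/2)) := by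
      rw [ENNReal.div_le_iff hD0 hDt]
      calc N = ∫⁻ p : ℝ × ℝ, (f 0 p.1 * f 3 (p.1 + a * p.2)) ^ e
            * (f 1 p.2 * f 2 (p.1 - p.2)) ^ e := by
            refine lintegral_congr fun p => ?_
            rw [ENNReal.mul_rpow_of_nonneg _ _ he0, ENNReal.mul_rpow_of_nonneg _ _ he0]
            ring
        _ ≤ (∫⁻ p : ℝ × ℝ, f 0 p.1 * f 3 (p.1 + a * p.2)) ^ e
            * (∫⁻ p : ℝ × ℝ, f 1 p.2 * f 2 (p.1 - p.2)) ^ e := by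
            apply my_CS
            · exact ((hm 0).comp measurable_fst).mul
                ((hm 3).comp (measurable_fst.add (measurable_snd.const_mul a)))
            · exact ((hm 1).comp measurable_snd).mul
                ((hm 2).comp (measurable_fst.sub measurable_snd))
        _ = (ENNReal.ofReal |a|⁻¹ * (I 0 * I 3)) ^ e * (I 1 * I 2) ^ e := by
            rw [pair_E5 _ _ (hm 0) (hm 3) ha0, pair_E6 _ _ (hm 1) (hm 2)]
        _ = ENNReal.ofReal (|a| ^ (-(1:ℝ)/2)) * Dden := by
            rw [ENNReal.mul_rpow_of_nonneg _ _ he0, ENNReal.mul_rpow_of_nonneg _ _ he0,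
              ENNReal.mul_rpow_of_nonneg _ _ he0, he, ofReal_inv_half_pow hu0, hDden]
            ring
    have r3 : N / Dden ≤ ENNReal.ofReal (|a + 1| ^ (-(1:ℝ)/2)) := by
      rw [ENNReal.div_le_iff hD0 hDt]
      calc N = ∫⁻ p : ℝ × ℝ, (f 0 p.1 * f 1 p.2) ^ e
            * (f 2 (p.1 - p.2) * f 3 (p.1 + a * p.2)) ^ e := by
            refine lintegral_congr fun p => ?_
            rw [ENNReal.mul_rpow_of_nonneg _ _ he0, ENNReal.mul_rpow_of_nonneg _ _ he0]
            ring
        _ ≤ (∫⁻ p : ℝ × ℝ, f 0 p.1 * f 1 p.2) ^ e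
            * (∫⁻ p : ℝ × ℝ, f 2 (p.1 - p.2) * f 3 (p.1 + a * p.2)) ^ e := by
            apply my_CS
            · exact ((hm 0).comp measurable_fst).mul ((hm 1).comp measurable_snd)
            · exact ((hm 2).comp (measurable_fst.sub measurable_snd)).mul
                ((hm 3).comp (measurable_fst.add (measurable_snd.const_mul a)))
        _ = (I 0 * I 1) ^ e * (ENNReal.ofReal |1 + a|⁻¹ * (I 2 * I 3)) ^ e := by
            rw [pair_E3 _ _ (hm 0) (hm 1), pair_E4 _ _ (hm 2) (hm 3) ha1]
        _ = ENNReal.ofReal (|a + 1| ^ (-(1:ℝ)/2)) * Dden := by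
            rw [show |1 + a| = |a + 1| by rw [add_comm],
              ENNReal.mul_rpow_of_nonneg _ _ he0, ENNReal.mul_rpow_of_nonneg _ _ he0,
              ENNReal.mul_rpow_of_nonneg _ _ he0, he, ofReal_inv_half_pow hv0, hDden]
            ring
    calc N / Dden ≤ min 1 (min (ENNReal.ofReal (|a| ^ (-(1:ℝ)/2)))
          (ENNReal.ofReal (|a + 1| ^ (-(1:ℝ)/2)))) := le_min r1 (le_min r2 r3)
      _ = ENNReal.ofReal (min 1 (min (|a| ^ (-(1:ℝ)/2)) (|a + 1| ^ (-(1:ℝ)/2)))) := by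
          rw [min_ofReal, ← ENNReal.ofReal_one, min_ofReal]
  · -- Lower bound : Gaussian test functions
    set u : ℝ := |a| with hu
    set v : ℝ := |a + 1| with hv
    set mx : ℝ := max 1 (max u v) with hmx
    have hmx0 : (0:ℝ) < mx := lt_of_lt_of_le one_pos (le_max_left _ _)
    set c : Fin 4 → ℝ := ![v, u * v, u, 1] with hc
    have hc0 : c 0 = v := rfl
    have hc1 : c 1 = u * v := rfl
    have hc2 : c 2 = u := rfl
    have hc3 : c 3 = (1:ℝ) := rfl
    have hcpos : ∀ j, 0 < c j := by
      intro j
      fin_cases j <;> simp [hc, Matrix.cons_val_zero, Matrix.cons_val_one] <;> positivity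
    set F : Fin 4 → ℝ → ℝ≥0∞ := fun j y => ENNReal.ofReal (Real.exp (-(c j * y ^ 2))) with hF
    have hmF : ∀ j, Measurable (F j) := fun j => gauss_meas (c j)
    have hIF : ∀ j, ∫⁻ y, F j y = ENNReal.ofReal (Real.sqrt (Real.pi / c j)) := fun j =>
      lint_gauss (hcpos j)
    have hposF : ∀ j, 0 < ∫⁻ y, F j y := fun j => by
      rw [hIF j]
      exact ENNReal.ofReal_pos.2 (Real.sqrt_pos.2 (div_pos Real.pi_pos (hcpos j)))
    have hfinF : ∀ j, ∫⁻ y, F j y < ⊤ := fun j => by rw [hIF j]; exact ENNReal.ofReal_lt_top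
    refine le_trans (le_of_eq ?_) (le_iSup _ F)
    rw [iSup_pos hmF, iSup_pos hposF, iSup_pos hfinF]
    simp only [Nat.succ_eq_add_one, Nat.reduceAdd]
    rw [numer_eq a F]
    simp only [Fin.prod_univ_four]
    -- numerator
    have hr : ∀ t : ℝ, (ENNReal.ofReal (Real.exp t)) ^ ((1:ℝ)/2)
        = ENNReal.ofReal (Real.exp (t * (1/2))) := fun t => by
      rw [ENNReal.ofReal_rpow_of_pos (Real.exp_pos t), Real.exp_mul]
    have hpoint : ∀ p : ℝ × ℝ, (F 0 p.1) ^ ((1:ℝ)/2) * (F 1 p.2) ^ ((1:ℝ)/2)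
        * (F 2 (p.1 - p.2)) ^ ((1:ℝ)/2) * (F 3 (p.1 + a * p.2)) ^ ((1:ℝ)/2)
        = ENNReal.ofReal (Real.exp (-(((v + u + 1)/2) * p.1 ^ 2
            + 2 * ((a - u)/2) * p.1 * p.2 + ((u * v + u + a ^ 2)/2) * p.2 ^ 2))) := by
      intro p
      simp only [hF, hc0, hc1, hc2, hc3]
      rw [hr, hr, hr, hr, ← ENNReal.ofReal_mul (Real.exp_nonneg _), ← Real.exp_add,
        ← ENNReal.ofReal_mul (Real.exp_nonneg _), ← Real.exp_add,
        ← ENNReal.ofReal_mul (Real.exp_nonneg _), ← Real.exp_add]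
      congr 1
      ring
    have hDval : ((v + u + 1)/2) * ((u * v + u + a ^ 2)/2) - ((a - u)/2) ^ 2
        = u * v * mx := by
      rcases lt_trichotomy a 0 with hneg | h0 | hposa
      · rcases lt_trichotomy a (-1) with hlt | heq | hgt
        · rw [hmx, hu, hv, abs_of_neg hneg, abs_of_neg (by linarith : a + 1 < 0),
            max_eq_left (by linarith : -(a+1) ≤ -a),
            max_eq_right (by linarith : (1:ℝ) ≤ -a)]
          ring
        · exact absurd heq ha1
        · rw [hmx, hu, hv, abs_of_neg hneg, abs_of_pos (by linarith : (0:ℝ) < a + 1),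
            max_eq_left (max_le (by linarith) (by linarith))]
          ring
      · exact absurd h0 ha0
      · rw [hmx, hu, hv, abs_of_pos hposa, abs_of_pos (by linarith : (0:ℝ) < a + 1),
          max_eq_right (by linarith : a ≤ a + 1),
          max_eq_right (by linarith : (1:ℝ) ≤ a + 1)]
        ring
    have hal : (0:ℝ) < (v + u + 1)/2 := by rw [hu, hv]; positivity
    have hD : (0:ℝ) < ((v + u + 1)/2) * ((u * v + u + a ^ 2)/2) - ((a - u)/2) ^ 2 := by
      rw [hDval]; exact mul_pos (mul_pos hu0 hv0) hmx0
    have hnum : ∫⁻ p : ℝ × ℝ, (F 0 p.1) ^ ((1:ℝ)/2) * (F 1 p.2) ^ ((1:ℝ)/2)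
        * (F 2 (p.1 - p.2)) ^ ((1:ℝ)/2) * (F 3 (p.1 + a * p.2)) ^ ((1:ℝ)/2)
        = ENNReal.ofReal (Real.pi / Real.sqrt (u * v * mx)) := by
      simp_rw [hpoint]
      rw [lint_gauss2 hal hD, hDval]
    rw [hnum]
    -- denominator
    have hIFr : ∀ j, (∫⁻ y, F j y) ^ ((1:ℝ)/2)
        = ENNReal.ofReal (Real.sqrt (Real.pi / c j) ^ ((1:ℝ)/2)) := fun j => by
      rw [hIF j, ENNReal.ofReal_rpow_of_pos (Real.sqrt_pos.2 (div_pos Real.pi_pos (hcpos j)))]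
    have hden : (∫⁻ y, F 0 y) ^ ((1:ℝ)/2) * (∫⁻ y, F 1 y) ^ ((1:ℝ)/2)
        * (∫⁻ y, F 2 y) ^ ((1:ℝ)/2) * (∫⁻ y, F 3 y) ^ ((1:ℝ)/2)
        = ENNReal.ofReal (Real.sqrt (Real.pi / v) ^ ((1:ℝ)/2) * Real.sqrt (Real.pi / (u * v)) ^ ((1:ℝ)/2)
            * Real.sqrt (Real.pi / u) ^ ((1:ℝ)/2) * Real.sqrt (Real.pi / 1) ^ ((1:ℝ)/2)) := by
      rw [hIFr 0, hIFr 1, hIFr 2, hIFr 3, hc0, hc1, hc2, hc3,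
        ← ENNReal.ofReal_mul (by positivity), ← ENNReal.ofReal_mul (by positivity),
        ← ENNReal.ofReal_mul (by positivity)]
    rw [hden]
    set d : ℝ := Real.sqrt (Real.pi / v) ^ ((1:ℝ)/2) * Real.sqrt (Real.pi / (u * v)) ^ ((1:ℝ)/2)
        * Real.sqrt (Real.pi / u) ^ ((1:ℝ)/2) * Real.sqrt (Real.pi / 1) ^ ((1:ℝ)/2) with hd
    have hd0 : (0:ℝ) < d := by rw [hd]; positivity
    rw [← ENNReal.ofReal_div_of_pos hd0]
    congr 1
    -- real computation
    rw [min_inv_sqrt_max hu0 hv0, ← hmx]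
    symm
    have hsq : ∀ s : ℝ, 0 ≤ s → (s ^ ((1:ℝ)/2)) ^ (2:ℕ) = s := fun s hs => by
      rw [← Real.rpow_natCast (s ^ ((1:ℝ)/2)) 2, ← Real.rpow_mul hs]
      norm_num
    have hd2 : d ^ (2:ℕ) = Real.pi ^ 2 / (u * v) := by
      rw [hd, mul_pow, mul_pow, mul_pow, hsq _ (Real.sqrt_nonneg _),
        hsq _ (Real.sqrt_nonneg _), hsq _ (Real.sqrt_nonneg _), hsq _ (Real.sqrt_nonneg _),
        ← Real.sqrt_mul (by positivity), ← Real.sqrt_mul (by positivity),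
        ← Real.sqrt_mul (by positivity),
        show Real.pi / v * (Real.pi / (u * v)) * (Real.pi / u) * (Real.pi / 1) = (Real.pi ^ 2 / (u * v)) ^ 2 by
          field_simp,
        Real.sqrt_sq (by positivity)]
    have hL0 : (0:ℝ) ≤ Real.pi / Real.sqrt (u * v * mx) / d := by positivity
    have hR0 : (0:ℝ) ≤ (Real.sqrt mx)⁻¹ := by positivity
    refine (sq_eq_sq₀ hL0 hR0).1 ?_
    rw [div_pow, div_pow, Real.sq_sqrt (by positivity : (0:ℝ) ≤ u * v * mx), hd2,
      inv_pow, Real.sq_sqrt hmx0.le]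
    field_simp
end

section
/- The function g : ℝ → ℝ defined by g(a) = ( 2 / ( |a| + |a + 1| + 1 ) )^{1/2} is not differentiable at a = 0 and is not differentiable at a = −1. Consequently, the Brascamp–Lieb constant is not in general a differentiable function of the underlying linear maps: for the data L₁(x,y) = x, L₂(x,y) = y, L₃(x,y) = x − y, L₄(x,y) = x + a·y with exponents p = (1/2, 1/2, 1/2, 1/2), the map a ↦ BL(L(a), p) = g(a) is not differentiable at a = 0. -/
open MeasureTheory ENNReal

namespace BLaux

open Real Set Filter Topology


lemma lintegral_comp_add_right (f : ℝ → ℝ≥0∞) (t : ℝ) : ∫⁻ x, f (x + t) = ∫⁻ x, f x := by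
  have h := (MeasurableEquiv.addRight t).measurableEmbedding.lintegral_map (μ := volume) f
  have h2 : Measure.map (MeasurableEquiv.addRight t) volume = volume := by
    simpa using map_add_right_eq_self (volume : Measure ℝ) t
  rw [h2] at h
  exact h.symm

lemma lintegral_comp_mul_left (f : ℝ → ℝ≥0∞) {c : ℝ} (hc : c ≠ 0) :
    ∫⁻ x, f (c * x) = ENNReal.ofReal |c|⁻¹ * ∫⁻ x, f x := by
  have h := (Homeomorph.mulLeft₀ c hc).toMeasurableEquiv.measurableEmbedding.lintegral_map (μ := volume) f
  have h2 : Measure.map (Homeomorph.mulLeft₀ c hc).toMeasurableEquiv volume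
      = ENNReal.ofReal |c⁻¹| • volume := by
    simpa using Real.map_volume_mul_left hc
  rw [h2, lintegral_smul_measure] at h
  have h3 : ∀ x : ℝ, (Homeomorph.mulLeft₀ c hc).toMeasurableEquiv x = c * x := fun x => rfl
  simp only [h3] at h
  rw [← h, abs_inv, smul_eq_mul]

lemma lintegral_gaussian {b : ℝ} (hb : 0 < b) :
    ∫⁻ x : ℝ, ENNReal.ofReal (Real.exp (-(b * x ^ 2))) = ENNReal.ofReal (Real.sqrt (π / b)) := by
  rw [← integral_gaussian b]
  rw [← ofReal_integral_eq_lintegral_ofReal]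
  · simp [neg_mul]
  · simpa [neg_mul] using integrable_exp_neg_mul_sq hb
  · exact Eventually.of_forall fun x => (Real.exp_pos _).le

lemma lintegral_gaussian_shift {b : ℝ} (hb : 0 < b) (s : ℝ) :
    ∫⁻ x : ℝ, ENNReal.ofReal (Real.exp (-(b * (x + s) ^ 2))) = ENNReal.ofReal (Real.sqrt (π / b)) := by
  rw [lintegral_comp_add_right (fun y => ENNReal.ofReal (Real.exp (-(b * y ^ 2)))) s]
  exact lintegral_gaussian hb


lemma lintegral_quadratic {A B C : ℝ} (hA : 0 < A) (hD : 0 < A*C - B^2) :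
    ∫⁻ p : ℝ × ℝ, ENNReal.ofReal (Real.exp (-(A*p.1^2 + 2*B*p.1*p.2 + C*p.2^2)))
      = ENNReal.ofReal (π / Real.sqrt (A*C - B^2)) := by
  have hC : 0 < C := by nlinarith [sq_nonneg B]
  have hmeas : Measurable fun p : ℝ × ℝ =>
      ENNReal.ofReal (Real.exp (-(A*p.1^2 + 2*B*p.1*p.2 + C*p.2^2))) := by
    apply ENNReal.measurable_ofReal.comp
    exact (Real.continuous_exp.comp (by continuity)).measurable
  rw [MeasureTheory.Measure.volume_eq_prod, MeasureTheory.lintegral_prod _ hmeas.aemeasurable]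
  have key : ∀ x : ℝ, (∫⁻ y, ENNReal.ofReal (Real.exp (-(A*x^2 + 2*B*x*y + C*y^2))))
      = ENNReal.ofReal (Real.exp (-((A - B^2/C)*x^2))) * ENNReal.ofReal (Real.sqrt (π / C)) := by
    intro x
    have hexp : ∀ y : ℝ, (-(A*x^2 + 2*B*x*y + C*y^2))
        = -((A - B^2/C)*x^2) + -(C*(y + B*x/C)^2) := by
      intro y; field_simp; ring
    simp_rw [hexp, Real.exp_add, ENNReal.ofReal_mul (Real.exp_nonneg _)]
    rw [lintegral_const_mul _ (by
      apply ENNReal.measurable_ofReal.comp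
      exact (Real.continuous_exp.comp (by continuity)).measurable)]
    rw [lintegral_gaussian_shift hC]
  simp_rw [key]
  rw [lintegral_mul_const _ (by
      apply ENNReal.measurable_ofReal.comp
      exact (Real.continuous_exp.comp (by continuity)).measurable)]
  have hA' : (0:ℝ) < A - B^2/C := by
    rw [sub_pos, div_lt_iff₀ hC]; nlinarith
  rw [lintegral_gaussian hA']
  rw [← ENNReal.ofReal_mul (Real.sqrt_nonneg _)]
  congr 1
  rw [← Real.sqrt_mul (by positivity)]
  rw [show π / (A - B^2/C) * (π / C) = π^2 / (A*C - B^2) by field_simp]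
  rw [Real.sqrt_div (by positivity : (0:ℝ) ≤ π^2), Real.sqrt_sq Real.pi_pos.le]

lemma lintegral_quadratic_pi {A B C : ℝ} (hA : 0 < A) (hD : 0 < A*C - B^2) :
    ∫⁻ x : Fin 2 → ℝ, ENNReal.ofReal (Real.exp (-(A*(x 0)^2 + 2*B*(x 0)*(x 1) + C*(x 1)^2)))
      = ENNReal.ofReal (π / Real.sqrt (A*C - B^2)) := by
  have hmeas : Measurable fun p : ℝ × ℝ =>
      ENNReal.ofReal (Real.exp (-(A*p.1^2 + 2*B*p.1*p.2 + C*p.2^2))) := by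
    apply ENNReal.measurable_ofReal.comp
    exact (Real.continuous_exp.comp (by continuity)).measurable
  have h := (volume_preserving_finTwoArrow ℝ).lintegral_comp (f := fun p : ℝ × ℝ =>
    ENNReal.ofReal (Real.exp (-(A*p.1^2 + 2*B*p.1*p.2 + C*p.2^2)))) hmeas
  simp only [MeasurableEquiv.finTwoArrow_apply] at h
  rw [h, lintegral_quadratic hA hD]

lemma lintegral_pi_two_eq_prod {g h : ℝ → ℝ≥0∞} (hg : Measurable g) (hh : Measurable h) :
    ∫⁻ z : Fin 2 → ℝ, g (z 0) * h (z 1) = (∫⁻ y, g y) * ∫⁻ y, h y := by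
  have hm : Measurable fun p : ℝ × ℝ => g p.1 * h p.2 :=
    (hg.comp measurable_fst).mul (hh.comp measurable_snd)
  have h2 := (volume_preserving_finTwoArrow ℝ).lintegral_comp (f := fun p : ℝ × ℝ =>
    g p.1 * h p.2) hm
  simp only [MeasurableEquiv.finTwoArrow_apply] at h2
  rw [h2, MeasureTheory.Measure.volume_eq_prod, lintegral_prod_mul hg.aemeasurable hh.aemeasurable]

lemma lintegral_pair (α β γ δ : ℝ) (hd : α*δ - β*γ ≠ 0) {g h : ℝ → ℝ≥0∞}
    (hg : Measurable g) (hh : Measurable h) :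
    ∫⁻ x : Fin 2 → ℝ, g (α * x 0 + β * x 1) * h (γ * x 0 + δ * x 1)
      = ENNReal.ofReal |α*δ - β*γ|⁻¹ * ((∫⁻ y, g y) * ∫⁻ y, h y) := by
  set m : Matrix (Fin 2) (Fin 2) ℝ := !![α, β; γ, δ] with hm
  have hdet : m.det = α*δ - β*γ := by simp [hm, Matrix.det_fin_two_of]
  have hF : Measurable fun z : Fin 2 → ℝ => g (z 0) * h (z 1) :=
    (hg.comp (measurable_pi_apply 0)).mul (hh.comp (measurable_pi_apply 1))
  have hTm : Measurable (Matrix.toLin' m) :=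
    (LinearMap.continuous_on_pi (Matrix.toLin' m)).measurable
  have hlin : ∀ x : Fin 2 → ℝ, (Matrix.toLin' m x 0 = α * x 0 + β * x 1)
      ∧ (Matrix.toLin' m x 1 = γ * x 0 + δ * x 1) := by
    intro x
    constructor <;>
      simp [hm, Matrix.toLin'_apply, Matrix.mulVec, dotProduct, Fin.sum_univ_two,
          Matrix.vecHead, Matrix.vecTail]
  calc ∫⁻ x : Fin 2 → ℝ, g (α * x 0 + β * x 1) * h (γ * x 0 + δ * x 1)
      = ∫⁻ x : Fin 2 → ℝ, (fun z : Fin 2 → ℝ => g (z 0) * h (z 1)) (Matrix.toLin' m x) := by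
        apply lintegral_congr; intro x
        simp only [(hlin x).1, (hlin x).2]
    _ = ∫⁻ z, g (z 0) * h (z 1) ∂(Measure.map (Matrix.toLin' m) volume) :=
        (lintegral_map hF hTm).symm
    _ = ENNReal.ofReal |α*δ - β*γ|⁻¹ * ((∫⁻ y, g y) * ∫⁻ y, h y) := by
        rw [Real.map_matrix_volume_pi_eq_smul_volume_pi (by rw [hdet]; exact hd),
          lintegral_smul_measure, lintegral_pi_two_eq_prod hg hh, hdet, abs_inv, smul_eq_mul]


lemma collapse_half_sq (z : ℝ≥0∞) : (z ^ ((1:ℝ)/2)) ^ (2:ℝ) = z := by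
  rw [← ENNReal.rpow_mul]; norm_num

lemma cauchy_schwarz {G H : (Fin 2 → ℝ) → ℝ≥0∞} (hG : Measurable G) (hH : Measurable H) :
    ∫⁻ x : Fin 2 → ℝ, (G x) ^ ((1:ℝ)/2) * (H x) ^ ((1:ℝ)/2)
      ≤ (∫⁻ x, G x) ^ ((1:ℝ)/2) * (∫⁻ x, H x) ^ ((1:ℝ)/2) := by
  have hpq : Real.HolderConjugate 2 2 := Real.HolderConjugate.two_two
  have key := ENNReal.lintegral_mul_le_Lp_mul_Lq (volume : Measure (Fin 2 → ℝ)) hpq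
    (f := fun x => (G x) ^ ((1:ℝ)/2)) (g := fun x => (H x) ^ ((1:ℝ)/2))
    (hG.pow_const _).aemeasurable (hH.pow_const _).aemeasurable
  simp only [Pi.mul_apply] at key
  calc ∫⁻ x : Fin 2 → ℝ, (G x) ^ ((1:ℝ)/2) * (H x) ^ ((1:ℝ)/2) ≤
      (∫⁻ x, ((G x) ^ ((1:ℝ)/2)) ^ (2:ℝ)) ^ ((1:ℝ)/2)
        * (∫⁻ x, ((H x) ^ ((1:ℝ)/2)) ^ (2:ℝ)) ^ ((1:ℝ)/2) := by
        convert key using 3 <;> norm_num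
    _ = (∫⁻ x, G x) ^ ((1:ℝ)/2) * (∫⁻ x, H x) ^ ((1:ℝ)/2) := by
        simp only [collapse_half_sq]

lemma measurable_lin (α β : ℝ) : Measurable fun x : Fin 2 → ℝ => α * x 0 + β * x 1 :=
  ((measurable_pi_apply (0 : Fin 2)).const_mul α).fun_add
    ((measurable_pi_apply (1 : Fin 2)).const_mul (f := fun x : Fin 2 → ℝ => x 1) β)

lemma main_le_piece (f : Fin 4 → ℝ → ℝ≥0∞) (hf : ∀ j, Measurable (f j))
    (i j k l : Fin 4) (α β γ δ α' β' γ' δ' : ℝ)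
    (hd : α*δ - β*γ ≠ 0) (hd' : α'*δ' - β'*γ' ≠ 0) :
    ∫⁻ x : Fin 2 → ℝ, (f i (α * x 0 + β * x 1) * f j (γ * x 0 + δ * x 1)) ^ ((1:ℝ)/2)
        * (f k (α' * x 0 + β' * x 1) * f l (γ' * x 0 + δ' * x 1)) ^ ((1:ℝ)/2)
      ≤ (ENNReal.ofReal |α*δ - β*γ|⁻¹ * ((∫⁻ y, f i y) * ∫⁻ y, f j y)) ^ ((1:ℝ)/2)
        * (ENNReal.ofReal |α'*δ' - β'*γ'|⁻¹ * ((∫⁻ y, f k y) * ∫⁻ y, f l y)) ^ ((1:ℝ)/2) := by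
  have hmG : Measurable fun x : Fin 2 → ℝ =>
      f i (α * x 0 + β * x 1) * f j (γ * x 0 + δ * x 1) :=
    ((hf i).comp (measurable_lin α β)).mul ((hf j).comp (measurable_lin γ δ))
  have hmH : Measurable fun x : Fin 2 → ℝ =>
      f k (α' * x 0 + β' * x 1) * f l (γ' * x 0 + δ' * x 1) :=
    ((hf k).comp (measurable_lin α' β')).mul ((hf l).comp (measurable_lin γ' δ'))
  calc ∫⁻ x : Fin 2 → ℝ, (f i (α * x 0 + β * x 1) * f j (γ * x 0 + δ * x 1)) ^ ((1:ℝ)/2)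
        * (f k (α' * x 0 + β' * x 1) * f l (γ' * x 0 + δ' * x 1)) ^ ((1:ℝ)/2)
      ≤ (∫⁻ x : Fin 2 → ℝ, f i (α * x 0 + β * x 1) * f j (γ * x 0 + δ * x 1)) ^ ((1:ℝ)/2)
        * (∫⁻ x : Fin 2 → ℝ, f k (α' * x 0 + β' * x 1) * f l (γ' * x 0 + δ' * x 1)) ^ ((1:ℝ)/2) :=
        cauchy_schwarz hmG hmH
    _ = _ := by
        rw [lintegral_pair α β γ δ hd (hf i) (hf j),
          lintegral_pair α' β' γ' δ' hd' (hf k) (hf l)]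



lemma half_nonneg' : (0:ℝ) ≤ 1/2 := by norm_num

lemma BL_le (a : ℝ) :
    brascampLiebRankOne ![![1, 0], ![0, 1], ![1, -1], ![1, a]] (fun _ : Fin 4 => (1:ℝ)/2)
      ≤ ENNReal.ofReal ((2 / (|a| + |a + 1| + 1)) ^ ((1:ℝ)/2)) := by
  refine iSup_le fun f => iSup_le fun hf => iSup_le fun hpos => iSup_le fun hfin => ?_
  set I : Fin 4 → ℝ≥0∞ := fun j => ∫⁻ y, f j y with hI
  have hD0 : (∏ j, I j ^ ((fun _ : Fin 4 => (1:ℝ)/2) j)) ≠ 0 := by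
    rw [Finset.prod_ne_zero_iff]
    intro j _
    rw [ne_eq, ENNReal.rpow_eq_zero_iff]
    push_neg
    exact ⟨fun h0 => absurd h0 (hpos j).ne', fun htop => by norm_num⟩
  have hDtop : (∏ j, I j ^ ((fun _ : Fin 4 => (1:ℝ)/2) j)) ≠ ⊤ := by
    refine ENNReal.prod_ne_top ?_
    intro j _
    rw [ne_eq, ENNReal.rpow_eq_top_iff]
    push_neg
    exact ⟨fun h0 => by norm_num, fun htop => absurd htop (hfin j).ne⟩
  rw [ENNReal.div_le_iff hD0 hDtop]
  -- three cases for the pairing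
  rcases le_or_gt 0 a with ha | ha'
  · -- a ≥ 0 : pair (0,1) and (2,3), determinant a+1
    have habs : |a| + |a + 1| + 1 = 2 * (a + 1) := by
      rw [abs_of_nonneg ha, abs_of_nonneg (by linarith)]; ring
    have hNum : (∫⁻ x : Fin 2 → ℝ,
        ∏ j, (f j (∑ i, (![![(1:ℝ), 0], ![0, 1], ![1, -1], ![1, a]]) j i * x i))
          ^ ((fun _ : Fin 4 => (1:ℝ)/2) j))
        = ∫⁻ x : Fin 2 → ℝ,
          (f 0 ((1:ℝ) * x 0 + 0 * x 1) * f 1 ((0:ℝ) * x 0 + 1 * x 1)) ^ ((1:ℝ)/2)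
          * (f 2 ((1:ℝ) * x 0 + (-1) * x 1) * f 3 ((1:ℝ) * x 0 + a * x 1)) ^ ((1:ℝ)/2) := by
      refine lintegral_congr fun x => ?_
      rw [Fin.prod_univ_four]
      rw [ENNReal.mul_rpow_of_nonneg _ _ half_nonneg', ENNReal.mul_rpow_of_nonneg _ _ half_nonneg']
      have e0 : (∑ i, (![![(1:ℝ), 0], ![0, 1], ![1, -1], ![1, a]]) 0 i * x i)
          = (1:ℝ) * x 0 + 0 * x 1 := by simp [Fin.sum_univ_two]
      have e1 : (∑ i, (![![(1:ℝ), 0], ![0, 1], ![1, -1], ![1, a]]) 1 i * x i)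
          = (0:ℝ) * x 0 + 1 * x 1 := by simp [Fin.sum_univ_two]
      have e2 : (∑ i, (![![(1:ℝ), 0], ![0, 1], ![1, -1], ![1, a]]) 2 i * x i)
          = (1:ℝ) * x 0 + (-1) * x 1 := by simp [Fin.sum_univ_two]
      have e3 : (∑ i, (![![(1:ℝ), 0], ![0, 1], ![1, -1], ![1, a]]) 3 i * x i)
          = (1:ℝ) * x 0 + a * x 1 := by simp [Fin.sum_univ_two]
      rw [e0, e1, e2, e3]
      ring
    rw [hNum]
    have hd : (1:ℝ)*1 - 0*0 ≠ 0 := by norm_num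
    have hd' : (1:ℝ)*a - (-1)*1 ≠ 0 := by intro h; nlinarith
    calc ∫⁻ x : Fin 2 → ℝ,
          (f 0 ((1:ℝ) * x 0 + 0 * x 1) * f 1 ((0:ℝ) * x 0 + 1 * x 1)) ^ ((1:ℝ)/2)
          * (f 2 ((1:ℝ) * x 0 + (-1) * x 1) * f 3 ((1:ℝ) * x 0 + a * x 1)) ^ ((1:ℝ)/2)
        ≤ (ENNReal.ofReal |(1:ℝ)*1 - 0*0|⁻¹ * (I 0 * I 1)) ^ ((1:ℝ)/2)
          * (ENNReal.ofReal |(1:ℝ)*a - (-1)*1|⁻¹ * (I 2 * I 3)) ^ ((1:ℝ)/2) :=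
          main_le_piece f hf 0 1 2 3 1 0 0 1 1 (-1) 1 a hd hd'
      _ = ENNReal.ofReal ((2 / (|a| + |a + 1| + 1)) ^ ((1:ℝ)/2))
            * ∏ j, I j ^ ((fun _ : Fin 4 => (1:ℝ)/2) j) := by
          rw [Fin.prod_univ_four]
          rw [ENNReal.mul_rpow_of_nonneg _ _ half_nonneg',
            ENNReal.mul_rpow_of_nonneg _ _ half_nonneg',
            ENNReal.mul_rpow_of_nonneg _ _ half_nonneg',
            ENNReal.mul_rpow_of_nonneg _ _ half_nonneg']
          rw [ENNReal.ofReal_rpow_of_pos (by norm_num),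
            ENNReal.ofReal_rpow_of_pos (inv_pos.mpr (abs_pos.mpr hd'))]
          have hreal : (|(1:ℝ)*1 - 0*0|⁻¹ ^ ((1:ℝ)/2) * |(1:ℝ)*a - (-1)*1|⁻¹ ^ ((1:ℝ)/2))
              = (2 / (|a| + |a + 1| + 1)) ^ ((1:ℝ)/2) := by
            rw [habs, show |(1:ℝ)*1 - 0*0| = 1 by norm_num,
              show |(1:ℝ)*a - (-1)*1| = a + 1 by
                rw [show (1:ℝ)*a - (-1)*1 = a + 1 by ring]; exact abs_of_pos (by linarith),
              show (2:ℝ) / (2*(a+1)) = (a+1)⁻¹ by field_simp]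
            norm_num [Real.one_rpow]
          rw [← hreal, ENNReal.ofReal_mul (by positivity)]
          ring
  · rcases le_or_gt (-1) a with hb | hb'
    · -- -1 ≤ a < 0 : pair (0,2) and (1,3), determinants -1 and -1
      have habs : |a| + |a + 1| + 1 = 2 := by
        rw [abs_of_neg ha', abs_of_nonneg (by linarith)]; ring
      have hNum : (∫⁻ x : Fin 2 → ℝ,
          ∏ j, (f j (∑ i, (![![(1:ℝ), 0], ![0, 1], ![1, -1], ![1, a]]) j i * x i))
            ^ ((fun _ : Fin 4 => (1:ℝ)/2) j))
          = ∫⁻ x : Fin 2 → ℝ,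
            (f 0 ((1:ℝ) * x 0 + 0 * x 1) * f 2 ((1:ℝ) * x 0 + (-1) * x 1)) ^ ((1:ℝ)/2)
            * (f 1 ((0:ℝ) * x 0 + 1 * x 1) * f 3 ((1:ℝ) * x 0 + a * x 1)) ^ ((1:ℝ)/2) := by
        refine lintegral_congr fun x => ?_
        rw [Fin.prod_univ_four]
        rw [ENNReal.mul_rpow_of_nonneg _ _ half_nonneg', ENNReal.mul_rpow_of_nonneg _ _ half_nonneg']
        have e0 : (∑ i, (![![(1:ℝ), 0], ![0, 1], ![1, -1], ![1, a]]) 0 i * x i)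
            = (1:ℝ) * x 0 + 0 * x 1 := by simp [Fin.sum_univ_two]
        have e1 : (∑ i, (![![(1:ℝ), 0], ![0, 1], ![1, -1], ![1, a]]) 1 i * x i)
            = (0:ℝ) * x 0 + 1 * x 1 := by simp [Fin.sum_univ_two]
        have e2 : (∑ i, (![![(1:ℝ), 0], ![0, 1], ![1, -1], ![1, a]]) 2 i * x i)
            = (1:ℝ) * x 0 + (-1) * x 1 := by simp [Fin.sum_univ_two]
        have e3 : (∑ i, (![![(1:ℝ), 0], ![0, 1], ![1, -1], ![1, a]]) 3 i * x i)
            = (1:ℝ) * x 0 + a * x 1 := by simp [Fin.sum_univ_two]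
        rw [e0, e1, e2, e3]
        ring
      rw [hNum]
      have hd : (1:ℝ)*(-1) - 0*1 ≠ 0 := by norm_num
      have hd' : (0:ℝ)*a - 1*1 ≠ 0 := by intro h; nlinarith
      calc ∫⁻ x : Fin 2 → ℝ,
            (f 0 ((1:ℝ) * x 0 + 0 * x 1) * f 2 ((1:ℝ) * x 0 + (-1) * x 1)) ^ ((1:ℝ)/2)
            * (f 1 ((0:ℝ) * x 0 + 1 * x 1) * f 3 ((1:ℝ) * x 0 + a * x 1)) ^ ((1:ℝ)/2)
          ≤ (ENNReal.ofReal |(1:ℝ)*(-1) - 0*1|⁻¹ * (I 0 * I 2)) ^ ((1:ℝ)/2)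
            * (ENNReal.ofReal |(0:ℝ)*a - 1*1|⁻¹ * (I 1 * I 3)) ^ ((1:ℝ)/2) :=
            main_le_piece f hf 0 2 1 3 1 0 1 (-1) 0 1 1 a hd hd'
        _ = ENNReal.ofReal ((2 / (|a| + |a + 1| + 1)) ^ ((1:ℝ)/2))
              * ∏ j, I j ^ ((fun _ : Fin 4 => (1:ℝ)/2) j) := by
            rw [Fin.prod_univ_four]
            rw [ENNReal.mul_rpow_of_nonneg _ _ half_nonneg',
              ENNReal.mul_rpow_of_nonneg _ _ half_nonneg',
              ENNReal.mul_rpow_of_nonneg _ _ half_nonneg',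
              ENNReal.mul_rpow_of_nonneg _ _ half_nonneg']
            rw [ENNReal.ofReal_rpow_of_pos (inv_pos.mpr (abs_pos.mpr hd)),
              ENNReal.ofReal_rpow_of_pos (inv_pos.mpr (abs_pos.mpr hd'))]
            have hreal : (|(1:ℝ)*(-1) - 0*1|⁻¹ ^ ((1:ℝ)/2) * |(0:ℝ)*a - 1*1|⁻¹ ^ ((1:ℝ)/2))
                = (2 / (|a| + |a + 1| + 1)) ^ ((1:ℝ)/2) := by
              rw [habs, show |(1:ℝ)*(-1) - 0*1| = 1 by norm_num,
                show |(0:ℝ)*a - 1*1| = 1 by norm_num]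
              norm_num [Real.one_rpow]
            rw [← hreal, ENNReal.ofReal_mul (by positivity)]
            ring
    · -- a < -1 : pair (0,3) and (1,2), determinants a and -1
      have habs : |a| + |a + 1| + 1 = 2 * (-a) := by
        rw [abs_of_neg ha', abs_of_neg (by linarith)]; ring
      have hNum : (∫⁻ x : Fin 2 → ℝ,
          ∏ j, (f j (∑ i, (![![(1:ℝ), 0], ![0, 1], ![1, -1], ![1, a]]) j i * x i))
            ^ ((fun _ : Fin 4 => (1:ℝ)/2) j))
          = ∫⁻ x : Fin 2 → ℝ,
            (f 0 ((1:ℝ) * x 0 + 0 * x 1) * f 3 ((1:ℝ) * x 0 + a * x 1)) ^ ((1:ℝ)/2)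
            * (f 1 ((0:ℝ) * x 0 + 1 * x 1) * f 2 ((1:ℝ) * x 0 + (-1) * x 1)) ^ ((1:ℝ)/2) := by
        refine lintegral_congr fun x => ?_
        rw [Fin.prod_univ_four]
        rw [ENNReal.mul_rpow_of_nonneg _ _ half_nonneg', ENNReal.mul_rpow_of_nonneg _ _ half_nonneg']
        have e0 : (∑ i, (![![(1:ℝ), 0], ![0, 1], ![1, -1], ![1, a]]) 0 i * x i)
            = (1:ℝ) * x 0 + 0 * x 1 := by simp [Fin.sum_univ_two]
        have e1 : (∑ i, (![![(1:ℝ), 0], ![0, 1], ![1, -1], ![1, a]]) 1 i * x i)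
            = (0:ℝ) * x 0 + 1 * x 1 := by simp [Fin.sum_univ_two]
        have e2 : (∑ i, (![![(1:ℝ), 0], ![0, 1], ![1, -1], ![1, a]]) 2 i * x i)
            = (1:ℝ) * x 0 + (-1) * x 1 := by simp [Fin.sum_univ_two]
        have e3 : (∑ i, (![![(1:ℝ), 0], ![0, 1], ![1, -1], ![1, a]]) 3 i * x i)
            = (1:ℝ) * x 0 + a * x 1 := by simp [Fin.sum_univ_two]
        rw [e0, e1, e2, e3]
        ring
      rw [hNum]
      have hd : (1:ℝ)*a - 0*1 ≠ 0 := by intro h; nlinarith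
      have hd' : (0:ℝ)*(-1) - 1*1 ≠ 0 := by norm_num
      calc ∫⁻ x : Fin 2 → ℝ,
            (f 0 ((1:ℝ) * x 0 + 0 * x 1) * f 3 ((1:ℝ) * x 0 + a * x 1)) ^ ((1:ℝ)/2)
            * (f 1 ((0:ℝ) * x 0 + 1 * x 1) * f 2 ((1:ℝ) * x 0 + (-1) * x 1)) ^ ((1:ℝ)/2)
          ≤ (ENNReal.ofReal |(1:ℝ)*a - 0*1|⁻¹ * (I 0 * I 3)) ^ ((1:ℝ)/2)
            * (ENNReal.ofReal |(0:ℝ)*(-1) - 1*1|⁻¹ * (I 1 * I 2)) ^ ((1:ℝ)/2) :=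
            main_le_piece f hf 0 3 1 2 1 0 1 a 0 1 1 (-1) hd hd'
        _ = ENNReal.ofReal ((2 / (|a| + |a + 1| + 1)) ^ ((1:ℝ)/2))
              * ∏ j, I j ^ ((fun _ : Fin 4 => (1:ℝ)/2) j) := by
            rw [Fin.prod_univ_four]
            rw [ENNReal.mul_rpow_of_nonneg _ _ half_nonneg',
              ENNReal.mul_rpow_of_nonneg _ _ half_nonneg',
              ENNReal.mul_rpow_of_nonneg _ _ half_nonneg',
              ENNReal.mul_rpow_of_nonneg _ _ half_nonneg']
            rw [ENNReal.ofReal_rpow_of_pos (inv_pos.mpr (abs_pos.mpr hd)),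
              ENNReal.ofReal_rpow_of_pos (inv_pos.mpr (abs_pos.mpr hd'))]
            have hreal : (|(1:ℝ)*a - 0*1|⁻¹ ^ ((1:ℝ)/2) * |(0:ℝ)*(-1) - 1*1|⁻¹ ^ ((1:ℝ)/2))
                = (2 / (|a| + |a + 1| + 1)) ^ ((1:ℝ)/2) := by
              rw [habs, show |(1:ℝ)*a - 0*1| = -a by
                  rw [show (1:ℝ)*a - 0*1 = a by ring]; exact abs_of_neg ha',
                show |(0:ℝ)*(-1) - 1*1| = 1 by norm_num,
                show (2:ℝ) / (2*(-a)) = (-a)⁻¹ by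
                  rw [inv_eq_one_div]; rw [div_eq_div_iff (by nlinarith) (by nlinarith)]; ring]
              norm_num [Real.one_rpow]
            rw [← hreal, ENNReal.ofReal_mul (by positivity)]
            ring


lemma exp_rpow' (t y : ℝ) : Real.exp t ^ y = Real.exp (t * y) := by
  rw [Real.rpow_def_of_pos (Real.exp_pos t), Real.log_exp]

lemma aux_pow {x : ℝ} (hx : 0 < x) : Real.sqrt x ^ ((1:ℝ)/2) = x ^ ((1:ℝ)/4) := by
  rw [Real.sqrt_eq_rpow, ← Real.rpow_mul hx.le]; norm_num

lemma ratio_simp {c0 c1 c2 c3 E : ℝ} (h0 : 0 < c0) (h1 : 0 < c1) (h2 : 0 < c2) (h3 : 0 < c3)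
    (hE : 0 < E) :
    (π / Real.sqrt E) / (Real.sqrt (π/c0) ^ ((1:ℝ)/2) * Real.sqrt (π/c1) ^ ((1:ℝ)/2)
        * Real.sqrt (π/c2) ^ ((1:ℝ)/2) * Real.sqrt (π/c3) ^ ((1:ℝ)/2))
      = (c0*c1*c2*c3) ^ ((1:ℝ)/4) / Real.sqrt E := by
  have hpi := Real.pi_pos
  rw [aux_pow (by positivity), aux_pow (by positivity), aux_pow (by positivity),
    aux_pow (by positivity)]
  rw [Real.div_rpow hpi.le h0.le, Real.div_rpow hpi.le h1.le, Real.div_rpow hpi.le h2.le,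
    Real.div_rpow hpi.le h3.le]
  have hprod : (c0*c1*c2*c3) ^ ((1:ℝ)/4)
      = c0^((1:ℝ)/4)*c1^((1:ℝ)/4)*c2^((1:ℝ)/4)*c3^((1:ℝ)/4) := by
    rw [Real.mul_rpow (by positivity) h3.le, Real.mul_rpow (by positivity) h2.le,
      Real.mul_rpow h0.le h1.le]
  have hpi4 : π^((1:ℝ)/4)*π^((1:ℝ)/4)*π^((1:ℝ)/4)*π^((1:ℝ)/4) = π := by
    rw [← Real.rpow_add hpi, ← Real.rpow_add hpi, ← Real.rpow_add hpi]
    norm_num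
  rw [hprod]
  rw [div_mul_div_comm, div_mul_div_comm, div_mul_div_comm, hpi4]
  rw [div_div_div_eq]
  rw [mul_comm π (c0^((1:ℝ)/4)*c1^((1:ℝ)/4)*c2^((1:ℝ)/4)*c3^((1:ℝ)/4))]
  exact mul_div_mul_right _ _ (ne_of_gt hpi)

lemma BL_ge_term (a : ℝ) (c : Fin 4 → ℝ) (hc : ∀ j, 0 < c j)
    (hdet : 0 < ((c 0 + c 2 + c 3)/2) * ((c 1 + c 2 + a^2*c 3)/2) - ((a*c 3 - c 2)/2)^2) :
    ENNReal.ofReal ((c 0 * c 1 * c 2 * c 3) ^ ((1:ℝ)/4)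
        / Real.sqrt (((c 0 + c 2 + c 3)/2) * ((c 1 + c 2 + a^2*c 3)/2) - ((a*c 3 - c 2)/2)^2))
      ≤ brascampLiebRankOne ![![1, 0], ![0, 1], ![1, -1], ![1, a]] (fun _ : Fin 4 => (1:ℝ)/2) := by
  have hA : 0 < (c 0 + c 2 + c 3)/2 := by
    have h0 := hc 0; have h2 := hc 2; have h3 := hc 3; linarith
  set f : Fin 4 → ℝ → ℝ≥0∞ := fun j y => ENNReal.ofReal (Real.exp (-(c j * y^2))) with hfdef
  have hm : ∀ j, Measurable (f j) := fun j =>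
    ENNReal.measurable_ofReal.comp
      (Real.measurable_exp.comp (((measurable_id.pow_const 2).const_mul (c j)).neg))
  have hIv : ∀ j, (∫⁻ y, f j y) = ENNReal.ofReal (Real.sqrt (π / c j)) := fun j =>
    lintegral_gaussian (hc j)
  have hpos : ∀ j, 0 < ∫⁻ y, f j y := fun j => by
    rw [hIv j]; exact ENNReal.ofReal_pos.mpr (Real.sqrt_pos.mpr (by have := hc j; positivity))
  have hfin : ∀ j, (∫⁻ y, f j y) < ⊤ := fun j => by rw [hIv j]; exact ENNReal.ofReal_lt_top
  have hNum : (∫⁻ x : Fin 2 → ℝ,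
      ∏ j, (f j (∑ i, (![![(1:ℝ), 0], ![0, 1], ![1, -1], ![1, a]]) j i * x i))
        ^ ((fun _ : Fin 4 => (1:ℝ)/2) j))
      = ENNReal.ofReal (π / Real.sqrt (((c 0 + c 2 + c 3)/2) * ((c 1 + c 2 + a^2*c 3)/2)
          - ((a*c 3 - c 2)/2)^2)) := by
    have hptwise : ∀ x : Fin 2 → ℝ,
        (∏ j, (f j (∑ i, (![![(1:ℝ), 0], ![0, 1], ![1, -1], ![1, a]]) j i * x i))
          ^ ((fun _ : Fin 4 => (1:ℝ)/2) j))
        = ENNReal.ofReal (Real.exp (-(((c 0 + c 2 + c 3)/2)*(x 0)^2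
            + 2*((a*c 3 - c 2)/2)*(x 0)*(x 1) + ((c 1 + c 2 + a^2*c 3)/2)*(x 1)^2))) := by
      intro x
      rw [Fin.prod_univ_four]
      have e0 : (∑ i, (![![(1:ℝ), 0], ![0, 1], ![1, -1], ![1, a]]) 0 i * x i) = x 0 := by
        simp [Fin.sum_univ_two]
      have e1 : (∑ i, (![![(1:ℝ), 0], ![0, 1], ![1, -1], ![1, a]]) 1 i * x i) = x 1 := by
        simp [Fin.sum_univ_two]
      have e2 : (∑ i, (![![(1:ℝ), 0], ![0, 1], ![1, -1], ![1, a]]) 2 i * x i) = x 0 - x 1 := by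
        simp [Fin.sum_univ_two]; ring
      have e3 : (∑ i, (![![(1:ℝ), 0], ![0, 1], ![1, -1], ![1, a]]) 3 i * x i)
          = x 0 + a * x 1 := by simp [Fin.sum_univ_two]
      rw [e0, e1, e2, e3]
      simp only [hfdef]
      rw [ENNReal.ofReal_rpow_of_pos (Real.exp_pos _),
        ENNReal.ofReal_rpow_of_pos (Real.exp_pos _),
        ENNReal.ofReal_rpow_of_pos (Real.exp_pos _),
        ENNReal.ofReal_rpow_of_pos (Real.exp_pos _)]
      rw [exp_rpow', exp_rpow', exp_rpow', exp_rpow']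
      rw [← ENNReal.ofReal_mul (Real.exp_nonneg _), ← Real.exp_add,
        ← ENNReal.ofReal_mul (Real.exp_nonneg _), ← Real.exp_add,
        ← ENNReal.ofReal_mul (Real.exp_nonneg _), ← Real.exp_add]
      congr 1
      ring
    rw [lintegral_congr hptwise]
    exact lintegral_quadratic_pi hA hdet
  have hDen : (∏ j, (∫⁻ y, f j y) ^ ((fun _ : Fin 4 => (1:ℝ)/2) j))
      = ENNReal.ofReal (Real.sqrt (π/c 0) ^ ((1:ℝ)/2) * Real.sqrt (π/c 1) ^ ((1:ℝ)/2)
          * Real.sqrt (π/c 2) ^ ((1:ℝ)/2) * Real.sqrt (π/c 3) ^ ((1:ℝ)/2)) := by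
    rw [Fin.prod_univ_four, hIv 0, hIv 1, hIv 2, hIv 3]
    rw [ENNReal.ofReal_rpow_of_pos (Real.sqrt_pos.mpr (by have := hc 0; positivity)),
      ENNReal.ofReal_rpow_of_pos (Real.sqrt_pos.mpr (by have := hc 1; positivity)),
      ENNReal.ofReal_rpow_of_pos (Real.sqrt_pos.mpr (by have := hc 2; positivity)),
      ENNReal.ofReal_rpow_of_pos (Real.sqrt_pos.mpr (by have := hc 3; positivity))]
    rw [← ENNReal.ofReal_mul (by positivity), ← ENNReal.ofReal_mul (by positivity),
      ← ENNReal.ofReal_mul (by positivity)]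
  refine le_iSup_of_le f (le_iSup_of_le hm (le_iSup_of_le hpos (le_iSup_of_le hfin
    (le_of_eq ?_))))
  rw [hNum, hDen, ← ENNReal.ofReal_div_of_pos (by
    have h0 := hc 0; have h1 := hc 1; have h2 := hc 2; have h3 := hc 3
    positivity)]
  rw [ratio_simp (hc 0) (hc 1) (hc 2) (hc 3) hdet]


lemma quarter_pow {x : ℝ} (hx : 0 ≤ x) : (x^4) ^ ((1:ℝ)/4) = x := by
  rw [← Real.rpow_natCast x 4, ← Real.rpow_mul hx]; norm_num

lemma half_sq {x : ℝ} (hx : 0 ≤ x) : (x ^ ((1:ℝ)/2))^2 = x := by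
  rw [← Real.rpow_natCast (x ^ ((1:ℝ)/2)) 2, ← Real.rpow_mul hx]; norm_num

lemma rpow_quarter_div_sqrt_eq {P E g : ℝ} (hP : 0 ≤ P) (hE : 0 < E) (hg : 0 ≤ g)
    (h : g^4 * E^2 = P) : g = P ^ ((1:ℝ)/4) / Real.sqrt E := by
  have hval : 0 ≤ P ^ ((1:ℝ)/4) / Real.sqrt E := by positivity
  have h4 : g^4 = (P ^ ((1:ℝ)/4) / Real.sqrt E)^4 := by
    rw [div_pow]
    have h1 : (P ^ ((1:ℝ)/4))^4 = P := by
      rw [← Real.rpow_natCast (P ^ ((1:ℝ)/4)) 4, ← Real.rpow_mul hP]; norm_num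
    have h2 : (Real.sqrt E)^4 = E^2 := by
      rw [show (4:ℕ) = 2*2 by rfl, pow_mul, Real.sq_sqrt hE.le]
    rw [h1, h2, ← h]
    field_simp
  calc g = (g^4) ^ ((1:ℝ)/4) := (quarter_pow hg).symm
    _ = ((P ^ ((1:ℝ)/4) / Real.sqrt E)^4) ^ ((1:ℝ)/4) := by rw [h4]
    _ = _ := quarter_pow hval

lemma BL_ge_of_c (a : ℝ) (c0 c1 c2 c3 : ℝ) (h0 : 0 < c0) (h1 : 0 < c1) (h2 : 0 < c2)
    (h3 : 0 < c3)
    (hdet : 0 < ((c0 + c2 + c3)/2) * ((c1 + c2 + a^2*c3)/2) - ((a*c3 - c2)/2)^2)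
    (hvalue : ((2 / (|a| + |a + 1| + 1)) ^ ((1:ℝ)/2))^4
        * (((c0 + c2 + c3)/2) * ((c1 + c2 + a^2*c3)/2) - ((a*c3 - c2)/2)^2)^2
      = c0 * c1 * c2 * c3) :
    ENNReal.ofReal ((2 / (|a| + |a + 1| + 1)) ^ ((1:ℝ)/2))
      ≤ brascampLiebRankOne ![![1, 0], ![0, 1], ![1, -1], ![1, a]] (fun _ : Fin 4 => (1:ℝ)/2) := by
  set c : Fin 4 → ℝ := ![c0, c1, c2, c3] with hcdef
  have e0 : c 0 = c0 := rfl
  have e1 : c 1 = c1 := rfl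
  have e2 : c 2 = c2 := rfl
  have e3 : c 3 = c3 := rfl
  have hcpos : ∀ j, 0 < c j := by
    intro j; fin_cases j <;> simpa [hcdef] using (by assumption : _)
  have hdet' : 0 < ((c 0 + c 2 + c 3)/2) * ((c 1 + c 2 + a^2*c 3)/2) - ((a*c 3 - c 2)/2)^2 := by
    rw [e0, e1, e2, e3]; exact hdet
  refine le_trans (le_of_eq ?_) (BL_ge_term a c hcpos hdet')
  rw [e0, e1, e2, e3]
  congr 1
  exact rpow_quarter_div_sqrt_eq (by positivity) hdet (by positivity) hvalue

lemma BL_ge_eps (a : ℝ) (c0 c1 c2 c3 : ℝ) (h0 : 0 < c0) (h1 : 0 < c1) (h2 : 0 < c2)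
    (h3 : 0 < c3) {w : ℝ} (hw : 0 ≤ w)
    (hdet : 0 < ((c0 + c2 + c3)/2) * ((c1 + c2 + a^2*c3)/2) - ((a*c3 - c2)/2)^2)
    (hvalue : (w ^ ((1:ℝ)/2))^4
        * (((c0 + c2 + c3)/2) * ((c1 + c2 + a^2*c3)/2) - ((a*c3 - c2)/2)^2)^2
      = c0 * c1 * c2 * c3) :
    ENNReal.ofReal (w ^ ((1:ℝ)/2))
      ≤ brascampLiebRankOne ![![1, 0], ![0, 1], ![1, -1], ![1, a]] (fun _ : Fin 4 => (1:ℝ)/2) := by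
  set c : Fin 4 → ℝ := ![c0, c1, c2, c3] with hcdef
  have e0 : c 0 = c0 := rfl
  have e1 : c 1 = c1 := rfl
  have e2 : c 2 = c2 := rfl
  have e3 : c 3 = c3 := rfl
  have hcpos : ∀ j, 0 < c j := by
    intro j; fin_cases j <;> simpa [hcdef] using (by assumption : _)
  have hdet' : 0 < ((c 0 + c 2 + c 3)/2) * ((c 1 + c 2 + a^2*c 3)/2) - ((a*c 3 - c 2)/2)^2 := by
    rw [e0, e1, e2, e3]; exact hdet
  refine le_trans (le_of_eq ?_) (BL_ge_term a c hcpos hdet')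
  rw [e0, e1, e2, e3]
  congr 1
  exact rpow_quarter_div_sqrt_eq (by positivity) hdet (by positivity) hvalue


lemma fourth_of_half {x : ℝ} (hx : 0 ≤ x) : (x ^ ((1:ℝ)/2))^4 = x^2 := by
  rw [show (4:ℕ) = 2*2 by rfl, pow_mul, half_sq hx]

lemma BL_ge_pos {a : ℝ} (ha : 0 < a) :
    ENNReal.ofReal ((2 / (|a| + |a + 1| + 1)) ^ ((1:ℝ)/2))
      ≤ brascampLiebRankOne ![![1, 0], ![0, 1], ![1, -1], ![1, a]] (fun _ : Fin 4 => (1:ℝ)/2) := by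
  refine BL_ge_of_c a (1+a) (a+a^2) a 1 (by linarith) (by nlinarith) ha one_pos
    (by nlinarith [sq_nonneg a, sq_nonneg (1+a)]) ?_
  rw [abs_of_pos ha, abs_of_pos (by linarith : (0:ℝ) < a+1)]
  rw [fourth_of_half (by positivity)]
  have hs : a + (a+1) + 1 ≠ 0 := by nlinarith
  field_simp
  ring

lemma BL_ge_mid {a : ℝ} (h1 : -1 < a) (h2 : a < 0) :
    ENNReal.ofReal ((2 / (|a| + |a + 1| + 1)) ^ ((1:ℝ)/2))
      ≤ brascampLiebRankOne ![![1, 0], ![0, 1], ![1, -1], ![1, a]] (fun _ : Fin 4 => (1:ℝ)/2) := by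
  refine BL_ge_of_c a (1+a) (-(a*(1+a))) (-a) 1 (by linarith) (by nlinarith) (by linarith)
    one_pos (by nlinarith) ?_
  rw [abs_of_neg h2, abs_of_pos (by linarith : (0:ℝ) < a+1)]
  rw [fourth_of_half (by
    have : (0:ℝ) < -a + (a+1) + 1 := by linarith
    positivity)]
  have hs : -a + (a+1) + 1 ≠ 0 := by nlinarith
  field_simp
  ring

lemma BL_ge_neg {a : ℝ} (ha : a < -1) :
    ENNReal.ofReal ((2 / (|a| + |a + 1| + 1)) ^ ((1:ℝ)/2))
      ≤ brascampLiebRankOne ![![1, 0], ![0, 1], ![1, -1], ![1, a]] (fun _ : Fin 4 => (1:ℝ)/2) := by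
  have h3 : (0:ℝ) < -a := by linarith
  have h4 : (0:ℝ) < -a - 1 := by linarith
  refine BL_ge_of_c a (-1-a) (a^2+a) (-a) 1 (by linarith) (by nlinarith) (by linarith)
    one_pos (by nlinarith [mul_pos (mul_pos h3 h3) h4]) ?_
  rw [abs_of_neg (by linarith : a < 0), abs_of_neg (by linarith : a + 1 < 0)]
  rw [fourth_of_half (by
    have : (0:ℝ) < -a + -(a+1) + 1 := by linarith
    positivity)]
  have hs : -a + -(a+1) + 1 ≠ 0 := by nlinarith
  have hane : a ≠ 0 := by linarith
  field_simp [hane]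
  ring_nf

lemma BL_ge_lim {a : ℝ}
    (hv : ∀ ε : ℝ, 0 < ε → ENNReal.ofReal ((4/(4+ε)) ^ ((1:ℝ)/2))
      ≤ brascampLiebRankOne ![![1, 0], ![0, 1], ![1, -1], ![1, a]] (fun _ : Fin 4 => (1:ℝ)/2)) :
    ENNReal.ofReal 1 ≤ brascampLiebRankOne ![![1, 0], ![0, 1], ![1, -1], ![1, a]] (fun _ : Fin 4 => (1:ℝ)/2) := by
  have t1 : Tendsto (fun n : ℕ => 1/((n:ℝ)+1)) atTop (𝓝 0) :=
    tendsto_one_div_add_atTop_nhds_zero_nat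
  have hcont : ContinuousAt (fun t : ℝ => ENNReal.ofReal ((4/(4+t)) ^ ((1:ℝ)/2))) 0 := by
    apply ENNReal.continuous_ofReal.continuousAt.comp
    apply ContinuousAt.rpow_const
    · exact continuousAt_const.div (continuousAt_const.add continuousAt_id) (by norm_num)
    · right; norm_num
  have t2 := hcont.tendsto.comp t1
  have hval : ENNReal.ofReal ((4/(4+(0:ℝ))) ^ ((1:ℝ)/2)) = ENNReal.ofReal 1 := by
    norm_num [Real.one_rpow]
  rw [hval] at t2
  refine le_of_tendsto t2 ?_
  filter_upwards with n
  exact hv _ (by positivity)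

lemma BL_ge_zero :
    ENNReal.ofReal ((2 / (|(0:ℝ)| + |(0:ℝ) + 1| + 1)) ^ ((1:ℝ)/2))
      ≤ brascampLiebRankOne ![![1, 0], ![0, 1], ![1, -1], ![1, (0:ℝ)]] (fun _ : Fin 4 => (1:ℝ)/2) := by
  have hg : ((2:ℝ) / (|(0:ℝ)| + |(0:ℝ) + 1| + 1)) ^ ((1:ℝ)/2) = 1 := by
    norm_num [Real.one_rpow]
  rw [hg]
  refine BL_ge_lim fun ε hε => ?_
  refine BL_ge_eps 0 1 ε ε 1 one_pos hε hε one_pos (by positivity) (by nlinarith) ?_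
  rw [fourth_of_half (by positivity)]
  have hs : (4:ℝ) + ε ≠ 0 := by nlinarith
  field_simp
  ring

lemma BL_ge_negone :
    ENNReal.ofReal ((2 / (|(-1:ℝ)| + |(-1:ℝ) + 1| + 1)) ^ ((1:ℝ)/2))
      ≤ brascampLiebRankOne ![![1, 0], ![0, 1], ![1, -1], ![1, (-1:ℝ)]] (fun _ : Fin 4 => (1:ℝ)/2) := by
  have hg : ((2:ℝ) / (|(-1:ℝ)| + |(-1:ℝ) + 1| + 1)) ^ ((1:ℝ)/2) = 1 := by
    norm_num [Real.one_rpow]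
  rw [hg]
  refine BL_ge_lim fun ε hε => ?_
  refine BL_ge_eps (-1) ε ε 1 1 hε hε one_pos one_pos (by positivity) (by nlinarith) ?_
  rw [fourth_of_half (by positivity)]
  have hs : (4:ℝ) + ε ≠ 0 := by nlinarith
  field_simp
  ring

lemma BL_eq (a : ℝ) :
    brascampLiebRankOne ![![1, 0], ![0, 1], ![1, -1], ![1, a]] (fun _ : Fin 4 => (1:ℝ)/2)
      = ENNReal.ofReal ((2 / (|a| + |a + 1| + 1)) ^ ((1:ℝ)/2)) := by
  refine le_antisymm (BL_le a) ?_
  rcases lt_trichotomy a 0 with h | h | h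
  · rcases lt_trichotomy a (-1) with h2 | h2 | h2
    · exact BL_ge_neg h2
    · subst h2; exact BL_ge_negone
    · exact BL_ge_mid h2 h
  · subst h; exact BL_ge_zero
  · exact BL_ge_pos h


lemma g_eq_one_on_mid {x : ℝ} (h1 : -1 ≤ x) (h2 : x ≤ 0) :
    (2 / (|x| + |x + 1| + 1)) ^ ((1:ℝ)/2) = 1 := by
  rw [abs_of_nonpos h2, abs_of_nonneg (by linarith), show -x + (x+1) + 1 = 2 by ring]
  norm_num [Real.one_rpow]

lemma g_eq_right {x : ℝ} (h : 0 ≤ x) :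
    (2 / (|x| + |x + 1| + 1)) ^ ((1:ℝ)/2) = (2 / (2*x + 2)) ^ ((1:ℝ)/2) := by
  rw [abs_of_nonneg h, abs_of_nonneg (by linarith)]
  congr 1
  ring

lemma g_eq_left {x : ℝ} (h : x ≤ -1) :
    (2 / (|x| + |x + 1| + 1)) ^ ((1:ℝ)/2) = (2 / (-(2*x))) ^ ((1:ℝ)/2) := by
  rw [abs_of_nonpos (by linarith), abs_of_nonpos (by linarith)]
  congr 1
  ring

set_option maxHeartbeats 1000000 in
lemma not_diff_zero :
    ¬ DifferentiableAt ℝ (fun a : ℝ => (2 / (|a| + |a + 1| + 1)) ^ ((1:ℝ)/2)) 0 := by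
  intro hdiff
  have hd := hdiff.hasDerivAt
  have hL : HasDerivWithinAt (fun a : ℝ => (2 / (|a| + |a + 1| + 1)) ^ ((1:ℝ)/2))
      0 (Iio 0) 0 := by
    have hmem : Ioo (-1:ℝ) 0 ∈ 𝓝[<] (0:ℝ) :=
      Ioo_mem_nhdsLT_of_mem (by constructor <;> norm_num)
    refine (hasDerivWithinAt_const (0:ℝ) (Iio (0:ℝ)) (1:ℝ)).congr_of_eventuallyEq ?_ ?_
    · filter_upwards [hmem] with x hx
      exact g_eq_one_on_mid hx.1.le hx.2.le
    · exact g_eq_one_on_mid (by norm_num) le_rfl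
  have hφ : HasDerivAt (fun x : ℝ => (2 / (2*x + 2)) ^ ((1:ℝ)/2)) (-(1/2) : ℝ) 0 := by
    have h1 : HasDerivAt (fun x : ℝ => 2*x + 2) 2 0 := by
      simpa using ((hasDerivAt_id (0:ℝ)).const_mul 2).add_const 2
    have h2 : HasDerivAt (fun x : ℝ => 2 / (2*x + 2)) (-1 : ℝ) 0 := by
      have h := (hasDerivAt_const (0:ℝ) (2:ℝ)).fun_div h1 (by norm_num)
      exact h.congr_deriv (by norm_num)
    have h3 := h2.rpow_const (p := (1:ℝ)/2) (Or.inl (by norm_num))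
    convert h3 using 1
    norm_num [Real.one_rpow]
  have hR : HasDerivWithinAt (fun a : ℝ => (2 / (|a| + |a + 1| + 1)) ^ ((1:ℝ)/2))
      (-(1/2) : ℝ) (Ioi 0) 0 := by
    have hmem : Ioo (0:ℝ) 1 ∈ 𝓝[>] (0:ℝ) :=
      Ioo_mem_nhdsGT_of_mem (by constructor <;> norm_num)
    refine (hφ.hasDerivWithinAt).congr_of_eventuallyEq ?_ ?_
    · filter_upwards [hmem] with x hx
      exact g_eq_right hx.1.le
    · exact g_eq_right le_rfl
  have e1 := hL.derivWithin (uniqueDiffWithinAt_Iio (0:ℝ))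
  have e2 := (hd.hasDerivWithinAt (s := Iio (0:ℝ))).derivWithin (uniqueDiffWithinAt_Iio (0:ℝ))
  have e3 := hR.derivWithin (uniqueDiffWithinAt_Ioi (0:ℝ))
  have e4 := (hd.hasDerivWithinAt (s := Ioi (0:ℝ))).derivWithin (uniqueDiffWithinAt_Ioi (0:ℝ))
  rw [e2] at e1
  rw [e4] at e3
  have : (0:ℝ) = -(1/2) := e1.symm.trans e3
  norm_num at this

set_option maxHeartbeats 1000000 in
lemma not_diff_negone :
    ¬ DifferentiableAt ℝ (fun a : ℝ => (2 / (|a| + |a + 1| + 1)) ^ ((1:ℝ)/2)) (-1) := by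
  intro hdiff
  have hd := hdiff.hasDerivAt
  have hR : HasDerivWithinAt (fun a : ℝ => (2 / (|a| + |a + 1| + 1)) ^ ((1:ℝ)/2))
      0 (Ioi (-1)) (-1) := by
    have hmem : Ioo (-1:ℝ) 0 ∈ 𝓝[>] (-1:ℝ) :=
      Ioo_mem_nhdsGT_of_mem (by constructor <;> norm_num)
    refine (hasDerivWithinAt_const (-1:ℝ) (Ioi (-1:ℝ)) (1:ℝ)).congr_of_eventuallyEq ?_ ?_
    · filter_upwards [hmem] with x hx
      exact g_eq_one_on_mid hx.1.le hx.2.le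
    · exact g_eq_one_on_mid le_rfl (by norm_num)
  have hφ : HasDerivAt (fun x : ℝ => (2 / (-(2*x))) ^ ((1:ℝ)/2)) ((1:ℝ)/2) (-1) := by
    have h1 : HasDerivAt (fun x : ℝ => -(2*x)) (-2) (-1) := by
      simpa using ((hasDerivAt_id (-1:ℝ)).const_mul 2).fun_neg
    have h2 : HasDerivAt (fun x : ℝ => 2 / (-(2*x))) (1 : ℝ) (-1) := by
      have h := (hasDerivAt_const (-1:ℝ) (2:ℝ)).fun_div h1 (by norm_num)
      exact h.congr_deriv (by norm_num)
    have h3 := h2.rpow_const (p := (1:ℝ)/2) (Or.inl (by norm_num))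
    convert h3 using 1
    norm_num [Real.one_rpow]
  have hL : HasDerivWithinAt (fun a : ℝ => (2 / (|a| + |a + 1| + 1)) ^ ((1:ℝ)/2))
      ((1:ℝ)/2) (Iio (-1)) (-1) := by
    have hmem : Ioo (-2:ℝ) (-1) ∈ 𝓝[<] (-1:ℝ) :=
      Ioo_mem_nhdsLT_of_mem (by constructor <;> norm_num)
    refine (hφ.hasDerivWithinAt).congr_of_eventuallyEq ?_ ?_
    · filter_upwards [hmem] with x hx
      exact g_eq_left hx.2.le
    · exact g_eq_left le_rfl
  have e1 := hL.derivWithin (uniqueDiffWithinAt_Iio (-1:ℝ))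
  have e2 := (hd.hasDerivWithinAt (s := Iio (-1:ℝ))).derivWithin (uniqueDiffWithinAt_Iio (-1:ℝ))
  have e3 := hR.derivWithin (uniqueDiffWithinAt_Ioi (-1:ℝ))
  have e4 := (hd.hasDerivWithinAt (s := Ioi (-1:ℝ))).derivWithin (uniqueDiffWithinAt_Ioi (-1:ℝ))
  rw [e2] at e1
  rw [e4] at e3
  have : ((1:ℝ)/2) = 0 := e1.symm.trans e3
  norm_num at this


end BLaux


/-- **Non-differentiability of the Brascamp–Lieb constant.** The function
`g(a) = (2 / (|a| + |a+1| + 1))^(1/2)` is not differentiable at `a = 0` nor at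
`a = −1`; moreover, for the data `L₁(x,y) = x`, `L₂(x,y) = y`, `L₃(x,y) = x − y`,
`L₄(x,y) = x + a·y` with exponents `(1/2, 1/2, 1/2, 1/2)`, the map
`a ↦ BL(L(a), p)` equals `g` and hence is not differentiable at `a = 0`. -/
theorem brascampLieb_not_differentiable :
    (¬ DifferentiableAt ℝ (fun a : ℝ => (2 / (|a| + |a + 1| + 1)) ^ ((1:ℝ)/2)) 0) ∧
    (¬ DifferentiableAt ℝ (fun a : ℝ => (2 / (|a| + |a + 1| + 1)) ^ ((1:ℝ)/2)) (-1)) ∧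
    (∀ a : ℝ,
      (brascampLiebRankOne ![![1, 0], ![0, 1], ![1, -1], ![1, a]]
        (fun _ : Fin 4 => (1:ℝ)/2)).toReal = (2 / (|a| + |a + 1| + 1)) ^ ((1:ℝ)/2)) ∧
    ¬ DifferentiableAt ℝ
      (fun a : ℝ => (brascampLiebRankOne ![![1, 0], ![0, 1], ![1, -1], ![1, a]]
        (fun _ : Fin 4 => (1:ℝ)/2)).toReal) 0 := by
  have h3 : ∀ a : ℝ,
      (brascampLiebRankOne ![![1, 0], ![0, 1], ![1, -1], ![1, a]]
        (fun _ : Fin 4 => (1:ℝ)/2)).toReal = (2 / (|a| + |a + 1| + 1)) ^ ((1:ℝ)/2) := by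
    intro a
    rw [BLaux.BL_eq a, ENNReal.toReal_ofReal (by positivity)]
  refine ⟨BLaux.not_diff_zero, BLaux.not_diff_negone, h3, ?_⟩
  have heq : (fun a : ℝ => (brascampLiebRankOne ![![1, 0], ![0, 1], ![1, -1], ![1, a]]
      (fun _ : Fin 4 => (1:ℝ)/2)).toReal)
      = fun a : ℝ => (2 / (|a| + |a + 1| + 1)) ^ ((1:ℝ)/2) := funext h3
  rw [heq]
  exact BLaux.not_diff_zero
end
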